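/- arXiv:1806.03728 — 8 statements merged into one kernel-verified Lean document; each statement's English description precedes it below -/
import Mathlib

section
/- Let $p>1$, $b>0$, and $f:[b,\infty)\to[0,\infty)$ measurable. Then $\int_b^\infty \left(\frac{1}{x}\int_b^x f(t)\,dt\right)^p dx \le \left(\frac{p}{p-1}\right)^p \int_b^\infty f(x)^p\,dx$. -/
/-
Hölder's inequality against the weight `t ^ (1/(pq))`, `q = p/(p-1)`, bounds `(∫_b^x f)^p` by
`q^(p-1) x^((p-1)/q) ∫_b^x f(t)^p t^(1/q) dt`. After dividing by `x^p` and exchanging the order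
of integration, the inner integral `∫_t^∞ x^(-1-1/q) dx = q t^(-1/q)` cancels the weight,
leaving `q^p ∫_b^∞ f^p`.
-/

open MeasureTheory Set
open scoped ENNReal

theorem setLIntegral_Ioc_ofReal_rpow {c d e : ℝ} (hc : 0 ≤ c) (hcd : c ≤ d) (he : -1 < e) :
    ∫⁻ t in Ioc c d, ENNReal.ofReal (t ^ e)
      = ENNReal.ofReal ((d ^ (e + 1) - c ^ (e + 1)) / (e + 1)) := by
  have hint : IntegrableOn (fun t : ℝ => t ^ e) (Ioc c d) :=
    (intervalIntegrable_iff_integrableOn_Ioc_of_le hcd).mp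
      (intervalIntegral.intervalIntegrable_rpow' he)
  have hnn : 0 ≤ᵐ[volume.restrict (Ioc c d)] fun t : ℝ => t ^ e :=
    (ae_restrict_mem measurableSet_Ioc).mono fun t ht => Real.rpow_nonneg (hc.trans ht.1.le) e
  rw [← ofReal_integral_eq_lintegral_ofReal hint hnn, ← intervalIntegral.integral_of_le hcd,
    integral_rpow (Or.inl he)]

theorem setLIntegral_Ioi_ofReal_rpow {c e : ℝ} (hc : 0 < c) (he : e < -1) :
    ∫⁻ x in Ioi c, ENNReal.ofReal (x ^ e) = ENNReal.ofReal (-c ^ (e + 1) / (e + 1)) := by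
  have hnn : 0 ≤ᵐ[volume.restrict (Ioi c)] fun x : ℝ => x ^ e :=
    (ae_restrict_mem measurableSet_Ioi).mono fun x hx => Real.rpow_nonneg (hc.trans hx).le e
  rw [← ofReal_integral_eq_lintegral_ofReal (integrableOn_Ioi_rpow_of_lt he hc) hnn,
    integral_Ioi_rpow_of_lt he hc]

theorem ofReal_rpow_mul_setLIntegral_Ici_rpow {a t : ℝ} (ha : 0 < a) (ht : 0 < t) :
    ENNReal.ofReal (t ^ a) * ∫⁻ x in Ici t, ENNReal.ofReal (x ^ (-1 - a))
      = ENNReal.ofReal a⁻¹ := by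
  rw [← setLIntegral_congr Ioi_ae_eq_Ici, setLIntegral_Ioi_ofReal_rpow ht (by linarith),
    ← ENNReal.ofReal_mul (Real.rpow_nonneg ht.le a), show -1 - a + 1 = -a by ring,
    Real.rpow_neg ht.le, neg_div_neg_eq, mul_div_assoc', mul_inv_cancel₀ (by positivity), one_div]

theorem rpow_lintegral_le_weighted_Lp_mul_Lq {α : Type*} [MeasurableSpace α] {μ : Measure α}
    {p q : ℝ} (hpq : p.HolderConjugate q) {g w : α → ℝ≥0∞} (hg : AEMeasurable g μ)
    (hw : AEMeasurable w μ) (hw_ne_zero : ∀ᵐ x ∂μ, w x ≠ 0) (hw_ne_top : ∀ᵐ x ∂μ, w x ≠ ∞) :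
    (∫⁻ x, g x ∂μ) ^ p
      ≤ (∫⁻ x, (g x * w x) ^ p ∂μ) * (∫⁻ x, (w x)⁻¹ ^ q ∂μ) ^ (p - 1) := by
  have hg_eq : ∫⁻ x, g x ∂μ = ∫⁻ x, ((g * w) * w⁻¹) x ∂μ := by
    refine lintegral_congr_ae ?_
    filter_upwards [hw_ne_zero, hw_ne_top] with x h0 htop
    simp only [Pi.mul_apply, Pi.inv_apply, mul_assoc, ENNReal.mul_inv_cancel h0 htop, mul_one]
  calc (∫⁻ x, g x ∂μ) ^ p
      ≤ ((∫⁻ x, (g * w) x ^ p ∂μ) ^ (1 / p) * (∫⁻ x, w⁻¹ x ^ q ∂μ) ^ (1 / q)) ^ p := by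
        rw [hg_eq]
        exact ENNReal.rpow_le_rpow
          (ENNReal.lintegral_mul_le_Lp_mul_Lq μ hpq (hg.mul hw) hw.inv) hpq.nonneg
    _ = (∫⁻ x, (g x * w x) ^ p ∂μ) * (∫⁻ x, (w x)⁻¹ ^ q ∂μ) ^ (p - 1) := by
        rw [ENNReal.mul_rpow_of_nonneg _ _ hpq.nonneg, ← ENNReal.rpow_mul, ← ENNReal.rpow_mul,
          one_div_mul_cancel hpq.ne_zero, ENNReal.rpow_one, one_div_mul_eq_div,
          hpq.div_conj_eq_sub_one]
        rfl

theorem setLIntegral_Ioi_mul_setLIntegral_Ioc_swap {μ : Measure ℝ} [SFinite μ] (b : ℝ)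
    {φ ψ : ℝ → ℝ≥0∞} (hφ : Measurable φ) (hψ : Measurable ψ) :
    ∫⁻ x in Ioi b, φ x * ∫⁻ t in Ioc b x, ψ t ∂μ ∂μ
      = ∫⁻ t in Ioi b, ψ t * ∫⁻ x in Ici t, φ x ∂μ ∂μ := by
  set F : ℝ → ℝ → ℝ≥0∞ := fun x t => {z : ℝ × ℝ | z.2 ≤ z.1}.indicator
    (fun z => φ z.1 * ψ z.2) (x, t)
  have hF : Measurable (Function.uncurry F) :=
    ((hφ.comp measurable_fst).mul (hψ.comp measurable_snd)).indicator
      (measurableSet_le measurable_snd measurable_fst)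
  have inner_t : ∀ x, φ x * ∫⁻ t in Ioc b x, ψ t ∂μ = ∫⁻ t in Ioi b, F x t ∂μ := by
    intro x
    have : F x = (Iic x).indicator fun t => φ x * ψ t := by
      ext t; simp [F, Set.indicator_apply]
    rw [this, lintegral_indicator measurableSet_Iic, Measure.restrict_restrict measurableSet_Iic,
      Iic_inter_Ioi, lintegral_const_mul _ hψ]
  have inner_x : ∀ t ∈ Ioi b, ∫⁻ x in Ioi b, F x t ∂μ = ψ t * ∫⁻ x in Ici t, φ x ∂μ := by
    intro t ht
    have : (fun x => F x t) = (Ici t).indicator fun x => φ x * ψ t := by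
      ext x; simp [F, Set.indicator_apply]
    rw [this, lintegral_indicator measurableSet_Ici, Measure.restrict_restrict measurableSet_Ici,
      inter_eq_left.mpr (Ici_subset_Ioi.mpr ht), lintegral_mul_const _ hφ, mul_comm]
  calc ∫⁻ x in Ioi b, φ x * ∫⁻ t in Ioc b x, ψ t ∂μ ∂μ
      = ∫⁻ x in Ioi b, ∫⁻ t in Ioi b, F x t ∂μ ∂μ := by simp_rw [inner_t]
    _ = ∫⁻ t in Ioi b, ∫⁻ x in Ioi b, F x t ∂μ ∂μ := lintegral_lintegral_swap hF.aemeasurable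
    _ = ∫⁻ t in Ioi b, ψ t * ∫⁻ x in Ici t, φ x ∂μ ∂μ :=
        setLIntegral_congr_fun measurableSet_Ioi inner_x

theorem rpow_setLIntegral_Ioc_le {p q b x : ℝ} (hpq : p.HolderConjugate q) (hb : 0 ≤ b)
    (hbx : b ≤ x) {g : ℝ → ℝ≥0∞} (hg : Measurable g) :
    (∫⁻ t in Ioc b x, g t) ^ p
      ≤ (∫⁻ t in Ioc b x, g t ^ p * ENNReal.ofReal (t ^ q⁻¹))
        * ENNReal.ofReal (q * x ^ q⁻¹) ^ (p - 1) := by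
  set s := (p * q)⁻¹ with hs
  have hs_p : s * p = q⁻¹ := by rw [hs]; field_simp [hpq.ne_zero]
  have hs_q : s * q = p⁻¹ := by rw [hs]; field_simp [hpq.symm.ne_zero]
  have hpos : ∀ᵐ t ∂volume.restrict (Ioc b x), 0 < t :=
    (ae_restrict_mem measurableSet_Ioc).mono fun t ht => hb.trans_lt ht.1
  have hw : Measurable fun t : ℝ => ENNReal.ofReal (t ^ s) :=
    (measurable_id.pow_const s).ennreal_ofReal
  have h_weighted : ∫⁻ t in Ioc b x, (g t * ENNReal.ofReal (t ^ s)) ^ p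
      = ∫⁻ t in Ioc b x, g t ^ p * ENNReal.ofReal (t ^ q⁻¹) := by
    refine lintegral_congr_ae (hpos.mono fun t ht => ?_)
    dsimp only
    rw [ENNReal.mul_rpow_of_nonneg _ _ hpq.nonneg, ENNReal.ofReal_rpow_of_pos
      (Real.rpow_pos_of_pos ht s), ← Real.rpow_mul ht.le, hs_p]
  have h_inv : ∫⁻ t in Ioc b x, (ENNReal.ofReal (t ^ s))⁻¹ ^ q
      = ∫⁻ t in Ioc b x, ENNReal.ofReal (t ^ (-p⁻¹)) := by
    refine lintegral_congr_ae (hpos.mono fun t ht => ?_)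
    dsimp only
    rw [← ENNReal.ofReal_inv_of_pos (Real.rpow_pos_of_pos ht s), ← Real.rpow_neg ht.le,
      ENNReal.ofReal_rpow_of_pos (Real.rpow_pos_of_pos ht _), ← Real.rpow_mul ht.le, neg_mul,
      hs_q]
  have h_exp : -p⁻¹ + 1 = q⁻¹ := by linarith [hpq.inv_add_inv_eq_one]
  refine (rpow_lintegral_le_weighted_Lp_mul_Lq hpq hg.aemeasurable hw.aemeasurable
    (hpos.mono fun t ht => by simpa using Real.rpow_pos_of_pos ht s)
    (ae_of_all _ fun _ => ENNReal.ofReal_ne_top)).trans ?_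
  rw [h_weighted, h_inv, setLIntegral_Ioc_ofReal_rpow hb hbx (by linarith [hpq.symm.inv_pos]),
    h_exp, div_inv_eq_mul, mul_comm (x ^ q⁻¹ - b ^ q⁻¹)]
  gcongr
  · exact hpq.sub_one_pos.le
  · exact hpq.symm.pos.le
  · exact sub_le_self _ (Real.rpow_nonneg hb _)

theorem div_rpow_setLIntegral_Ioc_le {p q b x : ℝ} (hpq : p.HolderConjugate q) (hb : 0 ≤ b)
    (hbx : b < x) {g : ℝ → ℝ≥0∞} (hg : Measurable g) :
    ((∫⁻ t in Ioc b x, g t) / ENNReal.ofReal x) ^ p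
      ≤ ENNReal.ofReal (q ^ (p - 1))
        * (ENNReal.ofReal (x ^ (-1 - q⁻¹))
          * ∫⁻ t in Ioc b x, g t ^ p * ENNReal.ofReal (t ^ q⁻¹)) := by
  have hx : 0 < x := hb.trans_lt hbx
  have hq : 0 < q := hpq.symm.pos
  have h_exp : q⁻¹ * (p - 1) + -p = -1 - q⁻¹ := by
    linear_combination (div_eq_mul_inv p q).symm.trans hpq.div_conj_eq_sub_one
  have h_real : (q * x ^ q⁻¹) ^ (p - 1) * x ^ (-p) = q ^ (p - 1) * x ^ (-1 - q⁻¹) := by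
    rw [Real.mul_rpow hq.le (Real.rpow_nonneg hx.le _), ← Real.rpow_mul hx.le,
      mul_assoc, ← Real.rpow_add hx, h_exp]
  calc ((∫⁻ t in Ioc b x, g t) / ENNReal.ofReal x) ^ p
      = (∫⁻ t in Ioc b x, g t) ^ p * ENNReal.ofReal (x ^ (-p)) := by
        rw [ENNReal.div_rpow_of_nonneg _ _ hpq.nonneg, ENNReal.ofReal_rpow_of_pos hx,
          div_eq_mul_inv, ← ENNReal.ofReal_inv_of_pos (Real.rpow_pos_of_pos hx p),
          Real.rpow_neg hx.le]
    _ ≤ (∫⁻ t in Ioc b x, g t ^ p * ENNReal.ofReal (t ^ q⁻¹))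
          * ENNReal.ofReal (q * x ^ q⁻¹) ^ (p - 1) * ENNReal.ofReal (x ^ (-p)) := by
        gcongr
        exact rpow_setLIntegral_Ioc_le hpq hb hbx.le hg
    _ = ENNReal.ofReal (q ^ (p - 1)) * (ENNReal.ofReal (x ^ (-1 - q⁻¹))
          * ∫⁻ t in Ioc b x, g t ^ p * ENNReal.ofReal (t ^ q⁻¹)) := by
        rw [ENNReal.ofReal_rpow_of_nonneg (by positivity) hpq.sub_one_pos.le, mul_assoc,
          ← ENNReal.ofReal_mul (by positivity), h_real,
          ENNReal.ofReal_mul (by positivity)]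
        ring

theorem hardy_classical_general (p b : ℝ) (hp : 1 < p) (hb : 0 < b)
    (f : ℝ → ℝ) (hf : Measurable f) :
    ∫⁻ x in Ioi b, ((∫⁻ t in Ioc b x, ENNReal.ofReal (f t)) / ENNReal.ofReal x) ^ p
      ≤ ENNReal.ofReal ((p / (p - 1)) ^ p) *
        ∫⁻ x in Ioi b, (ENNReal.ofReal (f x)) ^ p := by
  have hpq : p.HolderConjugate (p / (p - 1)) := .conjExponent hp
  set q := p / (p - 1)
  set g : ℝ → ℝ≥0∞ := fun t => ENNReal.ofReal (f t)
  have hg : Measurable g := hf.ennreal_ofReal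
  calc ∫⁻ x in Ioi b, ((∫⁻ t in Ioc b x, g t) / ENNReal.ofReal x) ^ p
      ≤ ∫⁻ x in Ioi b, ENNReal.ofReal (q ^ (p - 1)) * (ENNReal.ofReal (x ^ (-1 - q⁻¹))
          * ∫⁻ t in Ioc b x, g t ^ p * ENNReal.ofReal (t ^ q⁻¹)) :=
        setLIntegral_mono' measurableSet_Ioi fun x hx =>
          div_rpow_setLIntegral_Ioc_le hpq hb.le hx hg
    _ = ENNReal.ofReal (q ^ (p - 1)) * ∫⁻ t in Ioi b, g t ^ p
          * (ENNReal.ofReal (t ^ q⁻¹) * ∫⁻ x in Ici t, ENNReal.ofReal (x ^ (-1 - q⁻¹))) := by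
        rw [lintegral_const_mul' _ _ ENNReal.ofReal_ne_top,
          setLIntegral_Ioi_mul_setLIntegral_Ioc_swap b
            (φ := fun x => ENNReal.ofReal (x ^ (-1 - q⁻¹)))
            (ψ := fun t => g t ^ p * ENNReal.ofReal (t ^ q⁻¹)) (by fun_prop) (by fun_prop)]
        simp_rw [mul_assoc]
    _ = ENNReal.ofReal (q ^ p) * ∫⁻ t in Ioi b, g t ^ p := by
        rw [setLIntegral_congr_fun measurableSet_Ioi fun t ht => by
            rw [ofReal_rpow_mul_setLIntegral_Ici_rpow (inv_pos.2 hpq.symm.pos) (hb.trans ht),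
              inv_inv],
          lintegral_mul_const' _ _ ENNReal.ofReal_ne_top, mul_comm _ (ENNReal.ofReal q),
          ← mul_assoc, ← ENNReal.ofReal_mul (by positivity),
          ← Real.rpow_add_one hpq.symm.ne_zero, sub_add_cancel]

theorem hardy_classical (p b : ℝ) (hp : 1 < p) (hb : 0 < b)
    (f : ℝ → ℝ) (hf : Measurable f) (hfnn : ∀ x, 0 ≤ f x) :
    ∫⁻ x in Ioi b, ((∫⁻ t in Ioc b x, ENNReal.ofReal (f t)) / ENNReal.ofReal x) ^ p
      ≤ ENNReal.ofReal ((p / (p - 1)) ^ p) *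
        ∫⁻ x in Ioi b, (ENNReal.ofReal (f x)) ^ p :=
  hardy_classical_general p b hp hb f hf
end

section
/- Let $1<p\le q<\infty$, and let $u,v:(0,\infty)\to(0,\infty)$ be measurable with $u\in L^1((r,\infty))$ for all $r>0$ and $v^{1-p'}\in L^1_{loc}$, where $p'=p/(p-1)$. Define $U(r)=\int_r^\infty u$ and $V(r)=\int_0^r v^{1-p'}$. If $\sup_{r>0} U(r)^{1/q}V(r)^{1/p'} =: D_1 <\infty$, then for all nonnegative measurable $f$, $\left(\int_0^\infty \left(\int_0^x f(t)\,dt\right)^q u(x)\,dx\right)^{1/q} \le D_1 (p')^{1/p'} p^{1/q} \left(\int_0^\infty f(x)^p v(x)\,dx\right)^{1/p}$. -/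
/-!
Write `V x = ∫₀ˣ v^{1-p'}` and `U x = ∫ₓ^∞ u`. Hölder's inequality with the weight `V^{1/(pp')}`
gives `(∫₀ˣ f)^q ≤ p'^{q/p'} V(x)^{q/p'²} (∫₀ˣ f^p v V^{1/p'})^{q/p}`, using
`∫₀ˣ v^{1-p'} V^{-1/p} ≤ p' V(x)^{1/p'}`. After integrating against `u`, Minkowski's integral
inequality with exponent `q/p ≥ 1` leaves the tail `∫ₜ^∞ u V^{q/p'²} ≤ D^{q/p'} ∫ₜ^∞ u U^{-1/p'}
≤ D^{q/p'} p U(t)^{1/p}`, and `U(t)^{1/q} ≤ D V(t)^{-1/p'}` turns the result into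
`D^p p^{p/q} ∫ f^p v`. Both estimates of the form `∫ w W^{-a} ≤ W^{1-a}/(1-a)`, for a primitive `W`
of `w`, follow from a layer-cake formula, since the `w`-mass of `{W ≤ r}` is at most `r`.
-/

open MeasureTheory Set Filter Topology
open scoped ENNReal

theorem lintegral_Ioi_rpow_of_lt {s c : ℝ} (hs : s < -1) (hc : 0 < c) :
    ∫⁻ r in Ioi c, ENNReal.ofReal (r ^ s) = ENNReal.ofReal (c ^ (s + 1) / -(s + 1)) := by
  rw [← ofReal_integral_eq_lintegral_ofReal (integrableOn_Ioi_rpow_of_lt hs hc)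
    (ae_restrict_of_forall_mem measurableSet_Ioi fun r hr => Real.rpow_nonneg (hc.trans hr).le s),
    integral_Ioi_rpow_of_lt hs hc, div_neg, neg_div]

theorem lintegral_Ioc_rpow_of_lt {s c : ℝ} (hs : -1 < s) (hc : 0 < c) :
    ∫⁻ r in Ioc 0 c, ENNReal.ofReal (r ^ s) = ENNReal.ofReal (c ^ (s + 1) / (s + 1)) := by
  have hint : IntegrableOn (fun r : ℝ => r ^ s) (Ioc 0 c) :=
    (intervalIntegrable_iff_integrableOn_Ioc_of_le hc.le).1
      (intervalIntegral.intervalIntegrable_rpow' hs)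
  rw [← ofReal_integral_eq_lintegral_ofReal hint
    (ae_restrict_of_forall_mem measurableSet_Ioc fun r hr => Real.rpow_nonneg hr.1.le s),
    ← intervalIntegral.integral_of_le hc.le, integral_rpow (Or.inl hs),
    Real.zero_rpow (by linarith), sub_zero]

theorem ENNReal.rpow_neg_eq_setLIntegral {b : ℝ≥0∞} (hb : b ≠ 0) {a : ℝ} (ha : 0 < a) :
    b ^ (-a) = ∫⁻ r in Ioi 0,
      {r : ℝ | b ≤ ENNReal.ofReal r}.indicator (fun r => ENNReal.ofReal (a * r ^ (-a - 1))) r := by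
  have hmeas : MeasurableSet {r : ℝ | b ≤ ENNReal.ofReal r} :=
    measurableSet_le measurable_const ENNReal.measurable_ofReal
  rw [lintegral_indicator hmeas, Measure.restrict_restrict hmeas]
  rcases eq_or_ne b ⊤ with rfl | hbt
  · simp [ENNReal.top_rpow_of_neg (neg_neg_of_pos ha)]
  have hc : 0 < b.toReal := ENNReal.toReal_pos hb hbt
  have hset : {r : ℝ | b ≤ ENNReal.ofReal r} ∩ Ioi 0 = Ici b.toReal := by
    ext r
    simp only [mem_inter_iff, mem_ofPred_eq, mem_Ici, mem_Ioi]
    refine ⟨fun h => (ENNReal.le_ofReal_iff_toReal_le hbt h.2.le).1 h.1, fun h => ?_⟩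
    have hr : 0 < r := hc.trans_le h
    exact ⟨(ENNReal.le_ofReal_iff_toReal_le hbt hr.le).2 h, hr⟩
  have hmul : ∀ r ∈ Ioi b.toReal,
      ENNReal.ofReal (a * r ^ (-a - 1)) = ENNReal.ofReal a * ENNReal.ofReal (r ^ (-a - 1)) :=
    fun r _ => ENNReal.ofReal_mul ha.le
  rw [hset, ← restrict_Ioi_eq_restrict_Ici, setLIntegral_congr_fun measurableSet_Ioi hmul,
    lintegral_const_mul _ (by fun_prop), lintegral_Ioi_rpow_of_lt (by linarith) hc,
    ← ENNReal.ofReal_mul ha.le, ← ENNReal.ofReal_toReal hbt, ENNReal.ofReal_rpow_of_pos hc,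
    ENNReal.toReal_ofReal hc.le]
  congr 1
  rw [show -a - 1 + 1 = -a by ring, neg_neg]
  field_simp

theorem lintegral_rpow_neg_eq_lintegral_meas_le_mul {X : Type*} [MeasurableSpace X]
    {μ : Measure X} [SFinite μ] {G : X → ℝ≥0∞} (hG : Measurable G) (hG0 : μ {y | G y = 0} = 0)
    {a : ℝ} (ha : 0 < a) :
    ∫⁻ y, G y ^ (-a) ∂μ =
      ∫⁻ r in Ioi 0, ENNReal.ofReal (a * r ^ (-a - 1)) * μ {y | G y ≤ ENNReal.ofReal r} := by
  have hrepr : ∀ᵐ y ∂μ, G y ^ (-a) = ∫⁻ r in Ioi 0, {r : ℝ | G y ≤ ENNReal.ofReal r}.indicator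
      (fun r => ENNReal.ofReal (a * r ^ (-a - 1))) r := by
    filter_upwards [measure_eq_zero_iff_ae_notMem.1 hG0] with y hy
    exact ENNReal.rpow_neg_eq_setLIntegral hy ha
  have hmeas : MeasurableSet {p : X × ℝ | G p.1 ≤ ENNReal.ofReal p.2} :=
    measurableSet_le (hG.comp measurable_fst) (ENNReal.measurable_ofReal.comp measurable_snd)
  have hF : Measurable (Function.uncurry fun y (r : ℝ) =>
      {r : ℝ | G y ≤ ENNReal.ofReal r}.indicator (fun r => ENNReal.ofReal (a * r ^ (-a - 1))) r) :=
    (by fun_prop : Measurable fun p : X × ℝ => ENNReal.ofReal (a * p.2 ^ (-a - 1))).indicator hmeas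
  rw [lintegral_congr_ae hrepr, lintegral_lintegral_swap hF.aemeasurable]
  refine setLIntegral_congr_fun measurableSet_Ioi fun r _ => ?_
  rw [← lintegral_indicator_const (measurableSet_le hG measurable_const)]
  rfl

theorem setLIntegral_Ioi_rpow_mul_min {c a : ℝ} (hc : 0 < c) (ha0 : 0 < a) (ha1 : a < 1) :
    ∫⁻ r in Ioi 0, ENNReal.ofReal (a * r ^ (-a - 1)) * min (ENNReal.ofReal r) (ENNReal.ofReal c)
      = ENNReal.ofReal (c ^ (1 - a) / (1 - a)) := by
  have h1a : 0 < 1 - a := by linarith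
  have hlow : ∀ r ∈ Ioc 0 c, ENNReal.ofReal (a * r ^ (-a - 1)) * min (ENNReal.ofReal r)
      (ENNReal.ofReal c) = ENNReal.ofReal a * ENNReal.ofReal (r ^ (-a)) := fun r hr => by
    have hr0 : 0 < r := hr.1
    rw [min_eq_left (ENNReal.ofReal_le_ofReal hr.2), ← ENNReal.ofReal_mul (by positivity),
      ← ENNReal.ofReal_mul ha0.le, Real.rpow_sub_one hr0.ne']
    field_simp
  have hhigh : ∀ r ∈ Ioi c, ENNReal.ofReal (a * r ^ (-a - 1)) * min (ENNReal.ofReal r)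
      (ENNReal.ofReal c) = ENNReal.ofReal (a * c) * ENNReal.ofReal (r ^ (-a - 1)) := fun r hr => by
    have hr0 : 0 < r := hc.trans hr
    rw [min_eq_right (ENNReal.ofReal_le_ofReal (le_of_lt hr)), ← ENNReal.ofReal_mul (by positivity),
      ← ENNReal.ofReal_mul (by positivity)]
    ring_nf
  rw [← Ioc_union_Ioi_eq_Ioi hc.le, lintegral_union measurableSet_Ioi (Ioc_disjoint_Ioi le_rfl),
    setLIntegral_congr_fun measurableSet_Ioc hlow, setLIntegral_congr_fun measurableSet_Ioi hhigh,
    lintegral_const_mul _ (by fun_prop), lintegral_const_mul _ (by fun_prop),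
    lintegral_Ioc_rpow_of_lt (by linarith) hc, lintegral_Ioi_rpow_of_lt (by linarith) hc,
    show -a - 1 + 1 = -a by ring, neg_neg, show -a + 1 = 1 - a by ring,
    ← ENNReal.ofReal_mul ha0.le, ← ENNReal.ofReal_mul (by positivity),
    ← ENNReal.ofReal_add (by positivity) (by positivity)]
  congr 1
  rw [Real.rpow_sub hc, Real.rpow_one, Real.rpow_neg hc.le]
  field_simp
  ring

theorem lintegral_rpow_neg_le_of_measure_le {X : Type*} [MeasurableSpace X] {μ : Measure X}
    [SFinite μ] {G : X → ℝ≥0∞} (hG : Measurable G) {M : ℝ≥0∞} {a : ℝ} (ha0 : 0 < a) (ha1 : a < 1)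
    (hle : ∀ r : ℝ, 0 < r → μ {y | G y ≤ ENNReal.ofReal r} ≤ min (ENNReal.ofReal r) M) :
    ∫⁻ y, G y ^ (-a) ∂μ ≤ M ^ (1 - a) * ENNReal.ofReal (1 / (1 - a)) := by
  have h1a : 0 < 1 - a := by linarith
  rcases eq_or_ne M ⊤ with rfl | hM
  · rw [ENNReal.top_rpow_of_pos h1a, ENNReal.top_mul (by simpa using h1a)]
    exact le_top
  have hG0 : μ {y | G y = 0} = 0 := by
    refine le_antisymm (ENNReal.le_of_forall_pos_le_add fun ε hε _ => ?_) zero_le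
    calc μ {y | G y = 0} ≤ μ {y | G y ≤ ENNReal.ofReal ε} :=
          measure_mono fun y (hy : G y = 0) => by simp [mem_ofPred_eq, hy]
      _ ≤ ENNReal.ofReal ε := (hle ε hε).trans (min_le_left _ _)
      _ = 0 + ε := by simp
  obtain ⟨c, hc, rfl⟩ : ∃ c : ℝ, 0 ≤ c ∧ ENNReal.ofReal c = M :=
    ⟨M.toReal, ENNReal.toReal_nonneg, ENNReal.ofReal_toReal hM⟩
  calc ∫⁻ y, G y ^ (-a) ∂μ
      = ∫⁻ r in Ioi 0, ENNReal.ofReal (a * r ^ (-a - 1)) * μ {y | G y ≤ ENNReal.ofReal r} :=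
        lintegral_rpow_neg_eq_lintegral_meas_le_mul hG hG0 ha0
    _ ≤ ∫⁻ r in Ioi 0, ENNReal.ofReal (a * r ^ (-a - 1)) *
          min (ENNReal.ofReal r) (ENNReal.ofReal c) :=
        setLIntegral_mono' measurableSet_Ioi fun r hr => by gcongr; exact hle r hr
    _ ≤ ENNReal.ofReal c ^ (1 - a) * ENNReal.ofReal (1 / (1 - a)) := by
        rcases hc.eq_or_lt with rfl | hc
        · simp
        rw [setLIntegral_Ioi_rpow_mul_min hc ha0 ha1, ENNReal.ofReal_rpow_of_pos hc,
          ← ENNReal.ofReal_mul (by positivity), mul_one_div]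

section LinearOrder

variable {α : Type*} [LinearOrder α] [TopologicalSpace α] [OrderTopology α] [MeasurableSpace α]

theorem measure_setOf_measure_Iic_le [DenselyOrdered α] [TopologicalSpace.SeparableSpace α]
    (ν : Measure α) (r : ℝ≥0∞) : ν {t | ν (Iic t) ≤ r} ≤ r := by
  set A := {t | ν (Iic t) ≤ r}
  have hA : IsLowerSet A := fun _ _ hba ha => (measure_mono (Iic_subset_Iic.2 hba)).trans ha
  by_cases hmax : ∃ c ∈ A, ∀ a ∈ A, a ≤ c
  · obtain ⟨c, hc, hcmax⟩ := hmax
    exact (measure_mono fun a ha => hcmax a ha).trans hc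
  push Not at hmax
  obtain ⟨s, hsc, hsd⟩ := TopologicalSpace.exists_countable_dense α
  have hcover : A ⊆ ⋃ x ∈ s ∩ A, Iic x := fun a ha => by
    obtain ⟨b, hb, hab⟩ := hmax a ha
    obtain ⟨x, hxs, hax, hxb⟩ := hsd.exists_between hab
    exact mem_biUnion ⟨hxs, hA hxb.le hb⟩ (mem_Iic.2 hax.le)
  have hdir : DirectedOn (fun x y => Iic x ⊆ Iic y) (s ∩ A) := fun x hx y hy => by
    rcases le_total x y with h | h
    · exact ⟨y, hy, Iic_subset_Iic.2 h, subset_rfl⟩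
    · exact ⟨x, hx, subset_rfl, Iic_subset_Iic.2 h⟩
  calc ν A ≤ ν (⋃ x ∈ s ∩ A, Iic x) := measure_mono hcover
    _ = ⨆ x ∈ s ∩ A, ν (Iic x) := measure_biUnion_eq_iSup (hsc.mono inter_subset_left) hdir
    _ ≤ r := iSup₂_le fun _ hx => hx.2

variable [DenselyOrdered α] [TopologicalSpace.SeparableSpace α] [BorelSpace α]

theorem lintegral_measure_Iic_rpow_neg_le (ν : Measure α) [SFinite ν] {a : ℝ} (ha0 : 0 < a)
    (ha1 : a < 1) :
    ∫⁻ t, ν (Iic t) ^ (-a) ∂ν ≤ ν univ ^ (1 - a) * ENNReal.ofReal (1 / (1 - a)) := by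
  have hmono : Monotone fun t => ν (Iic t) := fun _ _ h => measure_mono (Iic_subset_Iic.2 h)
  exact lintegral_rpow_neg_le_of_measure_le hmono.measurable ha0 ha1
    fun r _ => le_min (measure_setOf_measure_Iic_le ν _) (measure_mono (subset_univ _))

theorem lintegral_mul_setLIntegral_Iic_rpow_neg_le {μ : Measure α} [SFinite μ] {w : α → ℝ≥0∞}
    (hw : Measurable w) {a : ℝ} (ha0 : 0 < a) (ha1 : a < 1) :
    ∫⁻ t, w t * (∫⁻ s in Iic t, w s ∂μ) ^ (-a) ∂μ
      ≤ (∫⁻ s, w s ∂μ) ^ (1 - a) * ENNReal.ofReal (1 / (1 - a)) := by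
  have hIic : ∀ t, μ.withDensity w (Iic t) = ∫⁻ s in Iic t, w s ∂μ :=
    fun t => withDensity_apply _ measurableSet_Iic
  have hmono : Monotone fun t => ∫⁻ s in Iic t, w s ∂μ :=
    fun _ _ h => lintegral_mono_set (Iic_subset_Iic.2 h)
  have := lintegral_measure_Iic_rpow_neg_le (μ.withDensity w) ha0 ha1
  simp only [hIic] at this
  rwa [withDensity_apply _ MeasurableSet.univ, Measure.restrict_univ,
    lintegral_withDensity_eq_lintegral_mul _ hw (hmono.measurable.pow_const _)] at this

theorem lintegral_mul_setLIntegral_Ici_rpow_neg_le {μ : Measure α} [SFinite μ] {w : α → ℝ≥0∞}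
    (hw : Measurable w) {a : ℝ} (ha0 : 0 < a) (ha1 : a < 1) :
    ∫⁻ t, w t * (∫⁻ s in Ici t, w s ∂μ) ^ (-a) ∂μ
      ≤ (∫⁻ s, w s ∂μ) ^ (1 - a) * ENNReal.ofReal (1 / (1 - a)) :=
  have : SFinite (α := αᵒᵈ) μ := ‹SFinite μ›
  lintegral_mul_setLIntegral_Iic_rpow_neg_le (α := αᵒᵈ) hw ha0 ha1

end LinearOrder

theorem ENNReal.rpow_le_of_le_rpow_one_sub_mul {I R : ℝ≥0∞} {s : ℝ} (hs0 : 0 < s) (hs1 : s ≤ 1)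
    (hI : I ≠ ⊤) (h : I ≤ I ^ (1 - s) * R) : I ^ s ≤ R := by
  rcases eq_or_ne I 0 with rfl | hI0
  · simp [ENNReal.zero_rpow_of_pos hs0]
  have h' : I ^ (1 - s) * I ^ s ≤ I ^ (1 - s) * R := by
    rwa [← ENNReal.rpow_add _ _ hI0 hI, sub_add_cancel, ENNReal.rpow_one]
  exact (ENNReal.mul_le_mul_iff_right (by simp [hI0, hI])
    (ENNReal.rpow_ne_top_of_nonneg (by linarith) hI)).1 h'

section Minkowski

variable {X Y : Type*} [MeasurableSpace X] [MeasurableSpace Y] {μ : Measure X} {ν : Measure Y}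
  {r : ℝ} {g : Y → X → ℝ≥0∞}

-- Hölder gives `I ≤ I ^ (1 - 1/r) * R` for `I = ∫ ψ ^ r`; finiteness of `I` allows dividing.
theorem lintegral_rpow_le_of_le_lintegral [SFinite μ] [SFinite ν] (hr : 1 ≤ r)
    (hg : Measurable (Function.uncurry g)) {ψ : X → ℝ≥0∞} (hψ : Measurable ψ)
    (hψg : ∀ x, ψ x ≤ ∫⁻ t, g t x ∂ν) (hfin : ∫⁻ x, ψ x ^ r ∂μ ≠ ⊤) :
    ∫⁻ x, ψ x ^ r ∂μ ≤ (∫⁻ t, (∫⁻ x, g t x ^ r ∂μ) ^ (1 / r) ∂ν) ^ r := by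
  have hr0 : 0 < r := by linarith
  set I := ∫⁻ x, ψ x ^ r ∂μ
  have hholder : ∀ t, ∫⁻ x, ψ x ^ (r - 1) * g t x ∂μ
      ≤ I ^ (1 - 1 / r) * (∫⁻ x, g t x ^ r ∂μ) ^ (1 / r) := fun t => by
    have hfac : ∀ x, ψ x ^ (r - 1) * g t x = (ψ x ^ r) ^ (1 - 1 / r) * (g t x ^ r) ^ (1 / r) :=
      fun x => by
        rw [← ENNReal.rpow_mul, ← ENNReal.rpow_mul, mul_one_div_cancel hr0.ne', ENNReal.rpow_one,
          mul_sub, mul_one, mul_one_div_cancel hr0.ne']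
    simp only [hfac]
    exact ENNReal.lintegral_mul_norm_pow_le (hψ.pow_const r).aemeasurable
      ((hg.comp measurable_prodMk_left).pow_const r).aemeasurable
      (sub_nonneg.2 ((div_le_one hr0).2 hr)) (by positivity) (sub_add_cancel _ _)
  have key : I ≤ I ^ (1 - 1 / r) * ∫⁻ t, (∫⁻ x, g t x ^ r ∂μ) ^ (1 / r) ∂ν :=
    calc I = ∫⁻ x, ψ x ^ (r - 1) * ψ x ∂μ := lintegral_congr fun x => by
          simpa using ENNReal.rpow_add_of_nonneg (x := ψ x) (r - 1) 1 (by linarith) zero_le_one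
      _ ≤ ∫⁻ x, ψ x ^ (r - 1) * ∫⁻ t, g t x ∂ν ∂μ := lintegral_mono fun x => by gcongr; exact hψg x
      _ = ∫⁻ x, ∫⁻ t, ψ x ^ (r - 1) * g t x ∂ν ∂μ := lintegral_congr fun x =>
          (lintegral_const_mul _ (hg.comp measurable_prodMk_right)).symm
      _ = ∫⁻ t, ∫⁻ x, ψ x ^ (r - 1) * g t x ∂μ ∂ν := lintegral_lintegral_swap
          (((hψ.comp measurable_fst).pow_const _).mul (hg.comp measurable_swap)).aemeasurable
      _ ≤ ∫⁻ t, I ^ (1 - 1 / r) * (∫⁻ x, g t x ^ r ∂μ) ^ (1 / r) ∂ν := lintegral_mono hholder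
      _ = I ^ (1 - 1 / r) * ∫⁻ t, (∫⁻ x, g t x ^ r ∂μ) ^ (1 / r) ∂ν :=
          lintegral_const_mul' _ _ (ENNReal.rpow_ne_top_of_nonneg (by
            have := (div_le_one hr0).2 hr; linarith) hfin)
  calc I = (I ^ (1 / r)) ^ r := by
        rw [← ENNReal.rpow_mul, one_div_mul_cancel hr0.ne', ENNReal.rpow_one]
    _ ≤ _ := by
      gcongr
      exact ENNReal.rpow_le_of_le_rpow_one_sub_mul (by positivity) ((div_le_one hr0).2 hr) hfin key

theorem lintegral_lintegral_rpow_le [SigmaFinite μ] [SFinite ν] (hr : 1 ≤ r)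
    (hg : Measurable (Function.uncurry g)) :
    ∫⁻ x, (∫⁻ t, g t x ∂ν) ^ r ∂μ ≤ (∫⁻ t, (∫⁻ x, g t x ^ r ∂μ) ^ (1 / r) ∂ν) ^ r := by
  have hr0 : 0 < r := by linarith
  set Φ := fun x => ∫⁻ t, g t x ∂ν
  have hΦ : Measurable Φ := hg.lintegral_prod_left
  -- truncations of `Φ` with finite `r`-th moment, increasing to `Φ`
  set ψ : ℕ → X → ℝ≥0∞ := fun n => (spanningSets μ n).indicator fun x => min (Φ x) n
  have hψ : ∀ n, Measurable (ψ n) :=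
    fun n => (hΦ.min measurable_const).indicator (measurableSet_spanningSets μ n)
  have hψΦ : ∀ n x, ψ n x ≤ Φ x := fun n => indicator_le fun x _ => min_le_left _ _
  have hfin : ∀ n, ∫⁻ x, ψ n x ^ r ∂μ ≠ ⊤ := fun n => by
    refine ne_top_of_le_ne_top ?_ (lintegral_mono (g := (spanningSets μ n).indicator
      fun _ => (n : ℝ≥0∞) ^ r) fun x => ?_)
    · rw [lintegral_indicator_const (measurableSet_spanningSets μ n)]
      exact ENNReal.mul_ne_top (by simp [hr0.le]) (measure_spanningSets_lt_top μ n).ne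
    · by_cases hx : x ∈ spanningSets μ n
      · simp only [ψ, indicator_of_mem hx]
        gcongr
        exact min_le_right _ _
      · simp [ψ, indicator_of_notMem hx, hr0]
  have hmono : ∀ x, Monotone fun n => ψ n x ^ r := fun x m n hmn => by
    show ψ m x ^ r ≤ ψ n x ^ r
    gcongr
    calc ψ m x ≤ (spanningSets μ m).indicator (fun x => min (Φ x) n) x :=
          indicator_le_indicator (min_le_min_left _ (Nat.cast_le.2 hmn))
      _ ≤ ψ n x :=
          indicator_le_indicator_of_subset (monotone_spanningSets μ hmn) (fun _ => zero_le) x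
  have htend : ∀ x, Tendsto (fun n => ψ n x ^ r) atTop (𝓝 (Φ x ^ r)) := fun x => by
    have hev : (fun n : ℕ => min (Φ x) n) =ᶠ[atTop] fun n => ψ n x :=
      eventually_atTop.2 ⟨spanningSetsIndex μ x, fun n hn =>
        (indicator_of_mem (mem_spanningSets_of_index_le μ x hn) fun x => min (Φ x) n).symm⟩
    have hmin : Tendsto (fun n : ℕ => min (Φ x) n) atTop (𝓝 (Φ x)) := by
      simpa using tendsto_const_nhds.min ENNReal.tendsto_nat_nhds_top
    exact (ENNReal.continuous_rpow_const.tendsto _).comp (hmin.congr' hev)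
  exact le_of_tendsto' (lintegral_tendsto_of_tendsto_of_monotone
    (fun n => ((hψ n).pow_const r).aemeasurable) (ae_of_all _ hmono) (ae_of_all _ htend))
    fun n => lintegral_rpow_le_of_le_lintegral hr hg (hψ n) (hψΦ n) (hfin n)

end Minkowski

-- The paper's `V` and `U` are `hardyOp (v ^ (1 - p'))` and `hardyOpDual u`.
noncomputable def hardyOp (w : ℝ → ℝ≥0∞) (x : ℝ) : ℝ≥0∞ := ∫⁻ t in Ioc 0 x, w t

noncomputable def hardyOpDual (w : ℝ → ℝ≥0∞) (x : ℝ) : ℝ≥0∞ := ∫⁻ t in Ioi x, w t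

namespace hardyOp

variable {w : ℝ → ℝ≥0∞}

theorem monotone : Monotone (hardyOp w) := fun _ _ h => lintegral_mono_set (Ioc_subset_Ioc_right h)

theorem measurable : Measurable (hardyOp w) := monotone.measurable

theorem ne_zero (hw : Measurable w) {x : ℝ} (hx : 0 < x) (hw0 : ∀ t ∈ Ioc 0 x, w t ≠ 0) :
    hardyOp w x ≠ 0 := by
  refine ((setLIntegral_pos_iff hw).2 ?_).ne'
  have hsupp : Ioc 0 x ⊆ Function.support w := hw0
  rw [inter_eq_right.2 hsupp, Real.volume_Ioc, sub_zero]
  exact ENNReal.ofReal_pos.2 hx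

theorem setLIntegral_mul_rpow_neg_le (hw : Measurable w) {a : ℝ} (ha0 : 0 < a) (ha1 : a < 1)
    (x : ℝ) : ∫⁻ t in Ioc 0 x, w t * hardyOp w t ^ (-a)
      ≤ hardyOp w x ^ (1 - a) * ENNReal.ofReal (1 / (1 - a)) := by
  have key := lintegral_mul_setLIntegral_Iic_rpow_neg_le (μ := volume.restrict (Ioc 0 x)) hw ha0 ha1
  refine le_of_eq_of_le (setLIntegral_congr_fun measurableSet_Ioc fun t ht => ?_) key
  rw [Measure.restrict_restrict measurableSet_Iic, Iic_inter_Ioc_of_le ht.2]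
  rfl

theorem lintegral_rpow_le {μ : Measure ℝ} [SigmaFinite μ] {r : ℝ} (hr : 1 ≤ r)
    (hw : Measurable w) :
    ∫⁻ x, hardyOp w x ^ r ∂μ ≤ (∫⁻ t in Ioi 0, w t * μ (Ici t) ^ (1 / r)) ^ r := by
  have hr0 : 0 < r := by linarith
  set g : ℝ → ℝ → ℝ≥0∞ := fun t x => if t ≤ x then w t else 0
  have hg : Measurable (Function.uncurry g) :=
    Measurable.ite (measurableSet_le measurable_fst measurable_snd) (hw.comp measurable_fst)
      measurable_const
  have hinner : ∀ x, ∫⁻ t in Ioi 0, g t x = hardyOp w x := fun x => by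
    rw [show (fun t => g t x) = (Iic x).indicator w from rfl, lintegral_indicator measurableSet_Iic,
      Measure.restrict_restrict measurableSet_Iic, inter_comm, Ioi_inter_Iic]
    rfl
  have houter : ∀ t, (∫⁻ x, g t x ^ r ∂μ) ^ (1 / r) = w t * μ (Ici t) ^ (1 / r) := fun t => by
    have hind : (fun x => g t x ^ r) = (Ici t).indicator fun _ => w t ^ r := funext fun x => by
      by_cases htx : t ≤ x
      · simp [g, htx]
      · simp [g, htx, hr0]
    rw [hind, lintegral_indicator_const measurableSet_Ici,
      ENNReal.mul_rpow_of_nonneg _ _ (by positivity), ← ENNReal.rpow_mul,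
      mul_one_div_cancel hr0.ne', ENNReal.rpow_one]
  simpa only [hinner, houter] using lintegral_lintegral_rpow_le (μ := μ)
    (ν := volume.restrict (Ioi 0)) hr hg

end hardyOp

namespace hardyOpDual

variable {w : ℝ → ℝ≥0∞}

theorem antitone : Antitone (hardyOpDual w) := fun _ _ h => lintegral_mono_set (Ioi_subset_Ioi h)

theorem measurable : Measurable (hardyOpDual w) := antitone.measurable

theorem ne_zero (hw : Measurable w) {x : ℝ} (hw0 : ∀ t ∈ Ioi x, w t ≠ 0) :
    hardyOpDual w x ≠ 0 := by
  refine ((setLIntegral_pos_iff hw).2 ?_).ne'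
  have hsupp : Ioi x ⊆ Function.support w := hw0
  rw [inter_eq_right.2 hsupp, Real.volume_Ioi]
  exact ENNReal.zero_lt_top

theorem setLIntegral_mul_rpow_neg_le (hw : Measurable w) {a : ℝ} (ha0 : 0 < a) (ha1 : a < 1)
    (x : ℝ) : ∫⁻ t in Ioi x, w t * hardyOpDual w t ^ (-a)
      ≤ hardyOpDual w x ^ (1 - a) * ENNReal.ofReal (1 / (1 - a)) := by
  have key := lintegral_mul_setLIntegral_Ici_rpow_neg_le (μ := volume.restrict (Ioi x)) hw ha0 ha1
  refine le_of_eq_of_le (setLIntegral_congr_fun measurableSet_Ioi fun t ht => ?_) key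
  rw [Measure.restrict_restrict measurableSet_Ici, inter_eq_left.2 (Ici_subset_Ioi.2 ht),
    ← restrict_Ioi_eq_restrict_Ici]
  rfl

end hardyOpDual

theorem ENNReal.le_mul_rpow_neg_of_rpow_mul_le {a b c : ℝ≥0∞} {s : ℝ} (ha0 : a ≠ 0) (hatop : a ≠ ⊤)
    (h : a ^ s * b ≤ c) : b ≤ c * a ^ (-s) := by
  rw [ENNReal.rpow_neg, ← div_eq_mul_inv,
    ENNReal.le_div_iff_mul_le (Or.inl (by simp [ha0, hatop])) (Or.inl (by simp [ha0, hatop])),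
    mul_comm]
  exact h

section Hardy

variable {p p' q : ℝ} {f u v w : ℝ → ℝ≥0∞}

-- Hölder for `f = (f^p v V^{1/p'})^{1/p} (w V^{-1/p})^{1/p'}`, where `V = hardyOp w`.
theorem hardyOp_le_of_holderConjugate (hpp' : p.HolderConjugate p') (hf : Measurable f)
    (hv : Measurable v) (hw : Measurable w) {x : ℝ}
    (hv0 : ∀ t ∈ Ioc 0 x, v t ≠ 0) (hvtop : ∀ t ∈ Ioc 0 x, v t ≠ ⊤)
    (hwv : ∀ t ∈ Ioc 0 x, w t = v t ^ (1 - p')) (hV0 : ∀ t ∈ Ioc 0 x, hardyOp w t ≠ 0)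
    (hV : hardyOp w x ≠ ⊤) :
    hardyOp f x ≤ ENNReal.ofReal p' ^ (1 / p') * hardyOp w x ^ (1 / p' * (1 / p')) *
      hardyOp (fun t => f t ^ p * v t * hardyOp w t ^ (1 / p')) x ^ (1 / p) := by
  have hp0 := hpp'.pos
  have hp'0 := hpp'.symm.pos
  have hsum : 1 / p + 1 / p' = 1 := by simpa [one_div] using hpp'.inv_add_inv_eq_one
  set V := hardyOp w
  have hfac : ∀ t ∈ Ioc 0 x, f t = (f t ^ p * v t * V t ^ (1 / p')) ^ (1 / p) *
      (w t * V t ^ (-(1 / p))) ^ (1 / p') := fun t ht => by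
    have hVtop : V t ≠ ⊤ := ne_top_of_le_ne_top hV (hardyOp.monotone ht.2)
    rw [hwv t ht]
    simp only [ENNReal.mul_rpow_of_nonneg _ _ (by positivity : (0:ℝ) ≤ 1 / p),
      ENNReal.mul_rpow_of_nonneg _ _ (by positivity : (0:ℝ) ≤ 1 / p'), ← ENNReal.rpow_mul]
    calc f t = f t ^ (p * (1 / p)) * v t ^ (1 / p + (1 - p') * (1 / p')) *
          V t ^ (1 / p' * (1 / p) + -(1 / p) * (1 / p')) := by
          rw [show p * (1 / p) = 1 by field_simp,
            show 1 / p + (1 - p') * (1 / p') = 0 by field_simp; linarith [hpp'.mul_eq_add],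
            show 1 / p' * (1 / p) + -(1 / p) * (1 / p') = 0 by ring]
          simp
      _ = _ := by
          rw [ENNReal.rpow_add _ _ (hv0 t ht) (hvtop t ht), ENNReal.rpow_add _ _ (hV0 t ht) hVtop]
          ring
  have hp1 : 1 - 1 / p = 1 / p' := by linarith
  have hkey := hardyOp.setLIntegral_mul_rpow_neg_le hw hpp'.one_div_pos
    ((div_lt_one hp0).2 hpp'.lt) x
  rw [hp1, one_div_one_div] at hkey
  calc hardyOp f x = ∫⁻ t in Ioc 0 x, (f t ^ p * v t * V t ^ (1 / p')) ^ (1 / p) *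
        (w t * V t ^ (-(1 / p))) ^ (1 / p') := setLIntegral_congr_fun measurableSet_Ioc hfac
    _ ≤ hardyOp (fun t => f t ^ p * v t * V t ^ (1 / p')) x ^ (1 / p) *
        (∫⁻ t in Ioc 0 x, w t * V t ^ (-(1 / p))) ^ (1 / p') :=
      ENNReal.lintegral_mul_norm_pow_le
        (((hf.pow_const _).mul hv).mul (hardyOp.measurable.pow_const _)).aemeasurable
        (hw.mul (hardyOp.measurable.pow_const _)).aemeasurable
        hpp'.one_div_nonneg hpp'.symm.one_div_nonneg hsum
    _ ≤ hardyOp (fun t => f t ^ p * v t * V t ^ (1 / p')) x ^ (1 / p) *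
        (V x ^ (1 / p') * ENNReal.ofReal p') ^ (1 / p') := by gcongr
    _ = _ := by
      rw [ENNReal.mul_rpow_of_nonneg _ _ hpp'.symm.one_div_nonneg, ← ENNReal.rpow_mul]
      ring

theorem setLIntegral_Ioi_mul_rpow_le_hardyOpDual (hpp' : p.HolderConjugate p') (hq : 0 < q)
    (hu : Measurable u) {V : ℝ → ℝ≥0∞} {D : ℝ≥0∞} {t : ℝ}
    (hU0 : ∀ x ∈ Ioi t, hardyOpDual u x ≠ 0) (hUtop : ∀ x ∈ Ioi t, hardyOpDual u x ≠ ⊤)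
    (hD : ∀ x ∈ Ioi t, hardyOpDual u x ^ (1 / q) * V x ^ (1 / p') ≤ D) :
    ∫⁻ x in Ioi t, u x * V x ^ (1 / p' * (1 / p') * q)
      ≤ D ^ (q / p') * (hardyOpDual u t ^ (1 / p) * ENNReal.ofReal p) := by
  have hp'0 := hpp'.symm.pos
  have hpt : ∀ x ∈ Ioi t, u x * V x ^ (1 / p' * (1 / p') * q)
      ≤ D ^ (q / p') * (u x * hardyOpDual u x ^ (-(1 / p'))) := fun x hx => by
    have h := ENNReal.rpow_le_rpow (hD x hx) (by positivity : (0:ℝ) ≤ q / p')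
    rw [ENNReal.mul_rpow_of_nonneg _ _ (by positivity), ← ENNReal.rpow_mul, ← ENNReal.rpow_mul,
      show 1 / q * (q / p') = 1 / p' by field_simp,
      show 1 / p' * (q / p') = 1 / p' * (1 / p') * q by ring] at h
    calc u x * V x ^ (1 / p' * (1 / p') * q)
        ≤ u x * (D ^ (q / p') * hardyOpDual u x ^ (-(1 / p'))) := by
          gcongr
          exact ENNReal.le_mul_rpow_neg_of_rpow_mul_le (hU0 x hx) (hUtop x hx) h
      _ = _ := by ring
  have hkey := hardyOpDual.setLIntegral_mul_rpow_neg_le hu hpp'.symm.one_div_pos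
    ((div_lt_one hp'0).2 hpp'.symm.lt) t
  rw [show 1 - 1 / p' = 1 / p by simpa [one_div] using hpp'.symm.one_sub_inv, one_div_one_div]
    at hkey
  calc ∫⁻ x in Ioi t, u x * V x ^ (1 / p' * (1 / p') * q)
      ≤ ∫⁻ x in Ioi t, D ^ (q / p') * (u x * hardyOpDual u x ^ (-(1 / p'))) :=
        setLIntegral_mono' measurableSet_Ioi hpt
    _ = D ^ (q / p') * ∫⁻ x in Ioi t, u x * hardyOpDual u x ^ (-(1 / p')) :=
        lintegral_const_mul _ (hu.mul (hardyOpDual.measurable.pow_const _))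
    _ ≤ _ := by gcongr

theorem mul_rpow_le_of_rpow_mul_le (hpp' : p.HolderConjugate p') (hq : 0 < q)
    {F U V D : ℝ≥0∞} (hV0 : V ≠ 0) (hVtop : V ≠ ⊤) (hD : U ^ (1 / q) * V ^ (1 / p') ≤ D) :
    F * V ^ (1 / p') * (D ^ (q / p') * (U ^ (1 / p) * ENNReal.ofReal p)) ^ (p / q)
      ≤ D ^ p * ENNReal.ofReal p ^ (p / q) * F := by
  have hp0 := hpp'.pos
  have hU : U ^ (1 / q) ≤ D * V ^ (-(1 / p')) :=
    ENNReal.le_mul_rpow_neg_of_rpow_mul_le hV0 hVtop (by rwa [mul_comm] at hD)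
  simp only [ENNReal.mul_rpow_of_nonneg _ _ (by positivity : (0:ℝ) ≤ p / q), ← ENNReal.rpow_mul]
  rw [show q / p' * (p / q) = p - 1 by rw [← hpp'.div_conj_eq_sub_one]; field_simp,
    show 1 / p * (p / q) = 1 / q by field_simp]
  calc F * V ^ (1 / p') * (D ^ (p - 1) * (U ^ (1 / q) * ENNReal.ofReal p ^ (p / q)))
      ≤ F * V ^ (1 / p') * (D ^ (p - 1) * (D * V ^ (-(1 / p')) * ENNReal.ofReal p ^ (p / q))) := by
        gcongr
    _ = D ^ (p - 1 + 1) * ENNReal.ofReal p ^ (p / q) * F * (V ^ (1 / p') * V ^ (-(1 / p'))) := by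
        rw [ENNReal.rpow_add_of_nonneg _ _ (by linarith [hpp'.lt]) zero_le_one, ENNReal.rpow_one]
        ring
    _ = D ^ p * ENNReal.ofReal p ^ (p / q) * F := by
        rw [← ENNReal.rpow_add _ _ hV0 hVtop, add_neg_cancel, ENNReal.rpow_zero, sub_add_cancel,
          mul_one]

theorem lintegral_hardyOp_rpow_withDensity_le (hpp' : p.HolderConjugate p') (hpq : p ≤ q)
    (hf : Measurable f) (hu : Measurable u) (hv : Measurable v) {V : ℝ → ℝ≥0∞}
    (hV : Measurable V) {D : ℝ≥0∞} (hutop : ∀ x ∈ Ioi 0, u x ≠ ⊤)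
    (hU0 : ∀ x ∈ Ioi 0, hardyOpDual u x ≠ 0) (hUtop : ∀ x ∈ Ioi 0, hardyOpDual u x ≠ ⊤)
    (hV0 : ∀ x ∈ Ioi 0, V x ≠ 0) (hVtop : ∀ x ∈ Ioi 0, V x ≠ ⊤)
    (hD : ∀ x ∈ Ioi 0, hardyOpDual u x ^ (1 / q) * V x ^ (1 / p') ≤ D) :
    ∫⁻ x, hardyOp (fun t => f t ^ p * v t * V t ^ (1 / p')) x ^ (q / p)
        ∂((volume.restrict (Ioi 0)).withDensity fun x => u x * V x ^ (1 / p' * (1 / p') * q))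
      ≤ (D ^ p * ENNReal.ofReal p ^ (p / q) * ∫⁻ x in Ioi 0, f x ^ p * v x) ^ (q / p) := by
  have hp0 := hpp'.pos
  have hp'0 := hpp'.symm.pos
  have hq0 : 0 < q := hp0.trans_le hpq
  set μ := (volume.restrict (Ioi 0)).withDensity fun x => u x * V x ^ (1 / p' * (1 / p') * q)
  have : SigmaFinite μ := SigmaFinite.withDensity_of_ne_top (ae_restrict_of_forall_mem
    measurableSet_Ioi fun x hx => ENNReal.mul_ne_top (hutop x hx)
      (ENNReal.rpow_ne_top_of_nonneg (by positivity) (hVtop x hx)))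
  have hpt : ∀ t ∈ Ioi 0, f t ^ p * v t * V t ^ (1 / p') * μ (Ici t) ^ (p / q)
      ≤ D ^ p * ENNReal.ofReal p ^ (p / q) * (f t ^ p * v t) := fun t ht => by
    have hIci : μ (Ici t) = ∫⁻ x in Ioi t, u x * V x ^ (1 / p' * (1 / p') * q) := by
      rw [withDensity_apply _ measurableSet_Ici, Measure.restrict_restrict measurableSet_Ici,
        inter_eq_left.2 (Ici_subset_Ioi.2 ht), ← restrict_Ioi_eq_restrict_Ici]
    have hpos : ∀ x ∈ Ioi t, x ∈ Ioi (0:ℝ) := fun x hx => show 0 < x from lt_trans ht hx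
    calc f t ^ p * v t * V t ^ (1 / p') * μ (Ici t) ^ (p / q)
        ≤ f t ^ p * v t * V t ^ (1 / p') *
          (D ^ (q / p') * (hardyOpDual u t ^ (1 / p) * ENNReal.ofReal p)) ^ (p / q) := by
          rw [hIci]
          gcongr
          exact setLIntegral_Ioi_mul_rpow_le_hardyOpDual hpp' hq0 hu (fun x hx => hU0 x (hpos x hx))
            (fun x hx => hUtop x (hpos x hx)) fun x hx => hD x (hpos x hx)
      _ ≤ _ := mul_rpow_le_of_rpow_mul_le hpp' hq0 (hV0 t ht) (hVtop t ht) (hD t ht)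
  have hmink := hardyOp.lintegral_rpow_le (μ := μ) ((one_le_div hp0).2 hpq)
    (by fun_prop : Measurable fun t => f t ^ p * v t * V t ^ (1 / p'))
  rw [one_div_div] at hmink
  refine hmink.trans (ENNReal.rpow_le_rpow ?_ (by positivity))
  rw [← lintegral_const_mul _ (by fun_prop : Measurable fun x => f x ^ p * v x)]
  exact setLIntegral_mono' measurableSet_Ioi hpt

theorem setLIntegral_hardyOp_rpow_mul_le (hpp' : p.HolderConjugate p') (hq : 0 < q)
    (hf : Measurable f) (hu : Measurable u) (hv : Measurable v) (hw : Measurable w)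
    (hv0 : ∀ x ∈ Ioi 0, v x ≠ 0) (hvtop : ∀ x ∈ Ioi 0, v x ≠ ⊤)
    (hwv : ∀ x ∈ Ioi 0, w x = v x ^ (1 - p')) (hV0 : ∀ x ∈ Ioi 0, hardyOp w x ≠ 0)
    (hV : ∀ x ∈ Ioi 0, hardyOp w x ≠ ⊤) :
    ∫⁻ x in Ioi 0, hardyOp f x ^ q * u x
      ≤ ENNReal.ofReal p' ^ (q / p') *
        ∫⁻ x, hardyOp (fun t => f t ^ p * v t * hardyOp w t ^ (1 / p')) x ^ (q / p)
          ∂((volume.restrict (Ioi 0)).withDensity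
            fun x => u x * hardyOp w x ^ (1 / p' * (1 / p') * q)) := by
  set V := hardyOp w
  set H := hardyOp fun t => f t ^ p * v t * V t ^ (1 / p')
  have hVm : Measurable V := hardyOp.measurable
  have hHm : Measurable H := hardyOp.measurable
  have hpt : ∀ x ∈ Ioi 0, hardyOp f x ^ q * u x
      ≤ ENNReal.ofReal p' ^ (q / p') * (u x * V x ^ (1 / p' * (1 / p') * q) * H x ^ (q / p)) :=
    fun x hx => by
      have hsub : ∀ t ∈ Ioc 0 x, t ∈ Ioi (0:ℝ) := fun t ht => ht.1
      have h := ENNReal.rpow_le_rpow (hardyOp_le_of_holderConjugate hpp' hf hv hw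
        (fun t ht => hv0 t (hsub t ht)) (fun t ht => hvtop t (hsub t ht))
        (fun t ht => hwv t (hsub t ht)) (fun t ht => hV0 t (hsub t ht)) (hV x hx)) hq.le
      simp only [ENNReal.mul_rpow_of_nonneg _ _ hq.le, ← ENNReal.rpow_mul] at h
      calc hardyOp f x ^ q * u x
          ≤ ENNReal.ofReal p' ^ (1 / p' * q) * V x ^ (1 / p' * (1 / p') * q) *
            H x ^ (1 / p * q) * u x := by gcongr
        _ = _ := by rw [show 1 / p' * q = q / p' by ring, show 1 / p * q = q / p by ring]; ring
  refine (setLIntegral_mono' measurableSet_Ioi hpt).trans_eq ?_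
  rw [lintegral_const_mul _ (by fun_prop),
    lintegral_withDensity_eq_lintegral_mul _ (by fun_prop) (by fun_prop)]
  rfl

theorem lintegral_hardyOp_rpow_mul_le (hpp' : p.HolderConjugate p') (hpq : p ≤ q)
    (hf : Measurable f) (hu : Measurable u) (hv : Measurable v) (hw : Measurable w)
    (hu0 : ∀ x ∈ Ioi 0, u x ≠ 0) (hutop : ∀ x ∈ Ioi 0, u x ≠ ⊤)
    (hv0 : ∀ x ∈ Ioi 0, v x ≠ 0) (hvtop : ∀ x ∈ Ioi 0, v x ≠ ⊤)
    (hwv : ∀ x ∈ Ioi 0, w x = v x ^ (1 - p'))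
    (hU : ∀ x ∈ Ioi 0, hardyOpDual u x ≠ ⊤) (hV : ∀ x ∈ Ioi 0, hardyOp w x ≠ ⊤) {D : ℝ≥0∞}
    (hD : ∀ x ∈ Ioi 0, hardyOpDual u x ^ (1 / q) * hardyOp w x ^ (1 / p') ≤ D) :
    (∫⁻ x in Ioi 0, hardyOp f x ^ q * u x) ^ (1 / q)
      ≤ D * ENNReal.ofReal (p' ^ (1 / p')) * ENNReal.ofReal (p ^ (1 / q)) *
        (∫⁻ x in Ioi 0, f x ^ p * v x) ^ (1 / p) := by
  have hp0 := hpp'.pos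
  have hp'0 := hpp'.symm.pos
  have hq0 : 0 < q := hp0.trans_le hpq
  have hV0 : ∀ x ∈ Ioi 0, hardyOp w x ≠ 0 := fun x hx => hardyOp.ne_zero hw hx fun t ht => by
    simp [hwv t ht.1, hv0 t ht.1, hvtop t ht.1]
  have hU0 : ∀ x ∈ Ioi 0, hardyOpDual u x ≠ 0 :=
    fun x hx => hardyOpDual.ne_zero hu fun t ht => hu0 t (show 0 < t from lt_trans hx ht)
  set I := ∫⁻ x in Ioi 0, f x ^ p * v x
  calc (∫⁻ x in Ioi 0, hardyOp f x ^ q * u x) ^ (1 / q)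
      ≤ (ENNReal.ofReal p' ^ (q / p') * (D ^ p * ENNReal.ofReal p ^ (p / q) * I) ^ (q / p))
          ^ (1 / q) := by
        gcongr
        refine (setLIntegral_hardyOp_rpow_mul_le hpp' hq0 hf hu hv hw hv0 hvtop hwv hV0 hV).trans ?_
        gcongr
        exact lintegral_hardyOp_rpow_withDensity_le hpp' hpq hf hu hv hardyOp.measurable hutop
          hU0 hU hV0 hV hD
    _ = _ := by
        simp only [ENNReal.mul_rpow_of_nonneg _ _ (by positivity : (0:ℝ) ≤ 1 / q),
          ENNReal.mul_rpow_of_nonneg _ _ (by positivity : (0:ℝ) ≤ q / p), ← ENNReal.rpow_mul]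
        rw [show q / p' * (1 / q) = 1 / p' by field_simp,
          show p * (q / p) * (1 / q) = 1 by field_simp,
          show p / q * (q / p) * (1 / q) = 1 / q by field_simp,
          show q / p * (1 / q) = 1 / p by field_simp, ENNReal.rpow_one,
          ENNReal.ofReal_rpow_of_pos hp'0, ENNReal.ofReal_rpow_of_pos hp0]
        ring

end Hardy

theorem hardy_sufficiency_general (p q p' : ℝ) (hp : 1 < p) (hpq : p ≤ q)
    (hp' : p' = p / (p - 1))
    (u v : ℝ → ℝ) (hu : Measurable u) (hv : Measurable v)
    (hupos : ∀ x ∈ Ioi (0:ℝ), 0 < u x) (hvpos : ∀ x ∈ Ioi (0:ℝ), 0 < v x)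
    (huL1 : ∀ r > (0:ℝ), (∫⁻ x in Ioi r, ENNReal.ofReal (u x)) < ⊤)
    (hvL1 : ∀ r > (0:ℝ), (∫⁻ x in Ioc 0 r, ENNReal.ofReal (v x ^ (1 - p'))) < ⊤)
    (D1 : ℝ≥0∞)
    (hD1 : D1 = ⨆ r ∈ Ioi (0:ℝ),
        (∫⁻ x in Ioi r, ENNReal.ofReal (u x)) ^ (1/q) *
        (∫⁻ x in Ioc 0 r, ENNReal.ofReal (v x ^ (1 - p'))) ^ (1/p'))
    (f : ℝ → ℝ) (hf : Measurable f) :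
    (∫⁻ x in Ioi (0:ℝ),
        (∫⁻ t in Ioc 0 x, ENNReal.ofReal (f t)) ^ q * ENNReal.ofReal (u x)) ^ (1/q)
      ≤ D1 * ENNReal.ofReal (p' ^ (1/p')) * ENNReal.ofReal (p ^ (1/q)) *
        (∫⁻ x in Ioi (0:ℝ), ENNReal.ofReal (f x ^ p * v x)) ^ (1/p) := by
  have hpp' : p.HolderConjugate p' := hp' ▸ .conjExponent hp
  have hp0 : 0 < p := hpp'.pos
  calc _ ≤ D1 * ENNReal.ofReal (p' ^ (1/p')) * ENNReal.ofReal (p ^ (1/q)) *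
        (∫⁻ x in Ioi (0:ℝ), ENNReal.ofReal (f x) ^ p * ENNReal.ofReal (v x)) ^ (1/p) :=
      lintegral_hardyOp_rpow_mul_le hpp' hpq hf.ennreal_ofReal hu.ennreal_ofReal
        hv.ennreal_ofReal (by fun_prop) (fun x hx => by simpa using hupos x hx)
        (fun _ _ => ENNReal.ofReal_ne_top) (fun x hx => by simpa using hvpos x hx)
        (fun _ _ => ENNReal.ofReal_ne_top)
        (fun x hx => (ENNReal.ofReal_rpow_of_pos (hvpos x hx)).symm)
        (fun x hx => (huL1 x hx).ne) (fun x hx => (hvL1 x hx).ne)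
        fun r hr => hD1 ▸ le_iSup₂ (f := fun r (_ : r ∈ Ioi (0:ℝ)) =>
          (∫⁻ x in Ioi r, ENNReal.ofReal (u x)) ^ (1/q) *
          (∫⁻ x in Ioc 0 r, ENNReal.ofReal (v x ^ (1 - p'))) ^ (1/p')) r hr
    _ ≤ _ := by
      gcongr with x
      rcases le_or_gt 0 (f x) with hfx | hfx
      · rw [ENNReal.ofReal_rpow_of_nonneg hfx hp0.le, ← ENNReal.ofReal_mul (by positivity)]
      · simp [ENNReal.ofReal_of_nonpos hfx.le, ENNReal.zero_rpow_of_pos hp0]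

theorem hardy_sufficiency (p q p' : ℝ) (hp : 1 < p) (hpq : p ≤ q)
    (hp' : p' = p / (p - 1))
    (u v : ℝ → ℝ) (hu : Measurable u) (hv : Measurable v)
    (hupos : ∀ x ∈ Ioi (0:ℝ), 0 < u x) (hvpos : ∀ x ∈ Ioi (0:ℝ), 0 < v x)
    (huL1 : ∀ r > (0:ℝ), (∫⁻ x in Ioi r, ENNReal.ofReal (u x)) < ⊤)
    (hvL1 : ∀ r > (0:ℝ), (∫⁻ x in Ioc 0 r, ENNReal.ofReal (v x ^ (1 - p'))) < ⊤)
    (D1 : ℝ≥0∞)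
    (hD1 : D1 = ⨆ r ∈ Ioi (0:ℝ),
        (∫⁻ x in Ioi r, ENNReal.ofReal (u x)) ^ (1/q) *
        (∫⁻ x in Ioc 0 r, ENNReal.ofReal (v x ^ (1 - p'))) ^ (1/p'))
    (hD1fin : D1 < ⊤)
    (f : ℝ → ℝ) (hf : Measurable f) (hfnn : ∀ x, 0 ≤ f x) :
    (∫⁻ x in Ioi (0:ℝ),
        (∫⁻ t in Ioc 0 x, ENNReal.ofReal (f t)) ^ q * ENNReal.ofReal (u x)) ^ (1/q)
      ≤ D1 * ENNReal.ofReal (p' ^ (1/p')) * ENNReal.ofReal (p ^ (1/q)) *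
        (∫⁻ x in Ioi (0:ℝ), ENNReal.ofReal (f x ^ p * v x)) ^ (1/p) :=
  hardy_sufficiency_general p q p' hp hpq hp' u v hu hv hupos hvpos huL1 hvL1 D1 hD1 f hf
end

section
/- Let $1<p\le q<\infty$, $p'=p/(p-1)$, and let $u,v:(0,\infty)\to(0,\infty)$ be measurable with $v^{1-p'}\in L^1_{loc}$. Suppose there is $C>0$ such that for all nonnegative measurable $f$, $\left(\int_0^\infty \left(\int_0^x f(t)\,dt\right)^q u(x)\,dx\right)^{1/q} \le C \left(\int_0^\infty f(x)^p v(x)\,dx\right)^{1/p}$. Then $\sup_{t>0}\left(\int_t^\infty u(x)\,dx\right)^{1/q}\left(\int_0^t v^{1-p'}(x)\,dx\right)^{1/p'} \le C$. -/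
/-! Test the Hardy inequality with `f = v^(1-p')` on `(0, t]`. Since `(1-p')p + 1 = 1 - p'`,
the right-hand side becomes `C V^(1/p)` with `V = ∫₀ᵗ v^(1-p')`, while `∫₀ˣ f = V` for every
`x > t`, so the left-hand side is at least `V (∫ₜ^∞ u)^(1/q)`. Dividing by the finite
`V^(1/p)` and using `1/p + 1/p' = 1` leaves exactly the Muckenhoupt bound at `t`. -/

open MeasureTheory Set
open scoped ENNReal

namespace ENNReal

theorem mul_rpow_le_of_mul_le_mul_rpow {V A B : ℝ≥0∞} {a b : ℝ} (ha : 0 ≤ a) (hb : 0 < b)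
    (hab : a + b = 1) (hV : V ≠ ⊤) (h : V * A ≤ B * V ^ a) : A * V ^ b ≤ B := by
  rcases eq_or_ne V 0 with rfl | hV₀
  · simp [zero_rpow_of_pos hb]
  have hVa₀ : V ^ a ≠ 0 := (rpow_pos (pos_iff_ne_zero.2 hV₀) hV).ne'
  have hVa : V ^ a ≠ ⊤ := rpow_ne_top_of_nonneg ha hV
  rw [← ENNReal.mul_le_mul_iff_right hVa₀ hVa]
  calc V ^ a * (A * V ^ b) = V * A := by
        rw [mul_left_comm, ← rpow_add _ _ hV₀ hV, hab, rpow_one, mul_comm]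
    _ ≤ B * V ^ a := h
    _ = V ^ a * B := mul_comm _ _

end ENNReal

theorem Real.HolderConjugate.rpow_one_sub_rpow_mul_self {p p' x : ℝ} (h : p.HolderConjugate p')
    (hx : 0 < x) : (x ^ (1 - p')) ^ p * x = x ^ (1 - p') := by
  have hexp : (1 - p') * p + 1 = 1 - p' := by linarith [h.mul_eq_add]
  rw [← Real.rpow_mul hx.le, ← Real.rpow_add_one hx.ne', hexp]

theorem lintegral_indicator_rpow_one_sub_rpow_mul {p p' : ℝ} (h : p.HolderConjugate p')
    {v : ℝ → ℝ} {s : Set ℝ} (hs : MeasurableSet s) (hv : ∀ x ∈ s, 0 < v x) :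
    ∫⁻ x, ENNReal.ofReal ((s.indicator (fun x ↦ v x ^ (1 - p')) x) ^ p * v x) =
      ∫⁻ x in s, ENNReal.ofReal (v x ^ (1 - p')) := by
  rw [← lintegral_indicator hs]
  congr 1 with x
  by_cases hx : x ∈ s
  · simp only [indicator_of_mem hx, h.rpow_one_sub_rpow_mul_self (hv x hx)]
  · simp [indicator_of_notMem hx, Real.zero_rpow h.ne_zero]

theorem const_rpow_mul_setLIntegral_le {α : Type*} [MeasurableSpace α] {μ : Measure α}
    {F w : α → ℝ≥0∞} {c : ℝ≥0∞} {q : ℝ} {s S : Set α} (hq : 0 ≤ q) (hs : MeasurableSet s)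
    (hsS : s ⊆ S) (hF : ∀ x ∈ s, c ≤ F x) :
    c ^ q * ∫⁻ x in s, w x ∂μ ≤ ∫⁻ x in S, F x ^ q * w x ∂μ :=
  calc c ^ q * ∫⁻ x in s, w x ∂μ ≤ ∫⁻ x in s, c ^ q * w x ∂μ := lintegral_const_mul_le _ _
    _ ≤ ∫⁻ x in s, F x ^ q * w x ∂μ := setLIntegral_mono' hs fun x hx ↦
        mul_le_mul_left (ENNReal.rpow_le_rpow (hF x hx) hq) _
    _ ≤ ∫⁻ x in S, F x ^ q * w x ∂μ := lintegral_mono_set hsS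

theorem hardy_necessity_general (p q p' : ℝ) (hp : 1 < p) (hpq : p ≤ q)
    (hp' : p' = p / (p - 1))
    (u v : ℝ → ℝ) (hv : Measurable v)
    (hvpos : ∀ x ∈ Ioi (0:ℝ), 0 < v x)
    (hvL1 : ∀ r > (0:ℝ), (∫⁻ x in Ioc 0 r, ENNReal.ofReal (v x ^ (1 - p'))) < ⊤)
    (C : ℝ)
    (hineq : ∀ f : ℝ → ℝ, Measurable f → (∀ x, 0 ≤ f x) →
      (∫⁻ x in Ioi (0:ℝ),
          (∫⁻ t in Ioc 0 x, ENNReal.ofReal (f t)) ^ q * ENNReal.ofReal (u x)) ^ (1/q)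
        ≤ ENNReal.ofReal C *
          (∫⁻ x in Ioi (0:ℝ), ENNReal.ofReal (f x ^ p * v x)) ^ (1/p)) :
    (⨆ t ∈ Ioi (0:ℝ),
        (∫⁻ x in Ioi t, ENNReal.ofReal (u x)) ^ (1/q) *
        (∫⁻ x in Ioc 0 t, ENNReal.ofReal (v x ^ (1 - p'))) ^ (1/p'))
      ≤ ENNReal.ofReal C := by
  have hpp' : p.HolderConjugate p' := (Real.holderConjugate_iff_eq_conjExponent hp).2 hp'
  have hq : 0 < q := hpp'.pos.trans_le hpq
  refine iSup₂_le fun t (ht : 0 < t) ↦ ?_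
  set V := ∫⁻ x in Ioc 0 t, ENNReal.ofReal (v x ^ (1 - p'))
  set f := (Ioc 0 t).indicator fun x ↦ v x ^ (1 - p')
  have hvpos_Ioc : ∀ x ∈ Ioc 0 t, 0 < v x := fun x hx ↦ hvpos x hx.1
  have hf_nonneg : ∀ x, 0 ≤ f x :=
    indicator_nonneg fun x hx ↦ Real.rpow_nonneg (hvpos_Ioc x hx).le _
  have hV_primitive : ∀ x ∈ Ioi t, V ≤ ∫⁻ s in Ioc 0 x, ENNReal.ofReal (f s) := fun x hx ↦
    calc V = ∫⁻ s in Ioc 0 t, ENNReal.ofReal (f s) :=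
          setLIntegral_congr_fun measurableSet_Ioc fun s hs ↦ by simp only [f, indicator_of_mem hs]
      _ ≤ _ := lintegral_mono_set (Ioc_subset_Ioc_right (le_of_lt hx))
  have hrhs : ∫⁻ x in Ioi 0, ENNReal.ofReal (f x ^ p * v x) ≤ V :=
    (setLIntegral_le_lintegral _ _).trans_eq
      (lintegral_indicator_rpow_one_sub_rpow_mul hpp' measurableSet_Ioc hvpos_Ioc)
  refine ENNReal.mul_rpow_le_of_mul_le_mul_rpow hpp'.one_div_nonneg hpp'.symm.one_div_pos
    (hpp'.one_div_add_one_div.trans one_div_one) (hvL1 t ht).ne ?_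
  calc V * (∫⁻ x in Ioi t, ENNReal.ofReal (u x)) ^ (1 / q)
      = (V ^ q * ∫⁻ x in Ioi t, ENNReal.ofReal (u x)) ^ (1 / q) := by
        rw [ENNReal.mul_rpow_of_nonneg _ _ (one_div_nonneg.2 hq.le), ← ENNReal.rpow_mul,
          mul_one_div_cancel hq.ne', ENNReal.rpow_one]
    _ ≤ _ := ENNReal.rpow_le_rpow (const_rpow_mul_setLIntegral_le hq.le measurableSet_Ioi
        (Ioi_subset_Ioi ht.le) hV_primitive) (one_div_nonneg.2 hq.le)
    _ ≤ _ := hineq f ((hv.pow_const _).indicator measurableSet_Ioc) hf_nonneg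
    _ ≤ ENNReal.ofReal C * V ^ (1 / p) :=
        mul_le_mul_right (ENNReal.rpow_le_rpow hrhs hpp'.one_div_nonneg) _

theorem hardy_necessity (p q p' : ℝ) (hp : 1 < p) (hpq : p ≤ q)
    (hp' : p' = p / (p - 1))
    (u v : ℝ → ℝ) (hu : Measurable u) (hv : Measurable v)
    (hupos : ∀ x ∈ Ioi (0:ℝ), 0 < u x) (hvpos : ∀ x ∈ Ioi (0:ℝ), 0 < v x)
    (hvL1 : ∀ r > (0:ℝ), (∫⁻ x in Ioc 0 r, ENNReal.ofReal (v x ^ (1 - p'))) < ⊤)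
    (C : ℝ) (hC : 0 < C)
    (hineq : ∀ f : ℝ → ℝ, Measurable f → (∀ x, 0 ≤ f x) →
      (∫⁻ x in Ioi (0:ℝ),
          (∫⁻ t in Ioc 0 x, ENNReal.ofReal (f t)) ^ q * ENNReal.ofReal (u x)) ^ (1/q)
        ≤ ENNReal.ofReal C *
          (∫⁻ x in Ioi (0:ℝ), ENNReal.ofReal (f x ^ p * v x)) ^ (1/p)) :
    (⨆ t ∈ Ioi (0:ℝ),
        (∫⁻ x in Ioi t, ENNReal.ofReal (u x)) ^ (1/q) *
        (∫⁻ x in Ioc 0 t, ENNReal.ofReal (v x ^ (1 - p'))) ^ (1/p'))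
      ≤ ENNReal.ofReal C :=
  hardy_necessity_general p q p' hp hpq hp' u v hv hvpos hvL1 C hineq
end

section
/- Let $\alpha,\beta,s>0$ with $s\le\beta$. Let $f,g:(0,\infty)\to(0,\infty)$ be measurable with $f\in L^1((r,\infty))$ for all $r>0$ and $g\in L^1_{loc}$. Define $F(x)=\int_x^\infty f$ and $G(x)=\int_0^x g$. Then $\sup_{x>0} F(x)^\alpha G(x)^\beta \le \sup_{x>0}\left(\int_x^\infty f(y)G(y)^{(\beta-s)/\alpha}dy\right)^\alpha G(x)^s$. -/
/-!
Write `G x = ∫_0^x g` and `e = (β - s) / α`, so that `F^α G^β = (F G^e)^α G^s` at every point.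
Since `G` is nondecreasing, `F(x) G(x)^e = ∫_x^∞ f(y) G(x)^e dy ≤ ∫_x^∞ f(y) G(y)^e dy`
(this is where `s ≤ β`, i.e. `e ≥ 0`, enters), so each term of the left supremum is bounded by
the term of the right supremum at the same point.
-/

open MeasureTheory Set
open scoped ENNReal

theorem Real.mul_rpow_rpow_mul_rpow {a b : ℝ} (ha : 0 ≤ a) (hb : 0 ≤ b) (e α s : ℝ)
    (hne : e * α + s ≠ 0) :
    (a * b ^ e) ^ α * b ^ s = a ^ α * b ^ (e * α + s) := by
  rw [Real.mul_rpow ha (Real.rpow_nonneg hb e), ← Real.rpow_mul hb, mul_assoc,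
    Real.rpow_add' hb hne]

theorem monotoneOn_setIntegral_Ioc {g : ℝ → ℝ} {a : ℝ} (hg : ∀ x ∈ Ioi a, 0 ≤ g x)
    (hint : ∀ r > a, IntegrableOn g (Ioc a r)) :
    MonotoneOn (fun t => ∫ y in Ioc a t, g y) (Ioi a) := by
  intro x _ y hy hxy
  refine setIntegral_mono_set (hint y hy) ?_ (Ioc_subset_Ioc_right hxy).eventuallyLE
  filter_upwards [ae_restrict_mem measurableSet_Ioc] with t ht using hg t ht.1

theorem ofReal_setIntegral_mul_le_lintegral {f φ : ℝ → ℝ} {S : Set ℝ} {c : ℝ}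
    (hS : MeasurableSet S) (hf : ∀ y ∈ S, 0 ≤ f y) (hfint : IntegrableOn f S)
    (hc : 0 ≤ c) (hcφ : ∀ y ∈ S, c ≤ φ y) :
    ENNReal.ofReal ((∫ y in S, f y) * c) ≤ ∫⁻ y in S, ENNReal.ofReal (f y * φ y) := by
  rw [← integral_mul_const, ofReal_integral_eq_lintegral_ofReal (hfint.mul_const c)]
  · refine lintegral_mono_ae ?_
    filter_upwards [ae_restrict_mem hS] with y hy
    exact ENNReal.ofReal_le_ofReal (mul_le_mul_of_nonneg_left (hcφ y hy) (hf y hy))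
  · filter_upwards [ae_restrict_mem hS] with y hy using mul_nonneg (hf y hy) hc

theorem A1_le_A2_case_s_le_beta_general (α β s : ℝ) (hα : 0 < α) (hβ : 0 < β)
    (hsβ : s ≤ β)
    (f g : ℝ → ℝ)
    (hfpos : ∀ x ∈ Ioi (0:ℝ), 0 < f x) (hgpos : ∀ x ∈ Ioi (0:ℝ), 0 < g x)
    (hfint : ∀ r > (0:ℝ), IntegrableOn f (Ioi r))
    (hgint : ∀ r > (0:ℝ), IntegrableOn g (Ioc 0 r)) :
    (⨆ x ∈ Ioi (0:ℝ),
        ENNReal.ofReal ((∫ y in Ioi x, f y) ^ α * (∫ y in Ioc 0 x, g y) ^ β))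
      ≤ ⨆ x ∈ Ioi (0:ℝ),
        (∫⁻ y in Ioi x,
            ENNReal.ofReal (f y * (∫ t in Ioc 0 y, g t) ^ ((β - s) / α))) ^ α *
          ENNReal.ofReal ((∫ y in Ioc 0 x, g y) ^ s) := by
  set G : ℝ → ℝ := fun t => ∫ y in Ioc 0 t, g y
  set e := (β - s) / α
  have hGmono : MonotoneOn G (Ioi 0) :=
    monotoneOn_setIntegral_Ioc (fun x hx => (hgpos x hx).le) hgint
  refine iSup₂_le fun x (hx : 0 < x) => le_iSup₂_of_le x hx ?_
  have hf0 : ∀ y ∈ Ioi x, 0 ≤ f y := fun y hy => (hfpos y (hx.trans hy)).le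
  have hF : 0 ≤ ∫ y in Ioi x, f y := setIntegral_nonneg measurableSet_Ioi hf0
  have hG : 0 ≤ G x := setIntegral_nonneg measurableSet_Ioc fun y hy => (hgpos y hy.1).le
  have hFG : 0 ≤ (∫ y in Ioi x, f y) * G x ^ e := mul_nonneg hF (Real.rpow_nonneg hG e)
  have he : e * α + s = β := by
    rw [div_mul_cancel₀ _ hα.ne']
    ring
  have hmono : ENNReal.ofReal ((∫ y in Ioi x, f y) * G x ^ e)
      ≤ ∫⁻ y in Ioi x, ENNReal.ofReal (f y * G y ^ e) :=
    ofReal_setIntegral_mul_le_lintegral measurableSet_Ioi hf0 (hfint x hx)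
      (Real.rpow_nonneg hG e) fun y hy => Real.rpow_le_rpow hG
        (hGmono hx (hx.trans hy) hy.le) (div_nonneg (sub_nonneg.2 hsβ) hα.le)
  calc ENNReal.ofReal ((∫ y in Ioi x, f y) ^ α * G x ^ β)
      = ENNReal.ofReal ((∫ y in Ioi x, f y) * G x ^ e) ^ α * ENNReal.ofReal (G x ^ s) := by
        rw [← he, ← Real.mul_rpow_rpow_mul_rpow hF hG e α s (he ▸ hβ.ne'),
          ENNReal.ofReal_mul (Real.rpow_nonneg hFG α), ENNReal.ofReal_rpow_of_nonneg hFG hα.le]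
    _ ≤ _ := by gcongr

theorem A1_le_A2_case_s_le_beta (α β s : ℝ) (hα : 0 < α) (hβ : 0 < β) (hs : 0 < s)
    (hsβ : s ≤ β)
    (f g : ℝ → ℝ) (hf : Measurable f) (hg : Measurable g)
    (hfpos : ∀ x ∈ Ioi (0:ℝ), 0 < f x) (hgpos : ∀ x ∈ Ioi (0:ℝ), 0 < g x)
    (hfint : ∀ r > (0:ℝ), IntegrableOn f (Ioi r))
    (hgint : ∀ r > (0:ℝ), IntegrableOn g (Ioc 0 r)) :
    (⨆ x ∈ Ioi (0:ℝ),
        ENNReal.ofReal ((∫ y in Ioi x, f y) ^ α * (∫ y in Ioc 0 x, g y) ^ β))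
      ≤ ⨆ x ∈ Ioi (0:ℝ),
        (∫⁻ y in Ioi x,
            ENNReal.ofReal (f y * (∫ t in Ioc 0 y, g t) ^ ((β - s) / α))) ^ α *
          ENNReal.ofReal ((∫ y in Ioc 0 x, g y) ^ s) :=
  A1_le_A2_case_s_le_beta_general α β s hα hβ hsβ f g hfpos hgpos hfint hgint
end

section
/- Let $\alpha,\beta,s>0$. Let $f,g:(0,\infty)\to(0,\infty)$ be measurable with $F(x)=\int_x^\infty f$ and $G(x)=\int_0^x g$ both finite and positive for all $x>0$. Then $\sup_{x>0} F(x)^\alpha G(x)^\beta \le \left(\max(1,\tfrac{s}{\beta})\right)^\alpha \sup_{x>0}\left(\int_x^\infty f(y)G(y)^{(\beta-s)/\alpha}dy\right)^\alpha G(x)^s$ and $\sup_{x>0}\left(\int_x^\infty f(y)G(y)^{(\beta-s)/\alpha}dy\right)^\alpha G(x)^s \le \left(\max(1,\tfrac{\beta}{s})\right)^\alpha \sup_{x>0} F(x)^\alpha G(x)^\beta$. -/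
/-!
Write `G x = primitive g x = ∫₀ˣ g`. It is absolutely continuous with `G' = g` a.e., so the
chain rule gives `G y ^ p - G x ^ p = p ∫ₓʸ g G ^ (p - 1)` and
`∫ₓ^∞ g G ^ (-q - 1) ≤ G x ^ (-q) / q`.

Both inequalities are instances of one transfer estimate. Suppose `∫ₜ^∞ φ ≤ B G(t) ^ (-r)` for
every `t`. If `0 < p < r`, expanding `G y ^ p` by the chain rule and swapping the integrals
(Tonelli) gives `∫ₓ^∞ φ G ^ p ≤ B · r / (r - p) · G(x) ^ (p - r)`. If `p ≤ 0`, the same bound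
with constant `1` follows because `G` is monotone. Take `φ = f G ^ ((β - s) / α)` and
`p = (s - β) / α` for the first inequality, and `φ = f` and `p = (β - s) / α` for the second.
-/

open MeasureTheory Set
open scoped ENNReal NNReal

theorem AbsolutelyContinuousOnInterval.of_dist_le_mul {X Y : Type*} [PseudoMetricSpace X]
    [PseudoMetricSpace Y] {f : ℝ → X} {h : ℝ → Y} {a b : ℝ} {K : ℝ≥0}
    (hf : AbsolutelyContinuousOnInterval f a b)
    (hh : ∀ u ∈ uIcc a b, ∀ v ∈ uIcc a b, dist (h u) (h v) ≤ K * dist (f u) (f v)) :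
    AbsolutelyContinuousOnInterval h a b := by
  rw [absolutelyContinuousOnInterval_iff] at hf ⊢
  intro ε hε
  obtain ⟨δ, hδ, hfδ⟩ := hf (ε / (K + 1)) (by positivity)
  refine ⟨δ, hδ, fun E hE hEδ => ?_⟩
  calc ∑ i ∈ Finset.range E.1, dist (h (E.2 i).1) (h (E.2 i).2)
      ≤ ∑ i ∈ Finset.range E.1, K * dist (f (E.2 i).1) (f (E.2 i).2) :=
        Finset.sum_le_sum fun i hi => hh _ (hE.1 i hi).1 _ (hE.1 i hi).2
    _ = K * ∑ i ∈ Finset.range E.1, dist (f (E.2 i).1) (f (E.2 i).2) := by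
        rw [Finset.mul_sum]
    _ ≤ K * (ε / (K + 1)) := by gcongr; exact (hfδ E hE hEδ).le
    _ < (K + 1) * (ε / (K + 1)) := by gcongr; linarith
    _ = ε := by field_simp

theorem LipschitzOnWith.comp_absolutelyContinuousOnInterval {X Y : Type*} [PseudoMetricSpace X]
    [PseudoMetricSpace Y] {φ : X → Y} {f : ℝ → X} {s : Set X} {a b : ℝ} {K : ℝ≥0}
    (hφ : LipschitzOnWith K φ s) (hf : AbsolutelyContinuousOnInterval f a b)
    (hfs : MapsTo f (uIcc a b) s) : AbsolutelyContinuousOnInterval (φ ∘ f) a b :=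
  hf.of_dist_le_mul fun _ hu _ hv => hφ.dist_le_mul _ (hfs hu) _ (hfs hv)

namespace AbsolutelyContinuousOnInterval

variable {G g φ φ' : ℝ → ℝ} {a b : ℝ} {s : Set ℝ} {K : ℝ≥0}

theorem deriv_comp_ae_eq (hGg : ∀ᵐ x, x ∈ uIcc a b → HasDerivAt G (g x) x)
    (hGs : MapsTo G (uIcc a b) s) (hφ : ∀ u ∈ s, HasDerivAt φ (φ' u) u) :
    deriv (φ ∘ G) =ᵐ[volume.restrict (uIoc a b)] fun x => φ' (G x) * g x := by
  rw [Filter.EventuallyEq, ae_restrict_iff' measurableSet_uIoc]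
  filter_upwards [hGg] with x hx hxab
  have hx' : x ∈ uIcc a b := uIoc_subset_uIcc hxab
  exact ((hφ _ (hGs hx')).comp x (hx hx')).deriv

theorem intervalIntegrable_comp_mul_deriv (hG : AbsolutelyContinuousOnInterval G a b)
    (hGg : ∀ᵐ x, x ∈ uIcc a b → HasDerivAt G (g x) x) (hGs : MapsTo G (uIcc a b) s)
    (hφ : ∀ u ∈ s, HasDerivAt φ (φ' u) u) (hφK : LipschitzOnWith K φ s) :
    IntervalIntegrable (fun x => φ' (G x) * g x) volume a b :=
  (hφK.comp_absolutelyContinuousOnInterval hG hGs).intervalIntegrable_deriv.congr_ae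
    (deriv_comp_ae_eq hGg hGs hφ)

theorem integral_comp_mul_deriv (hG : AbsolutelyContinuousOnInterval G a b)
    (hGg : ∀ᵐ x, x ∈ uIcc a b → HasDerivAt G (g x) x) (hGs : MapsTo G (uIcc a b) s)
    (hφ : ∀ u ∈ s, HasDerivAt φ (φ' u) u) (hφK : LipschitzOnWith K φ s) :
    ∫ x in a..b, φ' (G x) * g x = φ (G b) - φ (G a) := by
  rw [← intervalIntegral.integral_congr_ae_restrict (deriv_comp_ae_eq hGg hGs hφ),
    (hφK.comp_absolutelyContinuousOnInterval hG hGs).integral_deriv_eq_sub, Function.comp_apply,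
    Function.comp_apply]

end AbsolutelyContinuousOnInterval

theorem setLIntegral_Ioi_le_of_forall_Ioc_le {μ : Measure ℝ} {f : ℝ → ℝ≥0∞} {x : ℝ}
    {c : ℝ≥0∞} (h : ∀ y, x ≤ y → ∫⁻ u in Ioc x y, f u ∂μ ≤ c) :
    ∫⁻ u in Ioi x, f u ∂μ ≤ c := by
  have hIoi : ⋃ n : ℕ, Ioc x (x + n) = Ioi x :=
    iUnion_Ioc_eq_Ioi_self_iff.2 fun y _ =>
      (exists_nat_ge (y - x)).imp fun _ hn => by linarith
  rw [← hIoi, setLIntegral_iUnion_of_directed _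
    (Monotone.directed_le fun m n hmn => Ioc_subset_Ioc_right (by gcongr))]
  exact iSup_le fun n => h _ (by simp)

theorem lintegral_Ioi_mul_lintegral_Ioc_comm {μ : Measure ℝ} [SFinite μ] {φ ψ : ℝ → ℝ≥0∞}
    (hφ : Measurable φ) (hψ : Measurable ψ) (x : ℝ) :
    ∫⁻ y in Ioi x, φ y * ∫⁻ t in Ioc x y, ψ t ∂μ ∂μ
      = ∫⁻ t in Ioi x, ψ t * ∫⁻ y in Ici t, φ y ∂μ ∂μ := by
  set K : ℝ × ℝ → ℝ≥0∞ := {z | z.2 ≤ z.1}.indicator fun z => φ z.1 * ψ z.2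
  have hK : Measurable K := ((hφ.comp measurable_fst).mul (hψ.comp measurable_snd)).indicator
    (measurableSet_le measurable_snd measurable_fst)
  have hy : ∀ y, φ y * ∫⁻ t in Ioc x y, ψ t ∂μ = ∫⁻ t in Ioi x, K (y, t) ∂μ := fun y => by
    rw [← lintegral_const_mul _ hψ, ← Ioi_inter_Iic, inter_comm,
      ← Measure.restrict_restrict measurableSet_Iic, ← lintegral_indicator measurableSet_Iic]
    rfl
  have ht : ∀ t ∈ Ioi x, ψ t * ∫⁻ y in Ici t, φ y ∂μ = ∫⁻ y in Ioi x, K (y, t) ∂μ :=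
    fun t (hxt : x < t) => by
      rw [mul_comm, ← lintegral_mul_const _ hφ, ← inter_eq_left.2 (Ici_subset_Ioi.2 hxt),
        ← Measure.restrict_restrict measurableSet_Ici, ← lintegral_indicator measurableSet_Ici]
      rfl
  calc ∫⁻ y in Ioi x, φ y * ∫⁻ t in Ioc x y, ψ t ∂μ ∂μ
      = ∫⁻ y in Ioi x, ∫⁻ t in Ioi x, K (y, t) ∂μ ∂μ := lintegral_congr hy
    _ = ∫⁻ t in Ioi x, ∫⁻ y in Ioi x, K (y, t) ∂μ ∂μ :=
        lintegral_lintegral_swap (hK.comp measurable_id).aemeasurable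
    _ = ∫⁻ t in Ioi x, ψ t * ∫⁻ y in Ici t, φ y ∂μ ∂μ :=
        (setLIntegral_congr_fun measurableSet_Ioi ht).symm

theorem ENNReal.rpow_mul_ofReal_rpow_le_iff {T A : ℝ≥0∞} {α c γ : ℝ} (hα : 0 < α)
    (hc : 0 < c) :
    T ^ α * ENNReal.ofReal (c ^ γ) ≤ A ↔ T ≤ A ^ α⁻¹ * ENNReal.ofReal (c ^ (-(γ / α))) := by
  set D := ENNReal.ofReal (c ^ (γ / α))
  have hD0 : D ≠ 0 := by simp [D, Real.rpow_pos_of_pos hc]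
  have hDα : ENNReal.ofReal (c ^ γ) = D ^ α := by
    rw [ENNReal.ofReal_rpow_of_nonneg (by positivity) hα.le, ← Real.rpow_mul hc.le,
      div_mul_cancel₀ _ hα.ne']
  have hDinv : ENNReal.ofReal (c ^ (-(γ / α))) = D⁻¹ := by
    rw [Real.rpow_neg hc.le, ENNReal.ofReal_inv_of_pos (by positivity)]
  rw [hDα, hDinv, ← ENNReal.mul_rpow_of_nonneg _ _ hα.le, ← ENNReal.le_rpow_inv_iff hα,
    ← div_eq_mul_inv, ENNReal.le_div_iff_mul_le (Or.inl hD0) (Or.inl ENNReal.ofReal_ne_top)]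

theorem ofReal_integral_rpow_mul {X : Type*} [MeasurableSpace X] {μ : Measure X} {f : X → ℝ}
    (hf : Integrable f μ) (hf0 : 0 ≤ᵐ[μ] f) {α : ℝ} (hα : 0 ≤ α) (c : ℝ) :
    ENNReal.ofReal ((∫ y, f y ∂μ) ^ α * c)
      = (∫⁻ y, ENNReal.ofReal (f y) ∂μ) ^ α * ENNReal.ofReal c := by
  rw [← ofReal_integral_eq_lintegral_ofReal hf hf0,
    ENNReal.ofReal_rpow_of_nonneg (integral_nonneg_of_ae hf0) hα,
    ← ENNReal.ofReal_mul (Real.rpow_nonneg (integral_nonneg_of_ae hf0) _)]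

theorem Real.exists_lipschitzOnWith_rpow_const_Icc {c : ℝ} (hc : 0 < c) (p d : ℝ) :
    ∃ K, LipschitzOnWith K (fun u : ℝ => u ^ p) (Icc c d) :=
  ContDiffOn.exists_lipschitzOnWith (n := 1)
    (fun _ hu => (Real.contDiffAt_rpow_const_of_ne (hc.trans_le hu.1).ne').contDiffWithinAt)
    one_ne_zero (convex_Icc c d) isCompact_Icc

noncomputable def primitive (g : ℝ → ℝ) (x : ℝ) : ℝ := ∫ t in Ioc 0 x, g t

section Primitive

variable {g : ℝ → ℝ} {x y : ℝ}

theorem primitive_eq_intervalIntegral (hx : 0 ≤ x) : primitive g x = ∫ t in 0..x, g t :=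
  (intervalIntegral.integral_of_le hx).symm

theorem primitive_mono (hg0 : ∀ x ∈ Ioi (0:ℝ), 0 ≤ g x)
    (hgint : ∀ r > (0:ℝ), IntegrableOn g (Ioc 0 r)) : Monotone (primitive g) := by
  intro a b hab
  rcases le_or_gt b 0 with hb | hb
  · simp [primitive, Ioc_eq_empty_of_le (hab.trans hb), Ioc_eq_empty_of_le hb]
  · exact setIntegral_mono_set (hgint b hb)
      ((ae_restrict_iff' measurableSet_Ioc).2 (ae_of_all _ fun u hu => hg0 u hu.1))
      (Ioc_subset_Ioc_right hab).eventuallyLE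

theorem absolutelyContinuousOnInterval_primitive
    (hgint : ∀ r > (0:ℝ), IntegrableOn g (Ioc 0 r)) (hx : 0 < x) (hxy : x ≤ y) :
    AbsolutelyContinuousOnInterval (primitive g) x y := by
  have hy : 0 < y := hx.trans_le hxy
  have hP := ((intervalIntegrable_iff_integrableOn_Ioc_of_le hy.le).2 (hgint y hy)
    |>.absolutelyContinuousOnInterval_intervalIntegral left_mem_uIcc).mono
      (uIcc_subset_uIcc (mem_uIcc_of_le hx.le hxy) right_mem_uIcc)
  refine hP.of_dist_le_mul (K := 1) fun u hu v hv => ?_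
  rw [uIcc_of_le hxy] at hu hv
  rw [primitive_eq_intervalIntegral (hx.le.trans hu.1),
    primitive_eq_intervalIntegral (hx.le.trans hv.1), NNReal.coe_one, one_mul]

theorem ae_hasDerivAt_primitive (hgint : ∀ r > (0:ℝ), IntegrableOn g (Ioc 0 r)) (hx : 0 < x)
    (hxy : x ≤ y) : ∀ᵐ u, u ∈ uIcc x y → HasDerivAt (primitive g) (g u) u := by
  have hy : 0 < y := hx.trans_le hxy
  filter_upwards [((intervalIntegrable_iff_integrableOn_Ioc_of_le hy.le).2
    (hgint y hy)).ae_hasDerivAt_integral] with u hu hxyu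
  rw [uIcc_of_le hxy] at hxyu
  have hu0 : 0 < u := hx.trans_le hxyu.1
  refine (hu (mem_uIcc_of_le hu0.le hxyu.2) 0 left_mem_uIcc).congr_of_eventuallyEq ?_
  filter_upwards [Ioi_mem_nhds hu0] with v hv using primitive_eq_intervalIntegral (le_of_lt hv)

theorem intervalIntegrable_rpow_primitive_mul (hg0 : ∀ x ∈ Ioi (0:ℝ), 0 ≤ g x)
    (hgint : ∀ r > (0:ℝ), IntegrableOn g (Ioc 0 r)) (hGpos : ∀ x > (0:ℝ), 0 < primitive g x)
    {p : ℝ} (hp : p ≠ 0) (hx : 0 < x) (hxy : x ≤ y) :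
    IntervalIntegrable (fun u => primitive g u ^ (p - 1) * g u) volume x y := by
  obtain ⟨K, hK⟩ := Real.exists_lipschitzOnWith_rpow_const_Icc (hGpos x hx) p (primitive g y)
  have h := AbsolutelyContinuousOnInterval.intervalIntegrable_comp_mul_deriv
    (absolutelyContinuousOnInterval_primitive hgint hx hxy) (ae_hasDerivAt_primitive hgint hx hxy)
    (uIcc_of_le hxy ▸ (primitive_mono hg0 hgint).mapsTo_Icc)
    (fun u hu => Real.hasDerivAt_rpow_const (Or.inl (((hGpos x hx).trans_le hu.1).ne'))) hK
  simpa [mul_assoc, hp] using h.const_mul p⁻¹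

theorem integral_rpow_primitive_mul (hg0 : ∀ x ∈ Ioi (0:ℝ), 0 ≤ g x)
    (hgint : ∀ r > (0:ℝ), IntegrableOn g (Ioc 0 r)) (hGpos : ∀ x > (0:ℝ), 0 < primitive g x)
    {p : ℝ} (hp : p ≠ 0) (hx : 0 < x) (hxy : x ≤ y) :
    ∫ u in x..y, primitive g u ^ (p - 1) * g u = (primitive g y ^ p - primitive g x ^ p) / p := by
  obtain ⟨K, hK⟩ := Real.exists_lipschitzOnWith_rpow_const_Icc (hGpos x hx) p (primitive g y)
  have h := AbsolutelyContinuousOnInterval.integral_comp_mul_deriv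
    (absolutelyContinuousOnInterval_primitive hgint hx hxy) (ae_hasDerivAt_primitive hgint hx hxy)
    (uIcc_of_le hxy ▸ (primitive_mono hg0 hgint).mapsTo_Icc)
    (fun u hu => Real.hasDerivAt_rpow_const (Or.inl (((hGpos x hx).trans_le hu.1).ne'))) hK
  simp_rw [mul_assoc, intervalIntegral.integral_const_mul] at h
  rw [eq_div_iff hp, mul_comm, h]

end Primitive

section Tail

variable {g : ℝ → ℝ} {x : ℝ}

theorem lintegral_Ioc_rpow_primitive_mul (hg0 : ∀ x ∈ Ioi (0:ℝ), 0 ≤ g x)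
    (hgint : ∀ r > (0:ℝ), IntegrableOn g (Ioc 0 r)) (hGpos : ∀ x > (0:ℝ), 0 < primitive g x)
    {p y : ℝ} (hp : p ≠ 0) (hx : 0 < x) (hxy : x ≤ y) :
    ∫⁻ u in Ioc x y, ENNReal.ofReal (primitive g u ^ (p - 1) * g u)
      = ENNReal.ofReal ((primitive g y ^ p - primitive g x ^ p) / p) := by
  have hnonneg : ∀ u ∈ Ioc x y, 0 ≤ primitive g u ^ (p - 1) * g u := fun u hu =>
    mul_nonneg (Real.rpow_nonneg (hGpos u (hx.trans hu.1)).le _) (hg0 u (hx.trans hu.1))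
  rw [← ofReal_integral_eq_lintegral_ofReal
    ((intervalIntegrable_iff_integrableOn_Ioc_of_le hxy).1
      (intervalIntegrable_rpow_primitive_mul hg0 hgint hGpos hp hx hxy))
    ((ae_restrict_iff' measurableSet_Ioc).2 (ae_of_all _ hnonneg)),
    ← intervalIntegral.integral_of_le hxy, integral_rpow_primitive_mul hg0 hgint hGpos hp hx hxy]

theorem lintegral_Ioi_rpow_primitive_mul_le (hg0 : ∀ x ∈ Ioi (0:ℝ), 0 ≤ g x)
    (hgint : ∀ r > (0:ℝ), IntegrableOn g (Ioc 0 r)) (hGpos : ∀ x > (0:ℝ), 0 < primitive g x)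
    {q : ℝ} (hq : 0 < q) (hx : 0 < x) :
    ∫⁻ u in Ioi x, ENNReal.ofReal (primitive g u ^ (-q - 1) * g u)
      ≤ ENNReal.ofReal (primitive g x ^ (-q) / q) := by
  refine setLIntegral_Ioi_le_of_forall_Ioc_le fun y hxy => ?_
  rw [lintegral_Ioc_rpow_primitive_mul hg0 hgint hGpos (neg_ne_zero.2 hq.ne') hx hxy]
  refine ENNReal.ofReal_le_ofReal ?_
  rw [div_neg, ← neg_div, neg_sub]
  gcongr
  exact sub_le_self _ (Real.rpow_nonneg (hGpos y (hx.trans_le hxy)).le _)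

theorem lintegral_Ioi_mul_rpow_primitive_le_of_nonpos (hg0 : ∀ x ∈ Ioi (0:ℝ), 0 ≤ g x)
    (hgint : ∀ r > (0:ℝ), IntegrableOn g (Ioc 0 r)) (hGpos : ∀ x > (0:ℝ), 0 < primitive g x)
    {p : ℝ} (hp : p ≤ 0) (hx : 0 < x) (φ : ℝ → ℝ≥0∞) :
    ∫⁻ y in Ioi x, φ y * ENNReal.ofReal (primitive g y ^ p)
      ≤ ENNReal.ofReal (primitive g x ^ p) * ∫⁻ y in Ioi x, φ y := by
  rw [← lintegral_const_mul' _ _ ENNReal.ofReal_ne_top]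
  refine setLIntegral_mono' measurableSet_Ioi fun y (hy : x < y) => ?_
  rw [mul_comm]
  gcongr ?_ * _
  exact ENNReal.ofReal_le_ofReal <|
    Real.rpow_le_rpow_of_nonpos (hGpos x hx) (primitive_mono hg0 hgint hy.le) hp

theorem ofReal_rpow_primitive_eq_add_lintegral (hg0 : ∀ x ∈ Ioi (0:ℝ), 0 ≤ g x)
    (hgint : ∀ r > (0:ℝ), IntegrableOn g (Ioc 0 r)) (hGpos : ∀ x > (0:ℝ), 0 < primitive g x)
    {p y : ℝ} (hp : 0 < p) (hx : 0 < x) (hxy : x ≤ y) :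
    ENNReal.ofReal (primitive g y ^ p) = ENNReal.ofReal (primitive g x ^ p)
      + ENNReal.ofReal p * ∫⁻ t in Ioc x y, ENNReal.ofReal (primitive g t ^ (p - 1) * g t) := by
  have hGx : 0 < primitive g x := hGpos x hx
  rw [lintegral_Ioc_rpow_primitive_mul hg0 hgint hGpos hp.ne' hx hxy,
    ← ENNReal.ofReal_mul hp.le, mul_div_cancel₀ _ hp.ne',
    ← ENNReal.ofReal_add (by positivity)
      (sub_nonneg.2 (by gcongr; exact primitive_mono hg0 hgint hxy)), add_sub_cancel]

theorem lintegral_Ioi_mul_rpow_primitive_eq (hg : Measurable g)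
    (hg0 : ∀ x ∈ Ioi (0:ℝ), 0 ≤ g x) (hgint : ∀ r > (0:ℝ), IntegrableOn g (Ioc 0 r))
    (hGpos : ∀ x > (0:ℝ), 0 < primitive g x) {p : ℝ} (hp : 0 < p) (hx : 0 < x)
    {φ : ℝ → ℝ≥0∞} (hφ : Measurable φ) :
    ∫⁻ y in Ioi x, φ y * ENNReal.ofReal (primitive g y ^ p)
      = ENNReal.ofReal (primitive g x ^ p) * (∫⁻ y in Ioi x, φ y)
        + ENNReal.ofReal p * ∫⁻ t in Ioi x,
            ENNReal.ofReal (primitive g t ^ (p - 1) * g t) * ∫⁻ y in Ici t, φ y := by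
  have hψ : Measurable fun t => ENNReal.ofReal (primitive g t ^ (p - 1) * g t) :=
    (((primitive_mono hg0 hgint).measurable.pow_const _).mul hg).ennreal_ofReal
  rw [← lintegral_Ioi_mul_lintegral_Ioc_comm hφ hψ,
    ← lintegral_const_mul' (ENNReal.ofReal p) _ ENNReal.ofReal_ne_top,
    ← lintegral_const_mul _ hφ, ← lintegral_add_left (hφ.const_mul _)]
  refine setLIntegral_congr_fun measurableSet_Ioi fun y (hy : x < y) => ?_
  rw [ofReal_rpow_primitive_eq_add_lintegral hg0 hgint hGpos hp hx hy.le]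
  ring

theorem lintegral_Ioi_mul_rpow_primitive_le (hg : Measurable g) (hg0 : ∀ x ∈ Ioi (0:ℝ), 0 ≤ g x)
    (hgint : ∀ r > (0:ℝ), IntegrableOn g (Ioc 0 r)) (hGpos : ∀ x > (0:ℝ), 0 < primitive g x)
    {p r : ℝ} (hp : 0 < p) (hpr : p < r) (hx : 0 < x) {φ : ℝ → ℝ≥0∞} (hφ : Measurable φ)
    {B : ℝ≥0∞} (hB : ∀ t ≥ x, ∫⁻ y in Ioi t, φ y ≤ B * ENNReal.ofReal (primitive g t ^ (-r))) :
    ∫⁻ y in Ioi x, φ y * ENNReal.ofReal (primitive g y ^ p)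
      ≤ B * ENNReal.ofReal (r / (r - p) * primitive g x ^ (p - r)) := by
  set G := primitive g
  have hGx : 0 < G x := hGpos x hx
  have hrp : 0 < r - p := sub_pos.2 hpr
  have hψB : ∀ t ∈ Ioi x, ENNReal.ofReal (G t ^ (p - 1) * g t) * ENNReal.ofReal (G t ^ (-r))
      = ENNReal.ofReal (G t ^ (-(r - p) - 1) * g t) := fun t (ht : x < t) => by
    have hGt : 0 < G t := hGpos t (hx.trans ht)
    rw [← ENNReal.ofReal_mul (mul_nonneg (by positivity) (hg0 t (hx.trans ht))),
      show -(r - p) - 1 = (p - 1) + -r by ring, Real.rpow_add hGt]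
    ring_nf
  have hmeas : Measurable fun t => ENNReal.ofReal (G t ^ (-(r - p) - 1) * g t) :=
    (((primitive_mono hg0 hgint).measurable.pow_const _).mul hg).ennreal_ofReal
  calc ∫⁻ y in Ioi x, φ y * ENNReal.ofReal (G y ^ p)
      ≤ ENNReal.ofReal (G x ^ p) * (B * ENNReal.ofReal (G x ^ (-r)))
          + ENNReal.ofReal p * ∫⁻ t in Ioi x, B * ENNReal.ofReal (G t ^ (-(r - p) - 1) * g t) := by
        rw [lintegral_Ioi_mul_rpow_primitive_eq hg hg0 hgint hGpos hp hx hφ]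
        gcongr _ * ?_ + _ * ?_
        · exact hB x le_rfl
        · refine setLIntegral_mono' measurableSet_Ioi fun t ht => ?_
          rw [← hψB t ht, setLIntegral_congr Ioi_ae_eq_Ici.symm, mul_left_comm]
          gcongr
          exact hB t (le_of_lt ht)
    _ ≤ ENNReal.ofReal (G x ^ p) * (B * ENNReal.ofReal (G x ^ (-r)))
          + ENNReal.ofReal p * (B * ENNReal.ofReal (G x ^ (-(r - p)) / (r - p))) := by
        rw [lintegral_const_mul _ hmeas]
        gcongr
        exact lintegral_Ioi_rpow_primitive_mul_le hg0 hgint hGpos hrp hx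
    _ = B * ENNReal.ofReal (G x ^ p * G x ^ (-r) + p * (G x ^ (-(r - p)) / (r - p))) := by
        rw [ENNReal.ofReal_add (by positivity) (by positivity), ENNReal.ofReal_mul (by positivity),
          ENNReal.ofReal_mul hp.le]
        ring
    _ = B * ENNReal.ofReal (r / (r - p) * G x ^ (p - r)) := by
        rw [← Real.rpow_add hGx, ← sub_eq_add_neg, neg_sub]
        congr 2
        field_simp
        ring

end Tail

section Transfer

variable {g : ℝ → ℝ} {α γ δ x : ℝ} {φ : ℝ → ℝ≥0∞}

theorem rpow_lintegral_mul_rpow_primitive_mul_le_of_le (hg0 : ∀ x ∈ Ioi (0:ℝ), 0 ≤ g x)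
    (hgint : ∀ r > (0:ℝ), IntegrableOn g (Ioc 0 r)) (hGpos : ∀ x > (0:ℝ), 0 < primitive g x)
    (hα : 0 < α) (hγδ : γ ≤ δ) (hx : 0 < x) :
    (∫⁻ y in Ioi x, φ y * ENNReal.ofReal (primitive g y ^ ((γ - δ) / α))) ^ α
        * ENNReal.ofReal (primitive g x ^ δ)
      ≤ (∫⁻ y in Ioi x, φ y) ^ α * ENNReal.ofReal (primitive g x ^ γ) := by
  have hGx : 0 < primitive g x := hGpos x hx
  calc (∫⁻ y in Ioi x, φ y * ENNReal.ofReal (primitive g y ^ ((γ - δ) / α))) ^ α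
        * ENNReal.ofReal (primitive g x ^ δ)
      ≤ (ENNReal.ofReal (primitive g x ^ ((γ - δ) / α)) * ∫⁻ y in Ioi x, φ y) ^ α
        * ENNReal.ofReal (primitive g x ^ δ) := by
        gcongr
        exact lintegral_Ioi_mul_rpow_primitive_le_of_nonpos hg0 hgint hGpos
          (div_nonpos_of_nonpos_of_nonneg (sub_nonpos.2 hγδ) hα.le) hx φ
    _ = (∫⁻ y in Ioi x, φ y) ^ α * ENNReal.ofReal (primitive g x ^ γ) := by
        rw [ENNReal.mul_rpow_of_nonneg _ _ hα.le,
          ENNReal.ofReal_rpow_of_nonneg (by positivity) hα.le, ← Real.rpow_mul hGx.le,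
          div_mul_cancel₀ _ hα.ne', mul_comm (ENNReal.ofReal _), mul_assoc,
          ← ENNReal.ofReal_mul (by positivity), ← Real.rpow_add hGx, sub_add_cancel]

theorem rpow_lintegral_mul_rpow_primitive_mul_le_of_lt (hg : Measurable g)
    (hg0 : ∀ x ∈ Ioi (0:ℝ), 0 ≤ g x) (hgint : ∀ r > (0:ℝ), IntegrableOn g (Ioc 0 r))
    (hGpos : ∀ x > (0:ℝ), 0 < primitive g x) (hα : 0 < α) (hδ : 0 < δ) (hδγ : δ < γ)
    (hx : 0 < x) (hφ : Measurable φ) {A : ℝ≥0∞}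
    (hA : ∀ t ≥ x, (∫⁻ y in Ioi t, φ y) ^ α * ENNReal.ofReal (primitive g t ^ γ) ≤ A) :
    (∫⁻ y in Ioi x, φ y * ENNReal.ofReal (primitive g y ^ ((γ - δ) / α))) ^ α
        * ENNReal.ofReal (primitive g x ^ δ)
      ≤ ENNReal.ofReal ((γ / δ) ^ α) * A := by
  have hGx : 0 < primitive g x := hGpos x hx
  have hγδ : 0 < γ / δ := div_pos (hδ.trans hδγ) hδ
  have h := lintegral_Ioi_mul_rpow_primitive_le hg hg0 hgint hGpos
    (div_pos (sub_pos.2 hδγ) hα) (by gcongr; linarith) hx hφ fun t ht =>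
      (ENNReal.rpow_mul_ofReal_rpow_le_iff hα (hGpos t (hx.trans_le ht))).1 (hA t ht)
  rw [← sub_div, sub_sub_cancel, div_div_div_cancel_right₀ hα.ne',
    show (γ - δ) / α - γ / α = -(δ / α) by ring] at h
  refine (ENNReal.rpow_mul_ofReal_rpow_le_iff hα hGx).2 (h.trans_eq ?_)
  rw [ENNReal.mul_rpow_of_nonneg _ _ (inv_nonneg.2 hα.le),
    ENNReal.ofReal_rpow_of_nonneg (by positivity) (inv_nonneg.2 hα.le),
    ← Real.rpow_mul hγδ.le, mul_inv_cancel₀ hα.ne', Real.rpow_one,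
    ENNReal.ofReal_mul hγδ.le]
  ring

theorem iSup_rpow_lintegral_mul_rpow_primitive_mul_le (hg : Measurable g)
    (hg0 : ∀ x ∈ Ioi (0:ℝ), 0 ≤ g x) (hgint : ∀ r > (0:ℝ), IntegrableOn g (Ioc 0 r))
    (hGpos : ∀ x > (0:ℝ), 0 < primitive g x) (hα : 0 < α) (hδ : 0 < δ) (hφ : Measurable φ) :
    ⨆ x ∈ Ioi (0:ℝ), (∫⁻ y in Ioi x, φ y * ENNReal.ofReal (primitive g y ^ ((γ - δ) / α))) ^ α
        * ENNReal.ofReal (primitive g x ^ δ)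
      ≤ ENNReal.ofReal (max 1 (γ / δ) ^ α)
        * ⨆ x ∈ Ioi (0:ℝ), (∫⁻ y in Ioi x, φ y) ^ α * ENNReal.ofReal (primitive g x ^ γ) := by
  set A := ⨆ x ∈ Ioi (0:ℝ), (∫⁻ y in Ioi x, φ y) ^ α * ENNReal.ofReal (primitive g x ^ γ)
  have hA : ∀ t > 0, (∫⁻ y in Ioi t, φ y) ^ α * ENNReal.ofReal (primitive g t ^ γ) ≤ A :=
    fun t ht => le_iSup₂ (f := fun t (_ : t ∈ Ioi 0) =>
      (∫⁻ y in Ioi t, φ y) ^ α * ENNReal.ofReal (primitive g t ^ γ)) t ht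
  refine iSup₂_le fun x (hx : 0 < x) => ?_
  rcases le_or_gt γ δ with hγδ | hδγ
  · calc _ ≤ _ := rpow_lintegral_mul_rpow_primitive_mul_le_of_le hg0 hgint hGpos hα hγδ hx
      _ ≤ A := hA x hx
      _ ≤ _ := le_mul_of_one_le_left' (ENNReal.one_le_ofReal.2
          (Real.one_le_rpow (le_max_left _ _) hα.le))
  · calc _ ≤ _ := rpow_lintegral_mul_rpow_primitive_mul_le_of_lt hg hg0 hgint hGpos hα hδ hδγ
          hx hφ fun t ht => hA t (hx.trans_le ht)
      _ ≤ _ := by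
          gcongr
          · exact (div_pos (hδ.trans hδγ) hδ).le
          · exact le_max_right _ _

end Transfer

theorem A1_equiv_A2_general (α β s : ℝ) (hα : 0 < α) (hβ : 0 < β) (hs : 0 < s)
    (f g : ℝ → ℝ) (hf : Measurable f) (hg : Measurable g)
    (hfpos : ∀ x ∈ Ioi (0:ℝ), 0 < f x) (hgpos : ∀ x ∈ Ioi (0:ℝ), 0 < g x)
    (hfint : ∀ r > (0:ℝ), IntegrableOn f (Ioi r))
    (hgint : ∀ r > (0:ℝ), IntegrableOn g (Ioc 0 r))
    (hGpos : ∀ x > (0:ℝ), 0 < ∫ y in Ioc 0 x, g y) :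
    ((⨆ x ∈ Ioi (0:ℝ),
        ENNReal.ofReal ((∫ y in Ioi x, f y) ^ α * (∫ y in Ioc 0 x, g y) ^ β))
      ≤ ENNReal.ofReal ((max 1 (s / β)) ^ α) *
        ⨆ x ∈ Ioi (0:ℝ),
          (∫⁻ y in Ioi x,
              ENNReal.ofReal (f y * (∫ t in Ioc 0 y, g t) ^ ((β - s) / α))) ^ α *
            ENNReal.ofReal ((∫ y in Ioc 0 x, g y) ^ s))
    ∧
    ((⨆ x ∈ Ioi (0:ℝ),
        (∫⁻ y in Ioi x,
            ENNReal.ofReal (f y * (∫ t in Ioc 0 y, g t) ^ ((β - s) / α))) ^ α *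
          ENNReal.ofReal ((∫ y in Ioc 0 x, g y) ^ s))
      ≤ ENNReal.ofReal ((max 1 (β / s)) ^ α) *
        ⨆ x ∈ Ioi (0:ℝ),
          ENNReal.ofReal ((∫ y in Ioi x, f y) ^ α * (∫ y in Ioc 0 x, g y) ^ β)) := by
  have hg0 : ∀ x ∈ Ioi (0:ℝ), 0 ≤ g x := fun x hx => (hgpos x hx).le
  have hf0 : ∀ x ∈ Ioi (0:ℝ), ∀ y ∈ Ioi x, 0 ≤ f y := fun x hx y (hy : x < y) =>
    (hfpos y (hx.trans hy)).le
  have hF : ∀ x ∈ Ioi (0:ℝ),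
      ENNReal.ofReal ((∫ y in Ioi x, f y) ^ α * primitive g x ^ β)
        = (∫⁻ y in Ioi x, ENNReal.ofReal (f y)) ^ α * ENNReal.ofReal (primitive g x ^ β) :=
    fun x hx => ofReal_integral_rpow_mul (hfint x hx)
      ((ae_restrict_iff' measurableSet_Ioi).2 (ae_of_all _ (hf0 x hx))) hα.le _
  constructor
  · calc ⨆ x ∈ Ioi (0:ℝ), ENNReal.ofReal ((∫ y in Ioi x, f y) ^ α * primitive g x ^ β)
        = ⨆ x ∈ Ioi (0:ℝ), (∫⁻ y in Ioi x, ENNReal.ofReal (f y * primitive g y ^ ((β - s) / α))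
            * ENNReal.ofReal (primitive g y ^ ((s - β) / α))) ^ α
            * ENNReal.ofReal (primitive g x ^ β) := by
          refine biSup_congr fun x hx => ?_
          rw [hF x hx]
          congr 2
          refine setLIntegral_congr_fun measurableSet_Ioi fun y (hy : x < y) => ?_
          have hGy : 0 < primitive g y := hGpos y (mem_Ioi.1 hx |>.trans hy)
          rw [← ENNReal.ofReal_mul (mul_nonneg (hf0 x hx y hy) (by positivity)), mul_assoc,
            ← Real.rpow_add hGy, ← add_div, sub_add_sub_cancel',
            sub_self, zero_div, Real.rpow_zero, mul_one]
      _ ≤ _ := iSup_rpow_lintegral_mul_rpow_primitive_mul_le hg hg0 hgint hGpos hα hβ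
          ((hf.mul ((primitive_mono hg0 hgint).measurable.pow_const _)).ennreal_ofReal)
  · calc ⨆ x ∈ Ioi (0:ℝ), (∫⁻ y in Ioi x,
            ENNReal.ofReal (f y * primitive g y ^ ((β - s) / α))) ^ α
            * ENNReal.ofReal (primitive g x ^ s)
        = ⨆ x ∈ Ioi (0:ℝ), (∫⁻ y in Ioi x,
            ENNReal.ofReal (f y) * ENNReal.ofReal (primitive g y ^ ((β - s) / α))) ^ α
            * ENNReal.ofReal (primitive g x ^ s) := by
          refine biSup_congr fun x hx => ?_
          congr 2
          exact setLIntegral_congr_fun measurableSet_Ioi fun y hy =>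
            ENNReal.ofReal_mul (hf0 x hx y hy)
      _ ≤ ENNReal.ofReal (max 1 (β / s) ^ α) * ⨆ x ∈ Ioi (0:ℝ),
            (∫⁻ y in Ioi x, ENNReal.ofReal (f y)) ^ α * ENNReal.ofReal (primitive g x ^ β) :=
          iSup_rpow_lintegral_mul_rpow_primitive_mul_le hg hg0 hgint hGpos hα hs hf.ennreal_ofReal
      _ = _ := by rw [← biSup_congr hF]; rfl

theorem A1_equiv_A2 (α β s : ℝ) (hα : 0 < α) (hβ : 0 < β) (hs : 0 < s)
    (f g : ℝ → ℝ) (hf : Measurable f) (hg : Measurable g)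
    (hfpos : ∀ x ∈ Ioi (0:ℝ), 0 < f x) (hgpos : ∀ x ∈ Ioi (0:ℝ), 0 < g x)
    (hfint : ∀ r > (0:ℝ), IntegrableOn f (Ioi r))
    (hgint : ∀ r > (0:ℝ), IntegrableOn g (Ioc 0 r))
    (hFpos : ∀ x > (0:ℝ), 0 < ∫ y in Ioi x, f y)
    (hGpos : ∀ x > (0:ℝ), 0 < ∫ y in Ioc 0 x, g y) :
    ((⨆ x ∈ Ioi (0:ℝ),
        ENNReal.ofReal ((∫ y in Ioi x, f y) ^ α * (∫ y in Ioc 0 x, g y) ^ β))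
      ≤ ENNReal.ofReal ((max 1 (s / β)) ^ α) *
        ⨆ x ∈ Ioi (0:ℝ),
          (∫⁻ y in Ioi x,
              ENNReal.ofReal (f y * (∫ t in Ioc 0 y, g t) ^ ((β - s) / α))) ^ α *
            ENNReal.ofReal ((∫ y in Ioc 0 x, g y) ^ s))
    ∧
    ((⨆ x ∈ Ioi (0:ℝ),
        (∫⁻ y in Ioi x,
            ENNReal.ofReal (f y * (∫ t in Ioc 0 y, g t) ^ ((β - s) / α))) ^ α *
          ENNReal.ofReal ((∫ y in Ioc 0 x, g y) ^ s))
      ≤ ENNReal.ofReal ((max 1 (β / s)) ^ α) *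
        ⨆ x ∈ Ioi (0:ℝ),
          ENNReal.ofReal ((∫ y in Ioi x, f y) ^ α * (∫ y in Ioc 0 x, g y) ^ β)) :=
  A1_equiv_A2_general α β s hα hβ hs f g hf hg hfpos hgpos hfint hgint hGpos
end

section
/- Let $n\ge 2$, $1<p\le q<\infty$, $p'=p/(p-1)$, and $\alpha,\beta\in\mathbb{R}$ with $\alpha+n\ge 0$. Then $\sup_{t>0}\left(\int_t^\infty (\sinh\rho)^{\alpha+n-1}d\rho\right)^{1/q}\left(\int_0^t (\sinh\rho)^{\beta(1-p')+n-1}d\rho\right)^{1/p'}<\infty$ if and only if $\alpha+n<1$, $\beta(1-p')+n>0$, and $\frac{\alpha+n-1}{q}+\frac{\beta(1-p')+n-1}{p'}\le 0$. -/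
/-!
Write `A = α + n - 1`, `B = β (1 - p') + n - 1`, `r = 1/q`, `s = 1/p'`. On `(0, 1]` one has
`ρ ≤ sinh ρ ≤ 2ρ` and on `[1, ∞)` one has `e^ρ / 4 ≤ sinh ρ ≤ e^ρ`. Hence `∫_t^∞ sinh^A` is
infinite when `A ≥ 0`, `∫_0^t sinh^B` is infinite when `B ≤ -1`, and otherwise for large `t`
the product is at least a multiple of `exp ((A r + B s) t)`, which forces `A r + B s ≤ 0`.
Conversely, under the three conditions the product is bounded for `t ≤ 1` by a multiple of
`t ^ (-δ r) * t ^ ((B + 1) s)` with `δ = (B + 1) s / r` (the tail is `O(t ^ (-δ))` because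
`A ≥ -1`), and for `t ≥ 1` by a multiple of `exp (A t) ^ r * exp (B' t) ^ s` with
`B' = -A r / s ≥ B`; both products are identically `1`.
-/

open MeasureTheory Set Real Filter
open scoped ENNReal

namespace Real

lemma sinh_le_exp (x : ℝ) : sinh x ≤ exp x := by
  rw [← cosh_add_sinh]
  linarith [cosh_pos x]

lemma sinh_le_two_mul {x : ℝ} (h0 : 0 ≤ x) (h1 : x ≤ 1) : sinh x ≤ 2 * x := by
  have hexp := (abs_le.1 (abs_exp_sub_one_sub_id_le (abs_le.2 ⟨by linarith, h1⟩))).2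
  have hexp_neg := add_one_le_exp (-x)
  rw [sinh_eq]
  nlinarith

lemma exp_div_four_le_sinh {x : ℝ} (hx : 1 ≤ x) : exp x / 4 ≤ sinh x := by
  have h2 : 2 ≤ exp x := by linarith [add_one_le_exp x]
  have hinv : exp (-x) * exp x = 1 := by rw [← exp_add, neg_add_cancel, exp_zero]
  rw [sinh_eq]
  nlinarith [exp_pos (-x)]

lemma sinh_rpow_le_of_le_one (c : ℝ) {x : ℝ} (h0 : 0 < x) (h1 : x ≤ 1) :
    sinh x ^ c ≤ 2 ^ |c| * x ^ c := by
  rcases le_or_gt 0 c with hc | hc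
  · calc sinh x ^ c ≤ (2 * x) ^ c :=
          rpow_le_rpow (sinh_pos_iff.2 h0).le (sinh_le_two_mul h0.le h1) hc
      _ = 2 ^ |c| * x ^ c := by rw [abs_of_nonneg hc, mul_rpow zero_le_two h0.le]
  · calc sinh x ^ c ≤ x ^ c := rpow_le_rpow_of_nonpos h0 (self_le_sinh_iff.2 h0.le) hc.le
      _ ≤ 2 ^ |c| * x ^ c :=
          le_mul_of_one_le_left (rpow_nonneg h0.le c) (one_le_rpow one_le_two (abs_nonneg c))

lemma sinh_rpow_le_of_one_le (c : ℝ) {x : ℝ} (hx : 1 ≤ x) :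
    sinh x ^ c ≤ 4 ^ |c| * exp (c * x) := by
  have hpos : 0 < exp x / 4 := by positivity
  rcases le_or_gt 0 c with hc | hc
  · calc sinh x ^ c ≤ exp x ^ c :=
          rpow_le_rpow (hpos.le.trans (exp_div_four_le_sinh hx)) (sinh_le_exp x) hc
      _ = exp (c * x) := by rw [← exp_mul, mul_comm]
      _ ≤ 4 ^ |c| * exp (c * x) :=
          le_mul_of_one_le_left (exp_pos _).le (one_le_rpow (by norm_num) (abs_nonneg c))
  · calc sinh x ^ c ≤ (exp x / 4) ^ c :=
          rpow_le_rpow_of_nonpos hpos (exp_div_four_le_sinh hx) hc.le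
      _ = 4 ^ |c| * exp (c * x) := by
          rw [div_rpow (exp_pos x).le (by norm_num), ← exp_mul, abs_of_neg hc,
            rpow_neg (by norm_num), mul_comm x c, div_eq_inv_mul]

lemma exp_mul_le_sinh_rpow {c x : ℝ} (hc : c ≤ 0) (hx : 0 < x) : exp (c * x) ≤ sinh x ^ c := by
  rw [mul_comm, exp_mul]
  exact rpow_le_rpow_of_nonpos (sinh_pos_iff.2 hx) (sinh_le_exp x) hc

end Real

lemma setLIntegral_ofReal_pos {α : Type*} [MeasurableSpace α] {μ : Measure α} {s : Set α}
    {f : α → ℝ} (hf : Measurable f) (hs : μ s ≠ 0) (hpos : ∀ x ∈ s, 0 < f x) :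
    0 < ∫⁻ x in s, ENNReal.ofReal (f x) ∂μ := by
  have hsupp : (Function.support fun x => ENNReal.ofReal (f x)) ∩ s = s :=
    inter_eq_right.2 fun x hx => (ENNReal.ofReal_pos.2 (hpos x hx)).ne'
  rw [setLIntegral_pos_iff hf.ennreal_ofReal, hsupp]
  exact pos_iff_ne_zero.2 hs

lemma ofReal_mul_le_setLIntegral_Ioc {f : ℝ → ℝ} {a b c : ℝ} (h : ∀ x ∈ Ioc a b, c ≤ f x) :
    ENNReal.ofReal c * ENNReal.ofReal (b - a) ≤ ∫⁻ x in Ioc a b, ENNReal.ofReal (f x) := by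
  rw [← Real.volume_Ioc, ← setLIntegral_const]
  exact setLIntegral_mono' measurableSet_Ioc fun x hx => ENNReal.ofReal_le_ofReal (h x hx)

lemma lintegral_Ioi_exp_mul {c : ℝ} (hc : c < 0) (t : ℝ) :
    ∫⁻ x in Ioi t, ENNReal.ofReal (exp (c * x)) = ENNReal.ofReal (exp (c * t) / -c) := by
  rw [← ofReal_integral_eq_lintegral_ofReal (integrableOn_exp_mul_Ioi hc t)
    (ae_of_all _ fun _ => (exp_pos _).le), integral_exp_mul_Ioi hc, neg_div, div_neg]

lemma lintegral_Iic_exp_mul {c : ℝ} (hc : 0 < c) (t : ℝ) :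
    ∫⁻ x in Iic t, ENNReal.ofReal (exp (c * x)) = ENNReal.ofReal (exp (c * t) / c) := by
  rw [← ofReal_integral_eq_lintegral_ofReal (integrableOn_exp_mul_Iic hc t)
    (ae_of_all _ fun _ => (exp_pos _).le), integral_exp_mul_Iic hc]

lemma lintegral_Ioi_rpow {a c : ℝ} (ha : a < -1) (hc : 0 < c) :
    ∫⁻ x in Ioi c, ENNReal.ofReal (x ^ a) = ENNReal.ofReal (c ^ (a + 1) / -(a + 1)) := by
  rw [← ofReal_integral_eq_lintegral_ofReal (integrableOn_Ioi_rpow_of_lt ha hc)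
    ((ae_restrict_mem measurableSet_Ioi).mono fun x hx => rpow_nonneg (hc.trans hx).le a),
    integral_Ioi_rpow_of_lt ha hc, neg_div, div_neg]

lemma lintegral_Ioc_zero_rpow {b t : ℝ} (hb : -1 < b) (ht : 0 ≤ t) :
    ∫⁻ x in Ioc 0 t, ENNReal.ofReal (x ^ b) = ENNReal.ofReal (t ^ (b + 1) / (b + 1)) := by
  have hint : IntegrableOn (fun x : ℝ => x ^ b) (Ioc 0 t) :=
    (intervalIntegrable_iff_integrableOn_Ioc_of_le ht).1
      (intervalIntegral.intervalIntegrable_rpow' hb)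
  rw [← ofReal_integral_eq_lintegral_ofReal hint
    ((ae_restrict_mem measurableSet_Ioc).mono fun x hx => rpow_nonneg hx.1.le b),
    ← intervalIntegral.integral_of_le ht, integral_rpow (Or.inl hb),
    zero_rpow (by linarith), sub_zero]

lemma lintegral_Ioc_zero_rpow_eq_top {b t : ℝ} (hb : b ≤ -1) (ht : 0 < t) :
    ∫⁻ x in Ioc 0 t, ENNReal.ofReal (x ^ b) = ⊤ := by
  by_contra h
  have hint : IntegrableOn (fun x : ℝ => x ^ b) (Ioc 0 t) :=
    (lintegral_ofReal_ne_top_iff_integrable (by fun_prop)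
      ((ae_restrict_mem measurableSet_Ioc).mono fun x hx => rpow_nonneg hx.1.le b)).1 h
  have := (intervalIntegral.integrableOn_Ioo_rpow_iff ht).1 (hint.mono_set Ioo_subset_Ioc_self)
  linarith

namespace ENNReal

lemma rpow_mul_rpow_le_ofReal_of_le_mul {F G : ℝ≥0∞} {a b x y r s : ℝ}
    (hF : F ≤ ENNReal.ofReal (a * x)) (hG : G ≤ ENNReal.ofReal (b * y)) (ha : 0 ≤ a) (hb : 0 ≤ b)
    (hx : 0 ≤ x) (hy : 0 ≤ y) (hr : 0 ≤ r) (hs : 0 ≤ s) (hxy : x ^ r * y ^ s = 1) :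
    F ^ r * G ^ s ≤ ENNReal.ofReal (a ^ r * b ^ s) := by
  calc F ^ r * G ^ s ≤ ENNReal.ofReal (a * x) ^ r * ENNReal.ofReal (b * y) ^ s := by gcongr
    _ = ENNReal.ofReal ((a * x) ^ r * (b * y) ^ s) := by
        rw [ofReal_rpow_of_nonneg (by positivity) hr, ofReal_rpow_of_nonneg (by positivity) hs,
          ofReal_mul (by positivity)]
    _ = ENNReal.ofReal (a ^ r * b ^ s) := by
        rw [Real.mul_rpow ha hx, Real.mul_rpow hb hy]
        congr 1
        linear_combination (a ^ r * b ^ s) * hxy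

lemma ofReal_rpow_mul_rpow_le {F G : ℝ≥0∞} {a b r s : ℝ} (hF : ENNReal.ofReal a ≤ F)
    (hG : ENNReal.ofReal b ≤ G) (ha : 0 ≤ a) (hb : 0 ≤ b) (hr : 0 ≤ r) (hs : 0 ≤ s) :
    ENNReal.ofReal (a ^ r * b ^ s) ≤ F ^ r * G ^ s := by
  rw [ofReal_mul (by positivity), ← ofReal_rpow_of_nonneg ha hr, ← ofReal_rpow_of_nonneg hb hs]
  gcongr

lemma top_rpow_mul_rpow {x : ℝ≥0∞} {r s : ℝ} (hx : x ≠ 0) (hr : 0 < r) (hs : 0 ≤ s) :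
    ⊤ ^ r * x ^ s = ⊤ := by
  rw [top_rpow_of_pos hr, top_mul]
  simp [rpow_eq_zero_iff, hx, hs.not_gt]

end ENNReal

lemma iSup_Ioi_eq_top_of_tendsto {f : ℝ → ℝ≥0∞} {g : ℝ → ℝ} (a : ℝ) (hg : Tendsto g atTop atTop)
    (hfg : ∀ᶠ t in atTop, ENNReal.ofReal (g t) ≤ f t) : ⨆ t ∈ Ioi a, f t = ⊤ := by
  refine (iSup₂_eq_top _).2 fun b hb => ?_
  obtain ⟨t, hat, hbt, hle⟩ := ((eventually_gt_atTop a).and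
    (((ENNReal.tendsto_ofReal_atTop.comp hg).eventually (lt_mem_nhds hb)).and hfg)).exists
  exact ⟨t, hat, hbt.trans_le hle⟩

noncomputable def sinhRpowIoi (A t : ℝ) : ℝ≥0∞ := ∫⁻ ρ in Ioi t, ENNReal.ofReal (sinh ρ ^ A)

noncomputable def sinhRpowIoc (B t : ℝ) : ℝ≥0∞ := ∫⁻ ρ in Ioc 0 t, ENNReal.ofReal (sinh ρ ^ B)

lemma sinhRpowIoi_pos (A : ℝ) {t : ℝ} (ht : 0 ≤ t) : 0 < sinhRpowIoi A t :=
  setLIntegral_ofReal_pos (by fun_prop) (by simp)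
    fun ρ hρ => rpow_pos_of_pos (sinh_pos_iff.2 (ht.trans_lt hρ)) A

lemma sinhRpowIoc_pos (B : ℝ) {t : ℝ} (ht : 0 < t) : 0 < sinhRpowIoc B t :=
  setLIntegral_ofReal_pos (by fun_prop) (by simpa using ht)
    fun ρ hρ => rpow_pos_of_pos (sinh_pos_iff.2 hρ.1) B

lemma sinhRpowIoi_eq_top {A : ℝ} (hA : 0 ≤ A) (t : ℝ) : sinhRpowIoi A t = ⊤ := by
  refine top_unique ?_
  calc ⊤ = ∫⁻ _ in Ioi (max t 1), ENNReal.ofReal 1 := by simp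
    _ ≤ ∫⁻ ρ in Ioi (max t 1), ENNReal.ofReal (sinh ρ ^ A) := by
        refine setLIntegral_mono' measurableSet_Ioi fun ρ hρ => ENNReal.ofReal_le_ofReal ?_
        have hρ1 : 1 ≤ ρ := (le_max_right t 1).trans hρ.le
        exact one_le_rpow (hρ1.trans (self_le_sinh_iff.2 (by linarith))) hA
    _ ≤ sinhRpowIoi A t := lintegral_mono_set (Ioi_subset_Ioi (le_max_left t 1))

lemma sinhRpowIoc_eq_top {B : ℝ} (hB : B ≤ -1) {t : ℝ} (ht : 0 < t) : sinhRpowIoc B t = ⊤ := by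
  set u := min t 1
  have hu : 0 < u := lt_min ht one_pos
  refine top_unique ?_
  calc ⊤ = ENNReal.ofReal (2 ^ B) * ∫⁻ x in Ioc 0 u, ENNReal.ofReal (x ^ B) := by
        rw [lintegral_Ioc_zero_rpow_eq_top hB hu,
          ENNReal.mul_top (ENNReal.ofReal_pos.2 (by positivity)).ne']
    _ = ∫⁻ x in Ioc 0 u, ENNReal.ofReal ((2 * x) ^ B) := by
        rw [← lintegral_const_mul' _ _ ENNReal.ofReal_ne_top]
        refine setLIntegral_congr_fun measurableSet_Ioc fun x hx => ?_
        rw [← ENNReal.ofReal_mul (by positivity), mul_rpow zero_le_two hx.1.le]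
    _ ≤ ∫⁻ x in Ioc 0 u, ENNReal.ofReal (sinh x ^ B) := by
        refine setLIntegral_mono' measurableSet_Ioc fun x hx => ENNReal.ofReal_le_ofReal ?_
        exact rpow_le_rpow_of_nonpos (sinh_pos_iff.2 hx.1)
          (sinh_le_two_mul hx.1.le (hx.2.trans (min_le_right t 1))) (by linarith)
    _ ≤ sinhRpowIoc B t := lintegral_mono_set (Ioc_subset_Ioc_right (min_le_left t 1))

lemma ofReal_exp_le_sinhRpowIoi {A : ℝ} (hA : A ≤ 0) {t : ℝ} (ht : 0 ≤ t) :
    ENNReal.ofReal (exp (A * (t + 1))) ≤ sinhRpowIoi A t := by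
  calc ENNReal.ofReal (exp (A * (t + 1)))
      = ENNReal.ofReal (exp (A * (t + 1))) * ENNReal.ofReal (t + 1 - t) := by simp
    _ ≤ ∫⁻ ρ in Ioc t (t + 1), ENNReal.ofReal (sinh ρ ^ A) :=
        ofReal_mul_le_setLIntegral_Ioc fun ρ hρ =>
          (exp_le_exp.2 (mul_le_mul_of_nonpos_left hρ.2 hA)).trans
            (exp_mul_le_sinh_rpow hA (ht.trans_lt hρ.1))
    _ ≤ sinhRpowIoi A t := lintegral_mono_set Ioc_subset_Ioi_self

lemma ofReal_exp_le_sinhRpowIoc {B : ℝ} (hB : 0 ≤ B) {t : ℝ} (ht : 2 ≤ t) :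
    ENNReal.ofReal (exp (B * (t - 1)) / 4 ^ B) ≤ sinhRpowIoc B t := by
  calc ENNReal.ofReal (exp (B * (t - 1)) / 4 ^ B)
      = ENNReal.ofReal (exp (B * (t - 1)) / 4 ^ B) * ENNReal.ofReal (t - (t - 1)) := by simp
    _ ≤ ∫⁻ ρ in Ioc (t - 1) t, ENNReal.ofReal (sinh ρ ^ B) := by
        refine ofReal_mul_le_setLIntegral_Ioc fun ρ hρ => ?_
        have hρ1 : 1 ≤ ρ := by linarith [hρ.1]
        calc exp (B * (t - 1)) / 4 ^ B = (exp (t - 1) / 4) ^ B := by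
              rw [div_rpow (exp_pos _).le (by norm_num), ← exp_mul, mul_comm]
          _ ≤ sinh ρ ^ B := rpow_le_rpow (by positivity)
              ((div_le_div_of_nonneg_right (exp_le_exp.2 hρ.1.le) (by norm_num)).trans
                (exp_div_four_le_sinh hρ1)) hB
    _ ≤ sinhRpowIoc B t := lintegral_mono_set (Ioc_subset_Ioc_left (by linarith))

lemma sinhRpowIoi_le_of_one_le {A : ℝ} (hA : A < 0) {t : ℝ} (ht : 1 ≤ t) :
    sinhRpowIoi A t ≤ ENNReal.ofReal (4 ^ |A| / -A * exp (A * t)) := by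
  calc sinhRpowIoi A t
      ≤ ∫⁻ ρ in Ioi t, ENNReal.ofReal (4 ^ |A|) * ENNReal.ofReal (exp (A * ρ)) := by
        refine setLIntegral_mono' measurableSet_Ioi fun ρ hρ => ?_
        rw [← ENNReal.ofReal_mul (by positivity)]
        exact ENNReal.ofReal_le_ofReal (sinh_rpow_le_of_one_le A (ht.trans hρ.le))
    _ = ENNReal.ofReal (4 ^ |A| / -A * exp (A * t)) := by
        rw [lintegral_const_mul' _ _ ENNReal.ofReal_ne_top, lintegral_Ioi_exp_mul hA,
          ← ENNReal.ofReal_mul (by positivity)]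
        ring_nf

lemma sinhRpowIoi_le_of_le_one {A δ : ℝ} (hA : A < 0) (hδ : 0 < δ) (hAδ : -1 - δ ≤ A) {t : ℝ}
    (ht : 0 < t) (ht1 : t ≤ 1) :
    sinhRpowIoi A t ≤ ENNReal.ofReal ((1 / δ + 4 ^ |A| / -A) * t ^ (-δ)) := by
  have hnear : ∫⁻ ρ in Ioc t 1, ENNReal.ofReal (sinh ρ ^ A) ≤ ENNReal.ofReal (t ^ (-δ) / δ) := by
    calc ∫⁻ ρ in Ioc t 1, ENNReal.ofReal (sinh ρ ^ A)
        ≤ ∫⁻ ρ in Ioi t, ENNReal.ofReal (ρ ^ (-1 - δ)) := by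
          refine (setLIntegral_mono' measurableSet_Ioc fun ρ hρ => ?_).trans
            (lintegral_mono_set Ioc_subset_Ioi_self)
          have hρ0 : 0 < ρ := ht.trans hρ.1
          exact ENNReal.ofReal_le_ofReal
            ((rpow_le_rpow_of_nonpos hρ0 (self_le_sinh_iff.2 hρ0.le) hA.le).trans
              (rpow_le_rpow_of_exponent_ge hρ0 hρ.2 hAδ))
      _ = ENNReal.ofReal (t ^ (-δ) / δ) := by
          rw [lintegral_Ioi_rpow (by linarith) ht]
          ring_nf
  have hfar := sinhRpowIoi_le_of_one_le hA le_rfl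
  have hK : 0 ≤ 4 ^ |A| / -A := div_nonneg (by positivity) (by linarith)
  have hone : 1 ≤ t ^ (-δ) := one_le_rpow_of_pos_of_le_one_of_nonpos ht ht1 (by linarith)
  have hexp : exp (A * 1) ≤ 1 := exp_le_one_iff.2 (by linarith)
  calc sinhRpowIoi A t
      = (∫⁻ ρ in Ioc t 1, ENNReal.ofReal (sinh ρ ^ A)) + sinhRpowIoi A 1 := by
        rw [sinhRpowIoi, sinhRpowIoi, ← lintegral_union measurableSet_Ioi Ioc_disjoint_Ioi_same,
          Ioc_union_Ioi_eq_Ioi ht1]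
    _ ≤ ENNReal.ofReal (t ^ (-δ) / δ) + ENNReal.ofReal (4 ^ |A| / -A * exp (A * 1)) :=
        add_le_add hnear hfar
    _ ≤ ENNReal.ofReal ((1 / δ + 4 ^ |A| / -A) * t ^ (-δ)) := by
        rw [← ENNReal.ofReal_add (by positivity) (by positivity)]
        refine ENNReal.ofReal_le_ofReal ?_
        have := mul_le_mul_of_nonneg_left (hexp.trans hone) hK
        linarith [div_eq_mul_one_div (t ^ (-δ)) δ]

lemma sinhRpowIoc_le_of_le_one {B : ℝ} (hB : -1 < B) {t : ℝ} (ht : 0 ≤ t) (ht1 : t ≤ 1) :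
    sinhRpowIoc B t ≤ ENNReal.ofReal (2 ^ |B| / (B + 1) * t ^ (B + 1)) := by
  calc sinhRpowIoc B t
      ≤ ∫⁻ ρ in Ioc 0 t, ENNReal.ofReal (2 ^ |B|) * ENNReal.ofReal (ρ ^ B) := by
        refine setLIntegral_mono' measurableSet_Ioc fun ρ hρ => ?_
        rw [← ENNReal.ofReal_mul (by positivity)]
        exact ENNReal.ofReal_le_ofReal (sinh_rpow_le_of_le_one B hρ.1 (hρ.2.trans ht1))
    _ = ENNReal.ofReal (2 ^ |B| / (B + 1) * t ^ (B + 1)) := by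
        rw [lintegral_const_mul' _ _ ENNReal.ofReal_ne_top, lintegral_Ioc_zero_rpow hB ht,
          ← ENNReal.ofReal_mul (by positivity)]
        ring_nf

lemma sinhRpowIoc_le_of_one_le {B B' : ℝ} (hB : -1 < B) (hBB' : B ≤ B') (hB' : 0 < B') {t : ℝ}
    (ht : 1 ≤ t) :
    sinhRpowIoc B t ≤ ENNReal.ofReal ((2 ^ |B| / (B + 1) + 4 ^ |B| / B') * exp (B' * t)) := by
  have hnear := sinhRpowIoc_le_of_le_one hB zero_le_one le_rfl
  have hfar : ∫⁻ ρ in Ioc 1 t, ENNReal.ofReal (sinh ρ ^ B)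
      ≤ ENNReal.ofReal (4 ^ |B| / B' * exp (B' * t)) := by
    calc ∫⁻ ρ in Ioc 1 t, ENNReal.ofReal (sinh ρ ^ B)
        ≤ ∫⁻ ρ in Iic t, ENNReal.ofReal (4 ^ |B|) * ENNReal.ofReal (exp (B' * ρ)) := by
          refine (setLIntegral_mono' measurableSet_Ioc fun ρ hρ => ?_).trans
            (lintegral_mono_set Ioc_subset_Iic_self)
          rw [← ENNReal.ofReal_mul (by positivity)]
          refine ENNReal.ofReal_le_ofReal ((sinh_rpow_le_of_one_le B hρ.1.le).trans ?_)
          gcongr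
          linarith [hρ.1]
      _ = ENNReal.ofReal (4 ^ |B| / B' * exp (B' * t)) := by
          rw [lintegral_const_mul' _ _ ENNReal.ofReal_ne_top, lintegral_Iic_exp_mul hB',
            ← ENNReal.ofReal_mul (by positivity)]
          ring_nf
  have hK : 0 ≤ 2 ^ |B| / (B + 1) := div_nonneg (by positivity) (by linarith)
  have hexp : 1 ≤ exp (B' * t) := one_le_exp (by positivity)
  calc sinhRpowIoc B t
      = sinhRpowIoc B 1 + ∫⁻ ρ in Ioc 1 t, ENNReal.ofReal (sinh ρ ^ B) := by
        rw [sinhRpowIoc, sinhRpowIoc, ← lintegral_union measurableSet_Ioc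
          (Ioc_disjoint_Ioc_of_le le_rfl), Ioc_union_Ioc_eq_Ioc zero_le_one ht]
    _ ≤ ENNReal.ofReal (2 ^ |B| / (B + 1) * 1 ^ (B + 1))
          + ENNReal.ofReal (4 ^ |B| / B' * exp (B' * t)) := add_le_add hnear hfar
    _ ≤ ENNReal.ofReal ((2 ^ |B| / (B + 1) + 4 ^ |B| / B') * exp (B' * t)) := by
        rw [one_rpow, mul_one, ← ENNReal.ofReal_add hK (by positivity)]
        refine ENNReal.ofReal_le_ofReal ?_
        nlinarith

section Muckenhoupt

variable {A B r s : ℝ}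

lemma iSup_sinhRpow_eq_top_of_nonneg (hA : 0 ≤ A) (hr : 0 < r) (hs : 0 ≤ s) :
    ⨆ t ∈ Ioi (0 : ℝ), sinhRpowIoi A t ^ r * sinhRpowIoc B t ^ s = ⊤ := by
  refine top_unique (le_iSup₂_of_le 1 (mem_Ioi.2 one_pos) ?_)
  rw [sinhRpowIoi_eq_top hA, ENNReal.top_rpow_mul_rpow (sinhRpowIoc_pos B one_pos).ne' hr hs]

lemma iSup_sinhRpow_eq_top_of_le_neg_one (hB : B ≤ -1) (hr : 0 ≤ r) (hs : 0 < s) :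
    ⨆ t ∈ Ioi (0 : ℝ), sinhRpowIoi A t ^ r * sinhRpowIoc B t ^ s = ⊤ := by
  refine top_unique (le_iSup₂_of_le 1 (mem_Ioi.2 one_pos) ?_)
  rw [sinhRpowIoc_eq_top hB one_pos, mul_comm,
    ENNReal.top_rpow_mul_rpow (sinhRpowIoi_pos A zero_le_one).ne' hs hr]

lemma iSup_sinhRpow_eq_top_of_pos (hA : A ≤ 0) (hB : 0 ≤ B) (hr : 0 ≤ r) (hs : 0 ≤ s)
    (hAB : 0 < A * r + B * s) :
    ⨆ t ∈ Ioi (0 : ℝ), sinhRpowIoi A t ^ r * sinhRpowIoc B t ^ s = ⊤ := by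
  refine iSup_Ioi_eq_top_of_tendsto 0
    (g := fun t => exp ((A * r + B * s) * t + (A * r - B * s)) / 4 ^ (B * s)) ?_ ?_
  · exact (tendsto_exp_atTop.comp (tendsto_atTop_add_const_right _ _
      (tendsto_id.const_mul_atTop hAB))).atTop_div_const (by positivity)
  · filter_upwards [eventually_ge_atTop 2] with t ht
    convert ENNReal.ofReal_rpow_mul_rpow_le (ofReal_exp_le_sinhRpowIoi hA (by linarith))
      (ofReal_exp_le_sinhRpowIoc hB ht) (exp_pos _).le (by positivity) hr hs using 2
    rw [div_rpow (exp_pos _).le (by positivity), ← rpow_mul (by norm_num), ← exp_mul, ← exp_mul,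
      mul_div_assoc', ← exp_add]
    ring_nf

theorem iSup_sinhRpow_lt_top (hA0 : A < 0) (hA : -1 ≤ A) (hB : -1 < B) (hr : 0 < r) (hs : 0 < s)
    (hAB : A * r + B * s ≤ 0) :
    ⨆ t ∈ Ioi (0 : ℝ), sinhRpowIoi A t ^ r * sinhRpowIoc B t ^ s < ⊤ := by
  obtain ⟨C₀, hC₀⟩ : ∃ C, ∀ t, 0 < t → t ≤ 1 →
      sinhRpowIoi A t ^ r * sinhRpowIoc B t ^ s ≤ ENNReal.ofReal C := by
    set δ := (B + 1) * s / r
    have hδ : 0 < δ := div_pos (mul_pos (by linarith) hs) hr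
    have hδr : δ * r = (B + 1) * s := div_mul_cancel₀ _ hr.ne'
    refine ⟨_, fun t ht ht1 => ENNReal.rpow_mul_rpow_le_ofReal_of_le_mul
      (sinhRpowIoi_le_of_le_one hA0 hδ (by linarith) ht ht1)
      (sinhRpowIoc_le_of_le_one hB ht.le ht1) ?_ ?_ (by positivity) (by positivity) hr.le hs.le ?_⟩
    · exact add_nonneg (by positivity) (div_nonneg (by positivity) (by linarith))
    · exact div_nonneg (by positivity) (by linarith)
    · rw [← rpow_mul ht.le, ← rpow_mul ht.le, ← rpow_add ht, show -δ * r + (B + 1) * s = 0 by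
        linarith, rpow_zero]
  obtain ⟨C₁, hC₁⟩ : ∃ C, ∀ t, 1 ≤ t →
      sinhRpowIoi A t ^ r * sinhRpowIoc B t ^ s ≤ ENNReal.ofReal C := by
    set B' := -(A * r) / s
    have hB's : B' * s = -(A * r) := div_mul_cancel₀ _ hs.ne'
    have hBB' : B ≤ B' := by rw [le_div_iff₀ hs]; linarith
    have hB' : 0 < B' := div_pos (by nlinarith) hs
    refine ⟨_, fun t ht => ENNReal.rpow_mul_rpow_le_ofReal_of_le_mul
      (sinhRpowIoi_le_of_one_le hA0 ht) (sinhRpowIoc_le_of_one_le hB hBB' hB' ht) ?_ ?_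
      (exp_pos _).le (exp_pos _).le hr.le hs.le ?_⟩
    · exact div_nonneg (by positivity) (by linarith)
    · exact add_nonneg (div_nonneg (by positivity) (by linarith)) (by positivity)
    · rw [← exp_mul, ← exp_mul, ← exp_add, exp_eq_one_iff]
      linear_combination t * hB's
  refine lt_of_le_of_lt (b := max (ENNReal.ofReal C₀) (ENNReal.ofReal C₁)) (iSup₂_le fun t ht => ?_)
    (max_lt ENNReal.ofReal_lt_top ENNReal.ofReal_lt_top)
  rcases le_total t 1 with ht1 | ht1
  · exact (hC₀ t ht ht1).trans (le_max_left _ _)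
  · exact (hC₁ t ht1).trans (le_max_right _ _)

theorem iSup_sinhRpow_lt_top_iff (hA : -1 ≤ A) (hr : 0 < r) (hs : 0 < s) :
    ⨆ t ∈ Ioi (0 : ℝ), sinhRpowIoi A t ^ r * sinhRpowIoc B t ^ s < ⊤ ↔
      A < 0 ∧ -1 < B ∧ A * r + B * s ≤ 0 := by
  refine ⟨fun h => ?_, fun ⟨hA0, hB, hAB⟩ => iSup_sinhRpow_lt_top hA0 hA hB hr hs hAB⟩
  have hA0 : A < 0 := by
    by_contra! hA0
    exact h.ne (iSup_sinhRpow_eq_top_of_nonneg hA0 hr hs.le)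
  have hB : -1 < B := by
    by_contra! hB
    exact h.ne (iSup_sinhRpow_eq_top_of_le_neg_one hB hr.le hs)
  refine ⟨hA0, hB, ?_⟩
  by_contra! hAB
  have hB0 : 0 < B * s := by nlinarith
  exact h.ne (iSup_sinhRpow_eq_top_of_pos hA0.le (pos_of_mul_pos_left hB0 hs.le).le hr.le hs.le hAB)

end Muckenhoupt

theorem muckenhoupt_hyperbolic_caseA_general (n : ℕ) (p q p' α β : ℝ)
    (hp : 1 < p) (hpq : p ≤ q) (hp' : p' = p / (p - 1))
    (hα : 0 ≤ α + n) :
    (⨆ t ∈ Ioi (0:ℝ),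
        (∫⁻ ρ in Ioi t, ENNReal.ofReal (Real.sinh ρ ^ (α + n - 1))) ^ (1/q) *
        (∫⁻ ρ in Ioc 0 t, ENNReal.ofReal (Real.sinh ρ ^ (β * (1 - p') + n - 1))) ^ (1/p')) < ⊤
      ↔ (α + n < 1 ∧ 0 < β * (1 - p') + n ∧
          (α + n - 1) / q + (β * (1 - p') + n - 1) / p' ≤ 0) := by
  have hq : 0 < q := by linarith
  have hp'0 : 0 < p' := hp' ▸ div_pos (by linarith) (by linarith)
  have key := iSup_sinhRpow_lt_top_iff (A := α + n - 1) (B := β * (1 - p') + n - 1)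
    (by linarith) (one_div_pos.2 hq) (one_div_pos.2 hp'0)
  rw [mul_one_div, mul_one_div] at key
  exact key.trans (and_congr (by constructor <;> intro <;> linarith)
    (and_congr (by constructor <;> intro <;> linarith) Iff.rfl))

theorem muckenhoupt_hyperbolic_caseA (n : ℕ) (hn : 2 ≤ n) (p q p' α β : ℝ)
    (hp : 1 < p) (hpq : p ≤ q) (hp' : p' = p / (p - 1))
    (hα : 0 ≤ α + n) :
    (⨆ t ∈ Ioi (0:ℝ),
        (∫⁻ ρ in Ioi t, ENNReal.ofReal (Real.sinh ρ ^ (α + n - 1))) ^ (1/q) *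
        (∫⁻ ρ in Ioc 0 t, ENNReal.ofReal (Real.sinh ρ ^ (β * (1 - p') + n - 1))) ^ (1/p')) < ⊤
      ↔ (α + n < 1 ∧ 0 < β * (1 - p') + n ∧
          (α + n - 1) / q + (β * (1 - p') + n - 1) / p' ≤ 0) :=
  muckenhoupt_hyperbolic_caseA_general n p q p' α β hp hpq hp' hα
end

section
/- Let $n\ge 2$, $1<p\le q<\infty$, $p'=p/(p-1)$, and $\alpha,\beta\in\mathbb{R}$ with $\alpha+n<0$. Then $\sup_{t>0}\left(\int_t^\infty (\sinh\rho)^{\alpha+n-1}d\rho\right)^{1/q}\left(\int_0^t (\sinh\rho)^{\beta(1-p')+n-1}d\rho\right)^{1/p'}<\infty$ if and only if $\beta(1-p')+n>0$ and $0\le \frac{\alpha+n}{q}+\frac{\beta(1-p')+n}{p'}\le \frac{1}{q}+\frac{1}{p'}$. -/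
/-!
Write `a = α + n`, `b = β (1 - p') + n`, `r = 1/q`, `s = 1/p'`. Since `x ≤ sinh x ≤ 3x` on
`(0, 1]` and `eˣ/4 ≤ sinh x ≤ eˣ/2` on `[1, ∞)`, the tail `∫_t^∞ sinh^(a-1)` is comparable to
`t^a` as `t → 0` and to `e^((a-1)t)` as `t → ∞`. The head `∫_0^t sinh^(b-1)` is infinite for
`b ≤ 0`; for `b > 0` it is comparable to `t^b` as `t → 0`, and as `t → ∞` it is comparable to
`e^((b-1)t)` when `b > 1` and grows at most linearly when `b ≤ 1`. So the product of powers behaves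
like `t^(ar+bs)` near `0` and like `e^(((a-1)r+(b-1)s)t)` near `∞`.
-/

open MeasureTheory Set Filter Topology Real
open scoped ENNReal

namespace SinhWeight

lemma sinh_le_exp_div_two (x : ℝ) : sinh x ≤ exp x / 2 := by
  rw [sinh_eq]; linarith [exp_pos (-x)]

lemma exp_div_four_le_sinh {x : ℝ} (hx : 1 ≤ x) : exp x / 4 ≤ sinh x := by
  have h2 : 2 ≤ exp x := by linarith [add_one_le_exp x]
  have hinv : exp (-x) * exp x = 1 := by rw [← exp_add, neg_add_cancel, exp_zero]
  rw [sinh_eq]; nlinarith [exp_pos (-x)]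

lemma sinh_le_three_mul {x : ℝ} (h0 : 0 ≤ x) (h1 : x ≤ 1) : sinh x ≤ 3 * x := by
  -- `1 - exp (-2x) ≤ 2x` gives `sinh x ≤ x exp x`, and `exp x ≤ exp 1 < 3`
  have hsub : 1 - exp (-(2 * x)) ≤ 2 * x := by linarith [add_one_le_exp (-(2 * x))]
  have hsplit : exp x - exp (-x) = exp x * (1 - exp (-(2 * x))) := by
    rw [mul_sub, mul_one, ← exp_add]; ring_nf
  have hexp : exp x < 3 := (exp_le_exp.2 h1).trans_lt exp_one_lt_three
  rw [sinh_eq, hsplit]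
  nlinarith [exp_pos x, mul_le_mul_of_nonneg_left hsub (exp_pos x).le]

lemma exists_rpow_bounds_of_bounds {α : Type*} {s : Set α} {f g : α → ℝ} {m M : ℝ}
    (hm : 0 < m) (hM : 0 < M) (hg : ∀ x ∈ s, 0 < g x) (hlow : ∀ x ∈ s, m * g x ≤ f x)
    (hup : ∀ x ∈ s, f x ≤ M * g x) (c : ℝ) :
    ∃ k > 0, ∃ K > 0, ∀ x ∈ s, k * g x ^ c ≤ f x ^ c ∧ f x ^ c ≤ K * g x ^ c := by
  rcases le_total 0 c with hc | hc
  · refine ⟨m ^ c, rpow_pos_of_pos hm c, M ^ c, rpow_pos_of_pos hM c, fun x hx => ?_⟩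
    rw [← mul_rpow hm.le (hg x hx).le, ← mul_rpow hM.le (hg x hx).le]
    have hmg := mul_pos hm (hg x hx)
    exact ⟨rpow_le_rpow hmg.le (hlow x hx) hc,
      rpow_le_rpow (hmg.le.trans (hlow x hx)) (hup x hx) hc⟩
  · refine ⟨M ^ c, rpow_pos_of_pos hM c, m ^ c, rpow_pos_of_pos hm c, fun x hx => ?_⟩
    rw [← mul_rpow hm.le (hg x hx).le, ← mul_rpow hM.le (hg x hx).le]
    have hmg := mul_pos hm (hg x hx)
    exact ⟨rpow_le_rpow_of_nonpos (hmg.trans_le (hlow x hx)) (hup x hx) hc,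
      rpow_le_rpow_of_nonpos hmg (hlow x hx) hc⟩

lemma exists_sinh_rpow_bounds_Ioc (c : ℝ) :
    ∃ k > 0, ∃ K > 0, ∀ x ∈ Ioc (0 : ℝ) 1, k * x ^ c ≤ sinh x ^ c ∧ sinh x ^ c ≤ K * x ^ c :=
  exists_rpow_bounds_of_bounds one_pos three_pos (fun x hx => hx.1)
    (fun x hx => by rw [one_mul]; exact self_le_sinh_iff.2 hx.1.le)
    (fun x hx => sinh_le_three_mul hx.1.le hx.2) c

lemma exists_sinh_rpow_le_exp_mul (c : ℝ) :
    ∃ K > 0, ∀ x ∈ Ici (1 : ℝ), sinh x ^ c ≤ K * exp (c * x) := by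
  obtain ⟨_, -, K, hK, h⟩ := exists_rpow_bounds_of_bounds (s := Ici (1 : ℝ)) (f := sinh)
    (m := 1 / 4) (M := 1 / 2) (by norm_num) (by norm_num) (fun x _ => exp_pos x)
    (fun x hx => by linarith [exp_div_four_le_sinh (mem_Ici.1 hx)])
    (fun x _ => by linarith [sinh_le_exp_div_two x]) c
  exact ⟨K, hK, fun x hx => by rw [mul_comm c, exp_mul]; exact (h x hx).2⟩

lemma lintegral_Ioc_zero_rpow {c t : ℝ} (hc : -1 < c) (ht : 0 ≤ t) :
    ∫⁻ x in Ioc 0 t, ENNReal.ofReal (x ^ c) = ENNReal.ofReal (t ^ (c + 1) / (c + 1)) := by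
  have hint : IntegrableOn (fun x : ℝ => x ^ c) (Ioc 0 t) :=
    (intervalIntegrable_iff_integrableOn_Ioc_of_le ht).1
      (intervalIntegral.intervalIntegrable_rpow' hc)
  rw [← ofReal_integral_eq_lintegral_ofReal hint, ← intervalIntegral.integral_of_le ht,
    integral_rpow (Or.inl hc), zero_rpow (by linarith), sub_zero]
  filter_upwards [ae_restrict_mem measurableSet_Ioc] with x hx using rpow_nonneg hx.1.le c

lemma lintegral_Ioc_zero_rpow_eq_top {c t : ℝ} (hc : c ≤ -1) (ht : 0 < t) :
    ∫⁻ x in Ioc 0 t, ENNReal.ofReal (x ^ c) = ⊤ := by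
  by_contra h
  have hnonneg : 0 ≤ᵐ[volume.restrict (Ioc 0 t)] fun x : ℝ => x ^ c := by
    filter_upwards [ae_restrict_mem measurableSet_Ioc] with x hx using rpow_nonneg hx.1.le c
  have hint : IntegrableOn (fun x : ℝ => x ^ c) (Ioc 0 t) := (lintegral_ofReal_ne_top_iff_integrable
    (measurable_id.pow_const c).aestronglyMeasurable hnonneg).1 h
  have := (intervalIntegral.integrableOn_Ioo_rpow_iff ht).1 (hint.mono_set Ioo_subset_Ioc_self)
  linarith

lemma lintegral_Ioi_rpow {c t : ℝ} (hc : c < -1) (ht : 0 < t) :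
    ∫⁻ x in Ioi t, ENNReal.ofReal (x ^ c) = ENNReal.ofReal (-t ^ (c + 1) / (c + 1)) := by
  rw [← integral_Ioi_rpow_of_lt hc ht,
    ofReal_integral_eq_lintegral_ofReal (integrableOn_Ioi_rpow_of_lt hc ht)]
  filter_upwards [ae_restrict_mem measurableSet_Ioi] with x hx
  exact rpow_nonneg (ht.trans hx).le c

lemma lintegral_Ioi_exp_mul {c : ℝ} (hc : c < 0) (t : ℝ) :
    ∫⁻ x in Ioi t, ENNReal.ofReal (exp (c * x)) = ENNReal.ofReal (-exp (c * t) / c) := by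
  rw [← integral_exp_mul_Ioi hc t,
    ofReal_integral_eq_lintegral_ofReal (integrableOn_exp_mul_Ioi hc t)]
  exact ae_of_all _ fun x => (exp_pos _).le

lemma lintegral_Iic_exp_mul {c : ℝ} (hc : 0 < c) (t : ℝ) :
    ∫⁻ x in Iic t, ENNReal.ofReal (exp (c * x)) = ENNReal.ofReal (exp (c * t) / c) := by
  rw [← integral_exp_mul_Iic hc t,
    ofReal_integral_eq_lintegral_ofReal (integrableOn_exp_mul_Iic hc t)]
  exact ae_of_all _ fun x => (exp_pos _).le

section Comparison

variable {α : Type*} [MeasurableSpace α] {μ : Measure α} {s : Set α} {f g : α → ℝ}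

lemma setLIntegral_ofReal_le_mul {K : ℝ} (hs : MeasurableSet s) (hK : 0 ≤ K)
    (h : ∀ x ∈ s, f x ≤ K * g x) :
    ∫⁻ x in s, ENNReal.ofReal (f x) ∂μ ≤ ENNReal.ofReal K * ∫⁻ x in s, ENNReal.ofReal (g x) ∂μ := by
  rw [← lintegral_const_mul' _ _ ENNReal.ofReal_ne_top]
  refine setLIntegral_mono' hs fun x hx => ?_
  rw [← ENNReal.ofReal_mul hK]
  exact ENNReal.ofReal_le_ofReal (h x hx)

lemma mul_setLIntegral_ofReal_le {k : ℝ} (hs : MeasurableSet s) (hk : 0 ≤ k)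
    (h : ∀ x ∈ s, k * g x ≤ f x) :
    ENNReal.ofReal k * ∫⁻ x in s, ENNReal.ofReal (g x) ∂μ ≤ ∫⁻ x in s, ENNReal.ofReal (f x) ∂μ := by
  rw [← lintegral_const_mul' _ _ ENNReal.ofReal_ne_top]
  refine setLIntegral_mono' hs fun x hx => ?_
  rw [← ENNReal.ofReal_mul hk]
  exact ENNReal.ofReal_le_ofReal (h x hx)

end Comparison

lemma ofReal_mul_le_setLIntegral_Ioc {f : ℝ → ℝ} {m u v : ℝ} (hm : 0 ≤ m)
    (h : ∀ x ∈ Ioc u v, m ≤ f x) :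
    ENNReal.ofReal (m * (v - u)) ≤ ∫⁻ x in Ioc u v, ENNReal.ofReal (f x) := by
  rw [ENNReal.ofReal_mul hm, ← Real.volume_Ioc, ← setLIntegral_const]
  exact setLIntegral_mono' measurableSet_Ioc fun x hx => ENNReal.ofReal_le_ofReal (h x hx)

noncomputable def sinhIntegralIoi (a t : ℝ) : ℝ≥0∞ :=
  ∫⁻ ρ in Ioi t, ENNReal.ofReal (sinh ρ ^ (a - 1))

noncomputable def sinhIntegralIoc (b t : ℝ) : ℝ≥0∞ :=
  ∫⁻ ρ in Ioc 0 t, ENNReal.ofReal (sinh ρ ^ (b - 1))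

section Ioi

variable {a t : ℝ}

lemma sinhIntegralIoi_le_rpow (ha : a < 0) (ht : 0 < t) :
    sinhIntegralIoi a t ≤ ENNReal.ofReal ((-a)⁻¹ * t ^ a) := by
  calc sinhIntegralIoi a t ≤ ∫⁻ ρ in Ioi t, ENNReal.ofReal (ρ ^ (a - 1)) := by
        refine setLIntegral_mono' measurableSet_Ioi fun ρ hρ => ENNReal.ofReal_le_ofReal ?_
        have hρ : 0 < ρ := ht.trans hρ
        exact rpow_le_rpow_of_nonpos hρ (self_le_sinh_iff.2 hρ.le) (by linarith)
    _ = ENNReal.ofReal ((-a)⁻¹ * t ^ a) := by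
        rw [lintegral_Ioi_rpow (by linarith) ht, sub_add_cancel, neg_div, ← div_neg,
          div_eq_inv_mul]

lemma exists_sinhIntegralIoi_le_exp (ha : a < 1) :
    ∃ A ≥ 0, ∀ t ≥ 1, sinhIntegralIoi a t ≤ ENNReal.ofReal (A * exp t ^ (a - 1)) := by
  obtain ⟨K, hK, hsinh⟩ := exists_sinh_rpow_le_exp_mul (a - 1)
  refine ⟨K / (1 - a), div_nonneg hK.le (by linarith), fun t ht => ?_⟩
  calc sinhIntegralIoi a t
      ≤ ENNReal.ofReal K * ∫⁻ ρ in Ioi t, ENNReal.ofReal (exp ((a - 1) * ρ)) :=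
        setLIntegral_ofReal_le_mul measurableSet_Ioi hK.le fun ρ hρ =>
          hsinh ρ (ht.trans (le_of_lt hρ))
    _ = ENNReal.ofReal (K / (1 - a) * exp t ^ (a - 1)) := by
        rw [lintegral_Ioi_exp_mul (by linarith), ← ENNReal.ofReal_mul hK.le, ← exp_mul,
          mul_comm t]
        have h1a : 1 - a ≠ 0 := by linarith
        have ha1 : a - 1 ≠ 0 := by linarith
        congr 1
        field_simp
        ring

lemma rpow_le_sinhIntegralIoi (ha : a ≤ 1) (ht : 0 < t) (ht' : t ≤ 1 / 2) :
    ENNReal.ofReal (6 ^ (a - 1) * t ^ a) ≤ sinhIntegralIoi a t := by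
  have hmass : 6 ^ (a - 1) * t ^ a = (6 * t) ^ (a - 1) * (2 * t - t) := by
    rw [mul_rpow (by norm_num) ht.le, mul_assoc, show 2 * t - t = t ^ (1 : ℝ) by
      rw [rpow_one]; ring, ← rpow_add ht, sub_add_cancel]
  rw [hmass]
  refine (ofReal_mul_le_setLIntegral_Ioc (rpow_nonneg (by positivity) _) fun ρ hρ => ?_).trans
    (lintegral_mono_set Ioc_subset_Ioi_self)
  have hρ0 : 0 < ρ := ht.trans hρ.1
  refine rpow_le_rpow_of_nonpos (sinh_pos_iff.2 hρ0) ?_ (by linarith)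
  linarith [sinh_le_three_mul hρ0.le (by linarith [hρ.2]), hρ.2]

lemma exp_le_sinhIntegralIoi (ha : a ≤ 1) (ht : 0 ≤ t) :
    ENNReal.ofReal ((exp 1 / 2) ^ (a - 1) * exp t ^ (a - 1)) ≤ sinhIntegralIoi a t := by
  have hmass : (exp 1 / 2) ^ (a - 1) * exp t ^ (a - 1)
      = (exp 1 / 2 * exp t) ^ (a - 1) * (t + 1 - t) := by
    rw [mul_rpow (by positivity) (exp_pos t).le]; ring
  rw [hmass]
  refine (ofReal_mul_le_setLIntegral_Ioc (rpow_nonneg (by positivity) _) fun ρ hρ => ?_).trans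
    (lintegral_mono_set Ioc_subset_Ioi_self)
  have hρ0 : 0 < ρ := ht.trans_lt hρ.1
  refine rpow_le_rpow_of_nonpos (sinh_pos_iff.2 hρ0) ?_ (by linarith)
  calc sinh ρ ≤ sinh (t + 1) := sinh_le_sinh.2 hρ.2
    _ ≤ exp (t + 1) / 2 := sinh_le_exp_div_two _
    _ = exp 1 / 2 * exp t := by rw [exp_add]; ring

end Ioi

section Ioc

variable {b t : ℝ}

lemma exists_sinhIntegralIoc_bounds (hb : 0 < b) :
    ∃ k > 0, ∃ K > 0, ∀ t ∈ Ioc (0 : ℝ) 1,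
      ENNReal.ofReal (k * t ^ b) ≤ sinhIntegralIoc b t ∧
        sinhIntegralIoc b t ≤ ENNReal.ofReal (K * t ^ b) := by
  obtain ⟨k, hk, K, hK, hsinh⟩ := exists_sinh_rpow_bounds_Ioc (b - 1)
  refine ⟨k / b, div_pos hk hb, K / b, div_pos hK hb, fun t ht => ?_⟩
  have hpow : ∫⁻ ρ in Ioc 0 t, ENNReal.ofReal (ρ ^ (b - 1)) = ENNReal.ofReal (t ^ b / b) := by
    rw [lintegral_Ioc_zero_rpow (by linarith) ht.1.le, sub_add_cancel]
  have hsub : ∀ ρ ∈ Ioc 0 t, ρ ∈ Ioc (0 : ℝ) 1 := fun ρ hρ => ⟨hρ.1, hρ.2.trans ht.2⟩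
  constructor
  · calc ENNReal.ofReal (k / b * t ^ b)
        = ENNReal.ofReal k * ∫⁻ ρ in Ioc 0 t, ENNReal.ofReal (ρ ^ (b - 1)) := by
          rw [hpow, ← ENNReal.ofReal_mul hk.le, mul_div_assoc']; ring_nf
      _ ≤ sinhIntegralIoc b t := mul_setLIntegral_ofReal_le measurableSet_Ioc hk.le
          fun ρ hρ => (hsinh ρ (hsub ρ hρ)).1
  · calc sinhIntegralIoc b t
        ≤ ENNReal.ofReal K * ∫⁻ ρ in Ioc 0 t, ENNReal.ofReal (ρ ^ (b - 1)) :=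
          setLIntegral_ofReal_le_mul measurableSet_Ioc hK.le fun ρ hρ => (hsinh ρ (hsub ρ hρ)).2
      _ = ENNReal.ofReal (K / b * t ^ b) := by
          rw [hpow, ← ENNReal.ofReal_mul hK.le]; ring_nf

lemma sinhIntegralIoc_one_eq_top (hb : b ≤ 0) : sinhIntegralIoc b 1 = ⊤ := by
  obtain ⟨k, hk, _, -, hsinh⟩ := exists_sinh_rpow_bounds_Ioc (b - 1)
  have := mul_setLIntegral_ofReal_le (μ := volume) measurableSet_Ioc hk.le
    fun ρ hρ => (hsinh ρ hρ).1
  rwa [lintegral_Ioc_zero_rpow_eq_top (by linarith) one_pos,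
    ENNReal.mul_top (ENNReal.ofReal_pos.2 hk).ne', top_le_iff] at this

lemma exists_sinhIntegralIoc_le_exp {γ : ℝ} (hb : 0 < b) (hγ : 0 < γ) (hbγ : b - 1 ≤ γ) :
    ∃ B ≥ 0, ∀ t ≥ 1, sinhIntegralIoc b t ≤ ENNReal.ofReal (B * exp t ^ γ) := by
  obtain ⟨_, -, K₀, hK₀, hsmall⟩ := exists_sinhIntegralIoc_bounds hb
  obtain ⟨K, hK, hsinh⟩ := exists_sinh_rpow_le_exp_mul (b - 1)
  refine ⟨K₀ + K / γ, by positivity, fun t ht => ?_⟩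
  have hone : sinhIntegralIoc b 1 ≤ ENNReal.ofReal K₀ := by
    simpa using (hsmall 1 ⟨one_pos, le_rfl⟩).2
  have htail : ∫⁻ ρ in Ioc 1 t, ENNReal.ofReal (sinh ρ ^ (b - 1))
      ≤ ENNReal.ofReal (K * (exp (γ * t) / γ)) := by
    calc ∫⁻ ρ in Ioc 1 t, ENNReal.ofReal (sinh ρ ^ (b - 1))
        ≤ ENNReal.ofReal K * ∫⁻ ρ in Ioc 1 t, ENNReal.ofReal (exp (γ * ρ)) := by
          refine setLIntegral_ofReal_le_mul measurableSet_Ioc hK.le fun ρ hρ =>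
            (hsinh ρ (mem_Ici.2 hρ.1.le)).trans (mul_le_mul_of_nonneg_left ?_ hK.le)
          exact exp_le_exp.2 (mul_le_mul_of_nonneg_right hbγ (by linarith [hρ.1]))
      _ ≤ ENNReal.ofReal K * ∫⁻ ρ in Iic t, ENNReal.ofReal (exp (γ * ρ)) :=
          mul_le_mul_right (lintegral_mono_set Ioc_subset_Iic_self) _
      _ = ENNReal.ofReal (K * (exp (γ * t) / γ)) := by
          rw [lintegral_Iic_exp_mul hγ, ENNReal.ofReal_mul hK.le]
  have hexp : 1 ≤ exp (γ * t) := one_le_exp (by positivity)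
  calc sinhIntegralIoc b t
      = sinhIntegralIoc b 1 + ∫⁻ ρ in Ioc 1 t, ENNReal.ofReal (sinh ρ ^ (b - 1)) := by
        rw [sinhIntegralIoc, sinhIntegralIoc, ← Ioc_union_Ioc_eq_Ioc zero_le_one ht,
          lintegral_union measurableSet_Ioc (Ioc_disjoint_Ioc_of_le le_rfl)]
    _ ≤ ENNReal.ofReal K₀ + ENNReal.ofReal (K * (exp (γ * t) / γ)) := add_le_add hone htail
    _ = ENNReal.ofReal (K₀ + K * (exp (γ * t) / γ)) :=
        (ENNReal.ofReal_add hK₀.le (by positivity)).symm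
    _ ≤ ENNReal.ofReal ((K₀ + K / γ) * exp t ^ γ) := by
        rw [← exp_mul, mul_comm t]
        refine ENNReal.ofReal_le_ofReal ?_
        rw [add_mul, mul_div_assoc', div_mul_eq_mul_div]
        nlinarith

lemma exp_le_sinhIntegralIoc (hb : 1 ≤ b) (ht : 2 ≤ t) :
    ENNReal.ofReal ((4 * exp 1)⁻¹ ^ (b - 1) * exp t ^ (b - 1)) ≤ sinhIntegralIoc b t := by
  have hmass : (4 * exp 1)⁻¹ ^ (b - 1) * exp t ^ (b - 1)
      = ((4 * exp 1)⁻¹ * exp t) ^ (b - 1) * (t - (t - 1)) := by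
    rw [mul_rpow (by positivity) (exp_pos t).le]; ring
  rw [hmass]
  refine (ofReal_mul_le_setLIntegral_Ioc (rpow_nonneg (by positivity) _) fun ρ hρ => ?_).trans
    (lintegral_mono_set (Ioc_subset_Ioc_left (by linarith)))
  refine rpow_le_rpow (by positivity) ?_ (by linarith)
  calc (4 * exp 1)⁻¹ * exp t = exp (t - 1) / 4 := by rw [exp_sub]; field_simp
    _ ≤ sinh (t - 1) := exp_div_four_le_sinh (by linarith)
    _ ≤ sinh ρ := sinh_le_sinh.2 hρ.1.le

end Ioc

lemma ofReal_mul_rpow_rpow_mul_ofReal_mul_rpow_rpow {A B w a b r s : ℝ} (hA : 0 ≤ A) (hB : 0 ≤ B)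
    (hw : 0 < w) (hr : 0 ≤ r) (hs : 0 ≤ s) :
    ENNReal.ofReal (A * w ^ a) ^ r * ENNReal.ofReal (B * w ^ b) ^ s
      = ENNReal.ofReal (A ^ r * B ^ s * w ^ (a * r + b * s)) := by
  rw [ENNReal.ofReal_rpow_of_nonneg (by positivity) hr,
    ENNReal.ofReal_rpow_of_nonneg (by positivity) hs, ← ENNReal.ofReal_mul (by positivity),
    mul_rpow hA (by positivity), mul_rpow hB (by positivity), ← rpow_mul hw.le,
    ← rpow_mul hw.le, rpow_add hw]
  ring_nf

lemma iSup_eq_top_of_tendsto_atTop {α : Type*} {s : Set α} {Φ : α → ℝ≥0∞} {g : α → ℝ}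
    {l : Filter α} [l.NeBot] (hl : ∀ᶠ t in l, t ∈ s) (hg : Tendsto g l atTop)
    (hΦ : ∀ᶠ t in l, ENNReal.ofReal (g t) ≤ Φ t) : ⨆ t ∈ s, Φ t = ⊤ := by
  by_contra h
  obtain ⟨t, hts, hΦt, hgt⟩ :=
    (hl.and (hΦ.and (hg.eventually_gt_atTop (⨆ t ∈ s, Φ t).toReal))).exists
  exact (((ENNReal.lt_ofReal_iff_toReal_lt h).2 hgt).trans_le
    (hΦt.trans (le_iSup₂ (f := fun t _ => Φ t) t hts))).false

section Supremum

variable {a b r s : ℝ}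

lemma iSup_eq_top_of_nonpos (ha : a ≤ 1) (hr : 0 ≤ r) (hs : 0 < s) (hb : b ≤ 0) :
    ⨆ t ∈ Ioi (0 : ℝ), sinhIntegralIoi a t ^ r * sinhIntegralIoc b t ^ s = ⊤ := by
  have hF : 0 < sinhIntegralIoi a 1 :=
    (ENNReal.ofReal_pos.2 (by positivity)).trans_le (exp_le_sinhIntegralIoi ha zero_le_one)
  refine top_le_iff.1 (le_trans (le_of_eq ?_) (le_iSup₂ (f := fun t _ =>
    sinhIntegralIoi a t ^ r * sinhIntegralIoc b t ^ s) 1 (mem_Ioi.2 one_pos)))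
  rw [sinhIntegralIoc_one_eq_top hb, ENNReal.top_rpow_of_pos hs,
    ENNReal.mul_top (ENNReal.rpow_pos_of_nonneg hF hr).ne']

lemma iSup_eq_top_of_lt_zero (ha : a ≤ 1) (hb : 0 < b) (hr : 0 ≤ r) (hs : 0 ≤ s)
    (h : a * r + b * s < 0) :
    ⨆ t ∈ Ioi (0 : ℝ), sinhIntegralIoi a t ^ r * sinhIntegralIoc b t ^ s = ⊤ := by
  obtain ⟨k, hk, _, -, hG⟩ := exists_sinhIntegralIoc_bounds hb
  have hC : 0 < ((6 : ℝ) ^ (a - 1)) ^ r * k ^ s := by positivity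
  refine iSup_eq_top_of_tendsto_atTop (l := 𝓝[>] 0) self_mem_nhdsWithin
    ((tendsto_rpow_neg_nhdsGT_zero h).const_mul_atTop hC) ?_
  filter_upwards [Ioo_mem_nhdsGT (by norm_num : (0 : ℝ) < 1 / 2)] with t ht
  rw [← ofReal_mul_rpow_rpow_mul_ofReal_mul_rpow_rpow (by positivity) hk.le ht.1 hr hs]
  exact mul_le_mul' (ENNReal.rpow_le_rpow (rpow_le_sinhIntegralIoi ha ht.1 ht.2.le) hr)
    (ENNReal.rpow_le_rpow (hG t ⟨ht.1, by linarith [ht.2]⟩).1 hs)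

lemma iSup_eq_top_of_pos (ha : a ≤ 1) (hr : 0 ≤ r) (hs : 0 ≤ s)
    (h : 0 < (a - 1) * r + (b - 1) * s) :
    ⨆ t ∈ Ioi (0 : ℝ), sinhIntegralIoi a t ^ r * sinhIntegralIoc b t ^ s = ⊤ := by
  have hb : 1 ≤ b := by nlinarith
  have hC : 0 < ((exp 1 / 2) ^ (a - 1)) ^ r * ((4 * exp 1)⁻¹ ^ (b - 1)) ^ s := by positivity
  refine iSup_eq_top_of_tendsto_atTop (eventually_gt_atTop 0)
    (((tendsto_rpow_atTop h).comp tendsto_exp_atTop).const_mul_atTop hC) ?_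
  filter_upwards [eventually_ge_atTop 2] with t ht
  rw [Function.comp_apply, ← ofReal_mul_rpow_rpow_mul_ofReal_mul_rpow_rpow (by positivity)
    (by positivity) (exp_pos t) hr hs]
  exact mul_le_mul' (ENNReal.rpow_le_rpow (exp_le_sinhIntegralIoi ha (by linarith)) hr)
    (ENNReal.rpow_le_rpow (exp_le_sinhIntegralIoc hb ht) hs)

lemma iSup_lt_top (ha : a < 0) (hb : 0 < b) (hr : 0 < r) (hs : 0 < s)
    (h₀ : 0 ≤ a * r + b * s) (h₁ : (a - 1) * r + (b - 1) * s ≤ 0) :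
    ⨆ t ∈ Ioi (0 : ℝ), sinhIntegralIoi a t ^ r * sinhIntegralIoc b t ^ s < ⊤ := by
  obtain ⟨_, -, K, hK, hG_small⟩ := exists_sinhIntegralIoc_bounds hb
  obtain ⟨A, hA, hF_large⟩ := exists_sinhIntegralIoi_le_exp (by linarith : a < 1)
  -- `γ = b - 1` is too small when `b ≤ 1`, but then `sinhIntegralIoc b t` grows only linearly
  obtain ⟨γ, hγ, hbγ, hγ'⟩ : ∃ γ, 0 < γ ∧ b - 1 ≤ γ ∧ (a - 1) * r + γ * s ≤ 0 := by
    have hpos : 0 < (1 - a) * r / s := div_pos (mul_pos (by linarith) hr) hs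
    rcases le_total (b - 1) ((1 - a) * r / s) with hle | hle
    · exact ⟨_, hpos, hle, by rw [div_mul_cancel₀ _ hs.ne']; linarith⟩
    · exact ⟨b - 1, hpos.trans_le hle, le_rfl, h₁⟩
  obtain ⟨B, hB, hG_large⟩ := exists_sinhIntegralIoc_le_exp hb hγ hbγ
  refine lt_of_le_of_lt (iSup₂_le fun t ht => ?_) (max_lt ENNReal.ofReal_lt_top
    ENNReal.ofReal_lt_top : max (ENNReal.ofReal ((-a)⁻¹ ^ r * K ^ s))
      (ENNReal.ofReal (A ^ r * B ^ s)) < ⊤)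
  have ht : 0 < t := ht
  have ha' : 0 ≤ (-a)⁻¹ := inv_nonneg.2 (by linarith)
  rcases le_total t 1 with ht₁ | ht₁
  · refine le_max_of_le_left ((mul_le_mul' (ENNReal.rpow_le_rpow (sinhIntegralIoi_le_rpow ha ht)
      hr.le) (ENNReal.rpow_le_rpow (hG_small t ⟨ht, ht₁⟩).2 hs.le)).trans ?_)
    rw [ofReal_mul_rpow_rpow_mul_ofReal_mul_rpow_rpow ha' hK.le ht hr.le hs.le]
    exact ENNReal.ofReal_le_ofReal
      (mul_le_of_le_one_right (by positivity) (rpow_le_one ht.le ht₁ h₀))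
  · refine le_max_of_le_right ((mul_le_mul' (ENNReal.rpow_le_rpow (hF_large t ht₁) hr.le)
      (ENNReal.rpow_le_rpow (hG_large t ht₁) hs.le)).trans ?_)
    rw [ofReal_mul_rpow_rpow_mul_ofReal_mul_rpow_rpow hA hB (exp_pos t) hr.le hs.le]
    exact ENNReal.ofReal_le_ofReal (mul_le_of_le_one_right (by positivity)
      (rpow_le_one_of_one_le_of_nonpos (one_le_exp (by linarith)) hγ'))

theorem iSup_lt_top_iff (ha : a < 0) (hr : 0 < r) (hs : 0 < s) :
    ⨆ t ∈ Ioi (0 : ℝ), sinhIntegralIoi a t ^ r * sinhIntegralIoc b t ^ s < ⊤ ↔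
      0 < b ∧ 0 ≤ a * r + b * s ∧ (a - 1) * r + (b - 1) * s ≤ 0 := by
  refine ⟨fun h => ?_, fun ⟨hb, h₀, h₁⟩ => iSup_lt_top ha hb hr hs h₀ h₁⟩
  have hb : 0 < b := by
    by_contra! hb
    exact h.ne (iSup_eq_top_of_nonpos (by linarith) hr.le hs hb)
  refine ⟨hb, ?_, ?_⟩
  · by_contra! h₀
    exact h.ne (iSup_eq_top_of_lt_zero (by linarith) hb hr.le hs.le h₀)
  · by_contra! h₁
    exact h.ne (iSup_eq_top_of_pos (by linarith) hr.le hs.le h₁)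

end Supremum

end SinhWeight

theorem muckenhoupt_hyperbolic_caseB_general (n : ℕ) (p q p' α β : ℝ)
    (hp : 1 < p) (hpq : p ≤ q) (hp' : p' = p / (p - 1))
    (hα : α + n < 0) :
    (⨆ t ∈ Ioi (0:ℝ),
        (∫⁻ ρ in Ioi t, ENNReal.ofReal (Real.sinh ρ ^ (α + n - 1))) ^ (1/q) *
        (∫⁻ ρ in Ioc 0 t, ENNReal.ofReal (Real.sinh ρ ^ (β * (1 - p') + n - 1))) ^ (1/p')) < ⊤
      ↔ (0 < β * (1 - p') + n ∧
          0 ≤ (α + n) / q + (β * (1 - p') + n) / p' ∧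
          (α + n) / q + (β * (1 - p') + n) / p' ≤ 1/q + 1/p') := by
  have hq : 0 < 1 / q := one_div_pos.2 (by linarith)
  have hp'pos : 0 < 1 / p' := one_div_pos.2 (by rw [hp']; exact div_pos (by linarith) (by linarith))
  have key := SinhWeight.iSup_lt_top_iff (b := β * (1 - p') + n) hα hq hp'pos
  rw [show (α + n) * (1 / q) + (β * (1 - p') + n) * (1 / p')
      = (α + n) / q + (β * (1 - p') + n) / p' by ring,
    show (α + n - 1) * (1 / q) + (β * (1 - p') + n - 1) * (1 / p')
      = (α + n) / q + (β * (1 - p') + n) / p' - (1 / q + 1 / p') by ring, sub_nonpos] at key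
  exact key

theorem muckenhoupt_hyperbolic_caseB (n : ℕ) (hn : 2 ≤ n) (p q p' α β : ℝ)
    (hp : 1 < p) (hpq : p ≤ q) (hp' : p' = p / (p - 1))
    (hα : α + n < 0) :
    (⨆ t ∈ Ioi (0:ℝ),
        (∫⁻ ρ in Ioi t, ENNReal.ofReal (Real.sinh ρ ^ (α + n - 1))) ^ (1/q) *
        (∫⁻ ρ in Ioc 0 t, ENNReal.ofReal (Real.sinh ρ ^ (β * (1 - p') + n - 1))) ^ (1/p')) < ⊤
      ↔ (0 < β * (1 - p') + n ∧
          0 ≤ (α + n) / q + (β * (1 - p') + n) / p' ∧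
          (α + n) / q + (β * (1 - p') + n) / p' ≤ 1/q + 1/p') :=
  muckenhoupt_hyperbolic_caseB_general n p q p' α β hp hpq hp' hα
end

section
/- Let $1<p\le q<\infty$, $s>0$, $p'=p/(p-1)$, and let $u,v:(0,\infty)\to(0,\infty)$ be measurable with $U(x)=\int_x^\infty u<\infty$ and $V(x)=\int_0^x v^{1-p'}<\infty$ positive for all $x>0$. Then $\sup_{x>0} U(x)^{1/q}V(x)^{1/p'}<\infty$ if and only if $\sup_{x>0}\left(\int_x^\infty u(y)V(y)^{q(1/p'-s)}dy\right)^{1/q}V(x)^s<\infty$. -/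
open MeasureTheory Set Filter Topology
open scoped ENNReal

/-!
Both suprema are finite exactly when a tail integral decays like a power of
`V x = ∫_0^x v^(1-p')`: condition `D₁` says `∫_x^∞ u = O(V x ^ (-q/p'))`, condition `D₂` says
`∫_x^∞ u V^γ = O(V x ^ (-q s))` with `γ = q (1/p' - s)`. Multiplying a density whose tails are
`O(V^(-ρ))` by `V^β`, `β < ρ`, gives tails `O(V^(β-ρ))`: for `β ≤ 0` because `V` increases, for
`β > 0` by the layer-cake formula `∫ g V^β = β ∫ t^(β-1) (∫_{V ≥ t} g) dt`. Apply this with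
`β = γ` and with `β = -γ`.
-/

lemma rpow_one_div_mul_ofReal_rpow_le_ofReal_iff {F : ℝ≥0∞} {w M q a : ℝ} (hw : 0 < w)
    (hM : 0 ≤ M) (hq : 0 < q) :
    F ^ (1 / q) * ENNReal.ofReal (w ^ a) ≤ ENNReal.ofReal M ↔
      F ≤ ENNReal.ofReal (M ^ q * w ^ (-(q * a))) := by
  have hwa : 0 < w ^ a := Real.rpow_pos_of_pos hw a
  rw [← ENNReal.le_div_iff_mul_le (Or.inl (ENNReal.ofReal_pos.mpr hwa).ne')
    (Or.inl ENNReal.ofReal_ne_top), ← ENNReal.ofReal_div_of_pos hwa, one_div,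
    ENNReal.rpow_inv_le_iff hq, ENNReal.ofReal_rpow_of_nonneg (by positivity) hq.le,
    Real.div_rpow hM hwa.le, ← Real.rpow_mul hw.le, div_eq_mul_inv, ← Real.rpow_neg hw.le,
    mul_comm a q]

def TailBound (g : ℝ → ℝ≥0∞) (V : ℝ → ℝ) (ρ : ℝ) : Prop :=
  ∃ C : ℝ, 0 ≤ C ∧ ∀ x > 0, ∫⁻ y in Ioi x, g y ≤ ENNReal.ofReal (C * V x ^ (-ρ))

lemma iSup_lt_top_iff_tailBound {g : ℝ → ℝ≥0∞} {V : ℝ → ℝ} (hV : ∀ x > 0, 0 < V x)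
    {q a : ℝ} (hq : 0 < q) :
    (⨆ x ∈ Ioi (0:ℝ), (∫⁻ y in Ioi x, g y) ^ (1 / q) * ENNReal.ofReal (V x ^ a)) < ⊤ ↔
      TailBound g V (q * a) := by
  constructor
  · intro hfin
    set M := (⨆ x ∈ Ioi (0:ℝ), (∫⁻ y in Ioi x, g y) ^ (1 / q) * ENNReal.ofReal (V x ^ a)).toReal
    refine ⟨M ^ q, by positivity, fun x hx => ?_⟩
    rw [← rpow_one_div_mul_ofReal_rpow_le_ofReal_iff (hV x hx) ENNReal.toReal_nonneg hq,
      ENNReal.ofReal_toReal hfin.ne]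
    exact le_iSup₂ (f := fun x (_ : x ∈ Ioi (0:ℝ)) =>
      (∫⁻ y in Ioi x, g y) ^ (1 / q) * ENNReal.ofReal (V x ^ a)) x hx
  · rintro ⟨C, hC, hbound⟩
    refine lt_of_le_of_lt (iSup₂_le fun x hx => ?_) (ENNReal.ofReal_lt_top (r := C ^ (1 / q)))
    rw [rpow_one_div_mul_ofReal_rpow_le_ofReal_iff (hV x hx) (by positivity) hq,
      ← Real.rpow_mul hC, one_div_mul_cancel hq.ne', Real.rpow_one]
    exact hbound x hx

lemma TailBound.congr {g g' : ℝ → ℝ≥0∞} {V : ℝ → ℝ} {ρ : ℝ} (h : TailBound g V ρ)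
    (hgg' : EqOn g g' (Ioi 0)) : TailBound g' V ρ := by
  obtain ⟨C, hC, hbound⟩ := h
  refine ⟨C, hC, fun x hx => ?_⟩
  rw [← setLIntegral_congr_fun measurableSet_Ioi fun y hy => hgg' (hx.trans hy)]
  exact hbound x hx

lemma setLIntegral_le_of_tail_le {V : ℝ → ℝ} (hVc : ContinuousOn V (Ioi 0))
    {g : ℝ → ℝ≥0∞} {C r : ℝ} (hC : 0 ≤ C) (hr : 0 ≤ r)
    (H : ∀ w > 0, ∫⁻ y in Ioi w, g y ≤ ENNReal.ofReal (C * V w ^ (-r)))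
    {x t : ℝ} (hx : 0 < x) (ht : 0 < t) {S : Set ℝ} (hSx : S ⊆ Ioi x)
    (hSt : ∀ y ∈ S, t ≤ V y) :
    ∫⁻ y in S, g y ≤ ENNReal.ofReal (C * t ^ (-r)) := by
  rcases S.eq_empty_or_nonempty with rfl | hne
  · simp
  have hbdd : BddBelow S := ⟨x, fun y hy => (hSx hy).le⟩
  have ha : 0 < sInf S := hx.trans_le (le_csInf hne fun y hy => (hSx hy).le)
  -- `sInf S` need not lie in `S`, but continuity of `V` there carries the bound `t ≤ V`.
  have hVa : t ≤ V (sInf S) := by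
    have := mem_closure_iff_nhdsWithin_neBot.mp (csInf_mem_closure hne hbdd)
    exact ge_of_tendsto ((hVc.continuousAt (Ioi_mem_nhds ha)).continuousWithinAt)
      (eventually_nhdsWithin_of_forall hSt)
  calc ∫⁻ y in S, g y ≤ ∫⁻ y in Ici (sInf S), g y :=
        lintegral_mono_set fun y hy => csInf_le hbdd hy
    _ = ∫⁻ y in Ioi (sInf S), g y := by rw [Measure.restrict_congr_set Ioi_ae_eq_Ici.symm]
    _ ≤ ENNReal.ofReal (C * V (sInf S) ^ (-r)) := H _ ha
    _ ≤ ENNReal.ofReal (C * t ^ (-r)) :=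
        ENNReal.ofReal_le_ofReal <| mul_le_mul_of_nonneg_left
          (Real.rpow_le_rpow_of_nonpos ht hVa (neg_nonpos.mpr hr)) hC

lemma lintegral_Ioi_max_rpow_mul_rpow {a β ρ : ℝ} (ha : 0 < a) (hβ : 0 < β) (hβρ : β < ρ) :
    ∫⁻ t in Ioi 0, ENNReal.ofReal (max t a ^ (-ρ) * t ^ (β - 1)) =
      ENNReal.ofReal (ρ / (β * (ρ - β)) * a ^ (β - ρ)) := by
  have hlow : ∫⁻ t in Ioc 0 a, ENNReal.ofReal (max t a ^ (-ρ) * t ^ (β - 1)) =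
      ENNReal.ofReal (a ^ (-ρ) * (a ^ β / β)) := by
    have hint : ∫ t in Ioc 0 a, t ^ (β - 1) = a ^ β / β := by
      rw [← intervalIntegral.integral_of_le ha.le, integral_rpow (Or.inl (by linarith)),
        sub_add_cancel, Real.zero_rpow hβ.ne', sub_zero]
    rw [← hint, ← integral_const_mul, ofReal_integral_eq_lintegral_ofReal]
    · refine setLIntegral_congr_fun measurableSet_Ioc fun t ht => ?_
      rw [max_eq_right ht.2]
    · refine Integrable.const_mul ?_ _
      exact (intervalIntegrable_iff_integrableOn_Ioc_of_le ha.le).mp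
        (intervalIntegral.intervalIntegrable_rpow' (by linarith))
    · refine (ae_restrict_iff' measurableSet_Ioc).mpr (ae_of_all _ fun t ht => ?_)
      have := ht.1
      positivity
  have hhigh : ∫⁻ t in Ioi a, ENNReal.ofReal (max t a ^ (-ρ) * t ^ (β - 1)) =
      ENNReal.ofReal (a ^ (β - ρ) / (ρ - β)) := by
    have hint : ∫ t in Ioi a, t ^ (β - 1 - ρ) = a ^ (β - ρ) / (ρ - β) := by
      rw [integral_Ioi_rpow_of_lt (by linarith) ha, neg_div, ← div_neg]
      ring_nf
    rw [← hint, ofReal_integral_eq_lintegral_ofReal (integrableOn_Ioi_rpow_of_lt (by linarith) ha)]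
    · refine setLIntegral_congr_fun measurableSet_Ioi fun t ht => ?_
      have ht0 : 0 < t := ha.trans ht
      rw [max_eq_left (le_of_lt ht), ← Real.rpow_add ht0]
      ring_nf
    · refine (ae_restrict_iff' measurableSet_Ioi).mpr (ae_of_all _ fun t ht => ?_)
      have : 0 < t := ha.trans ht
      positivity
  rw [← Ioc_union_Ioi_eq_Ioi ha.le, lintegral_union measurableSet_Ioi Ioc_disjoint_Ioi_same,
    hlow, hhigh, ← ENNReal.ofReal_add (by positivity) (div_nonneg (by positivity) (by linarith))]
  congr 1
  have hρβ : ρ - β ≠ 0 := by linarith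
  rw [mul_div_assoc', ← Real.rpow_add ha, neg_add_eq_sub]
  field_simp
  ring

lemma lintegral_Ioi_mul_rpow_le {V : ℝ → ℝ} (hVm : Monotone V) (hVc : ContinuousOn V (Ioi 0))
    (hVpos : ∀ x > 0, 0 < V x) {g : ℝ → ℝ≥0∞} (hg : Measurable g) {C β ρ : ℝ} (hC : 0 ≤ C)
    (hβ : 0 < β) (hβρ : β < ρ)
    (H : ∀ w > 0, ∫⁻ y in Ioi w, g y ≤ ENNReal.ofReal (C * V w ^ (-ρ))) {x : ℝ} (hx : 0 < x) :
    ∫⁻ y in Ioi x, g y * ENNReal.ofReal (V y ^ β) ≤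
      ENNReal.ofReal (ρ / (ρ - β) * C * V x ^ (β - ρ)) := by
  set μ := (volume.restrict (Ioi x)).withDensity g
  have hVx := hVpos x hx
  have hVmeas : Measurable V := hVm.measurable
  have hlevel : ∀ t > 0, μ {y | t ≤ V y} ≤ ENNReal.ofReal (C * max t (V x) ^ (-ρ)) := by
    intro t ht
    have hms : MeasurableSet {y | t ≤ V y} := measurableSet_le measurable_const hVmeas
    rw [withDensity_apply _ hms, Measure.restrict_restrict hms]
    exact setLIntegral_le_of_tail_le hVc hC (by linarith) H hx (lt_max_of_lt_left ht)
      inter_subset_right fun y hy => max_le hy.1 (hVm (le_of_lt hy.2))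
  calc ∫⁻ y in Ioi x, g y * ENNReal.ofReal (V y ^ β)
      = ENNReal.ofReal β * ∫⁻ t in Ioi 0, μ {y | t ≤ V y} * ENNReal.ofReal (t ^ (β - 1)) := by
        rw [← lintegral_rpow_eq_lintegral_meas_le_mul μ ?_ hVmeas.aemeasurable hβ,
          lintegral_withDensity_eq_lintegral_mul _ hg (by fun_prop)]
        · rfl
        · exact (withDensity_absolutelyContinuous _ _).ae_le
            ((ae_restrict_iff' measurableSet_Ioi).mpr
              (ae_of_all _ fun y hy => (hVpos y (hx.trans hy)).le))
    _ ≤ ENNReal.ofReal β * ∫⁻ t in Ioi 0,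
          ENNReal.ofReal C * ENNReal.ofReal (max t (V x) ^ (-ρ) * t ^ (β - 1)) := by
        gcongr ENNReal.ofReal β * ?_
        refine setLIntegral_mono' measurableSet_Ioi fun t ht => ?_
        rw [← ENNReal.ofReal_mul hC, ← mul_assoc,
          ENNReal.ofReal_mul (mul_nonneg hC (by positivity))]
        gcongr
        exact hlevel t ht
    _ = ENNReal.ofReal β * (ENNReal.ofReal C *
          ENNReal.ofReal (ρ / (β * (ρ - β)) * V x ^ (β - ρ))) := by
        rw [lintegral_const_mul' _ _ ENNReal.ofReal_ne_top,
          lintegral_Ioi_max_rpow_mul_rpow hVx hβ hβρ]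
    _ = ENNReal.ofReal (ρ / (ρ - β) * C * V x ^ (β - ρ)) := by
        rw [← ENNReal.ofReal_mul hC, ← ENNReal.ofReal_mul hβ.le]
        congr 1
        field_simp

lemma lintegral_Ioi_mul_rpow_le_of_nonpos {V : ℝ → ℝ} (hVm : Monotone V)
    (hVpos : ∀ x > 0, 0 < V x) {g : ℝ → ℝ≥0∞} (hg : Measurable g) {C β ρ : ℝ} (hβ : β ≤ 0)
    (H : ∀ w > 0, ∫⁻ y in Ioi w, g y ≤ ENNReal.ofReal (C * V w ^ (-ρ))) {x : ℝ} (hx : 0 < x) :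
    ∫⁻ y in Ioi x, g y * ENNReal.ofReal (V y ^ β) ≤ ENNReal.ofReal (C * V x ^ (β - ρ)) := by
  have hVx := hVpos x hx
  calc ∫⁻ y in Ioi x, g y * ENNReal.ofReal (V y ^ β)
      ≤ ∫⁻ y in Ioi x, g y * ENNReal.ofReal (V x ^ β) :=
        setLIntegral_mono' measurableSet_Ioi fun y hy => mul_le_mul_right
          (ENNReal.ofReal_le_ofReal (Real.rpow_le_rpow_of_nonpos hVx (hVm (le_of_lt hy)) hβ)) _
    _ = (∫⁻ y in Ioi x, g y) * ENNReal.ofReal (V x ^ β) := lintegral_mul_const _ hg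
    _ ≤ ENNReal.ofReal (C * V x ^ (-ρ)) * ENNReal.ofReal (V x ^ β) := by gcongr; exact H x hx
    _ = ENNReal.ofReal (C * V x ^ (β - ρ)) := by
        rw [← ENNReal.ofReal_mul' (by positivity), mul_assoc, ← Real.rpow_add hVx,
          neg_add_eq_sub]

theorem TailBound.mul_rpow {V : ℝ → ℝ} (hVm : Monotone V) (hVc : ContinuousOn V (Ioi 0))
    (hVpos : ∀ x > 0, 0 < V x) {g : ℝ → ℝ≥0∞} (hg : Measurable g) {β ρ : ℝ}
    (h : TailBound g V ρ) (hβρ : β < ρ) :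
    TailBound (fun y => g y * ENNReal.ofReal (V y ^ β)) V (ρ - β) := by
  obtain ⟨C, hC, H⟩ := h
  simp only [TailBound, neg_sub]
  rcases le_or_gt β 0 with hβ | hβ
  · exact ⟨C, hC, fun x hx => lintegral_Ioi_mul_rpow_le_of_nonpos hVm hVpos hg hβ H hx⟩
  · exact ⟨ρ / (ρ - β) * C, mul_nonneg (div_nonneg (by linarith) (by linarith)) hC,
      fun x hx => lintegral_Ioi_mul_rpow_le hVm hVc hVpos hg hC hβ hβρ H hx⟩

lemma monotone_integral_Ioc_zero {f : ℝ → ℝ} (hf : ∀ x > 0, 0 ≤ f x)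
    (hint : ∀ x > 0, IntegrableOn f (Ioc 0 x)) : Monotone fun x => ∫ y in Ioc 0 x, f y := by
  intro a b hab
  rcases le_or_gt b 0 with hb | hb
  · simp only [Ioc_eq_empty_of_le (hab.trans hb), Ioc_eq_empty_of_le hb, le_refl]
  · exact setIntegral_mono_set (hint b hb)
      ((ae_restrict_iff' measurableSet_Ioc).mpr (ae_of_all _ fun y hy => hf y hy.1))
      (Ioc_subset_Ioc_right hab).eventuallyLE

lemma continuousOn_integral_Ioc_zero {f : ℝ → ℝ} (hint : ∀ x > 0, IntegrableOn f (Ioc 0 x)) :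
    ContinuousOn (fun x => ∫ y in Ioc 0 x, f y) (Ioi 0) := by
  intro a ha
  have hprim := intervalIntegral.continuousOn_primitive (μ := volume) (a := 0) (b := a + 1)
    ((integrableOn_Icc_iff_integrableOn_Ioc).mpr (hint (a + 1) (by linarith [mem_Ioi.mp ha])))
  exact (hprim.continuousAt (Icc_mem_nhds (mem_Ioi.mp ha) (by linarith))).continuousWithinAt

theorem D1_iff_D2_general (p q p' s : ℝ) (hp : 1 < p) (hpq : p ≤ q) (hs : 0 < s)
    (hp' : p' = p / (p - 1))
    (u v : ℝ → ℝ) (hu : Measurable u)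
    (hupos : ∀ x ∈ Ioi (0:ℝ), 0 < u x) (hvpos : ∀ x ∈ Ioi (0:ℝ), 0 < v x)
    (huint : ∀ x > (0:ℝ), IntegrableOn u (Ioi x))
    (hvint : ∀ x > (0:ℝ), IntegrableOn (fun y => v y ^ (1 - p')) (Ioc 0 x))
    (hVpos : ∀ x > (0:ℝ), 0 < ∫ y in Ioc 0 x, v y ^ (1 - p')) :
    (⨆ x ∈ Ioi (0:ℝ),
        ENNReal.ofReal ((∫ y in Ioi x, u y) ^ (1/q) *
          (∫ y in Ioc 0 x, v y ^ (1 - p')) ^ (1/p'))) < ⊤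
    ↔ (⨆ x ∈ Ioi (0:ℝ),
        (∫⁻ y in Ioi x,
            ENNReal.ofReal (u y * (∫ t in Ioc 0 y, v t ^ (1 - p')) ^ (q * (1/p' - s)))) ^ (1/q) *
          ENNReal.ofReal ((∫ y in Ioc 0 x, v y ^ (1 - p')) ^ s)) < ⊤ := by
  set V : ℝ → ℝ := fun x => ∫ y in Ioc 0 x, v y ^ (1 - p')
  have hV : ∀ x, ∫ y in Ioc 0 x, v y ^ (1 - p') = V x := fun _ => rfl
  simp only [hV]
  set γ := q * (1/p' - s) with hγ
  have hq : 0 < q := by linarith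
  have hp'pos : 0 < 1/p' := by rw [hp']; field_simp; linarith
  have hVm : Monotone V :=
    monotone_integral_Ioc_zero (fun x hx => (Real.rpow_pos_of_pos (hvpos x hx) _).le) hvint
  have hVc : ContinuousOn V (Ioi 0) := continuousOn_integral_Ioc_zero hvint
  have hVmeas : Measurable V := hVm.measurable
  have hD1 : (⨆ x ∈ Ioi (0:ℝ), ENNReal.ofReal ((∫ y in Ioi x, u y) ^ (1/q) * V x ^ (1/p'))) =
      ⨆ x ∈ Ioi (0:ℝ), (∫⁻ y in Ioi x, ENNReal.ofReal (u y)) ^ (1/q) *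
        ENNReal.ofReal (V x ^ (1/p')) := by
    refine iSup_congr fun x => iSup_congr fun hx => ?_
    have hu_nonneg : ∀ y ∈ Ioi x, 0 ≤ u y := fun y hy => (hupos y (mem_Ioi.mp hx |>.trans hy)).le
    have hUnn : 0 ≤ ∫ y in Ioi x, u y := setIntegral_nonneg measurableSet_Ioi hu_nonneg
    rw [ENNReal.ofReal_mul (by positivity), ← ENNReal.ofReal_rpow_of_nonneg hUnn (by positivity),
      ofReal_integral_eq_lintegral_ofReal (huint x hx)
        ((ae_restrict_iff' measurableSet_Ioi).mpr (ae_of_all _ hu_nonneg))]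
  rw [hD1, iSup_lt_top_iff_tailBound hVpos hq, iSup_lt_top_iff_tailBound hVpos hq]
  constructor
  · intro h
    rw [show q * s = q * (1/p') - γ by rw [hγ]; ring]
    exact (h.mul_rpow hVm hVc hVpos (by fun_prop) (β := γ) (by nlinarith)).congr
      fun y hy => (ENNReal.ofReal_mul (hupos y hy).le).symm
  · intro h
    rw [show q * (1/p') = q * s - -γ by rw [hγ]; ring]
    refine (h.mul_rpow hVm hVc hVpos (by fun_prop) (β := -γ) (by nlinarith)).congr
      fun y hy => ?_
    have hVy : 0 < V y := hVpos y hy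
    dsimp only
    rw [← ENNReal.ofReal_mul (mul_nonneg (hupos y hy).le (by positivity)), mul_assoc,
      ← Real.rpow_add hVy, add_neg_cancel, Real.rpow_zero, mul_one]

theorem D1_iff_D2 (p q p' s : ℝ) (hp : 1 < p) (hpq : p ≤ q) (hs : 0 < s)
    (hp' : p' = p / (p - 1))
    (u v : ℝ → ℝ) (hu : Measurable u) (hv : Measurable v)
    (hupos : ∀ x ∈ Ioi (0:ℝ), 0 < u x) (hvpos : ∀ x ∈ Ioi (0:ℝ), 0 < v x)
    (huint : ∀ x > (0:ℝ), IntegrableOn u (Ioi x))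
    (hvint : ∀ x > (0:ℝ), IntegrableOn (fun y => v y ^ (1 - p')) (Ioc 0 x))
    (hUpos : ∀ x > (0:ℝ), 0 < ∫ y in Ioi x, u y)
    (hVpos : ∀ x > (0:ℝ), 0 < ∫ y in Ioc 0 x, v y ^ (1 - p')) :
    (⨆ x ∈ Ioi (0:ℝ),
        ENNReal.ofReal ((∫ y in Ioi x, u y) ^ (1/q) *
          (∫ y in Ioc 0 x, v y ^ (1 - p')) ^ (1/p'))) < ⊤
    ↔ (⨆ x ∈ Ioi (0:ℝ),
        (∫⁻ y in Ioi x,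
            ENNReal.ofReal (u y * (∫ t in Ioc 0 y, v t ^ (1 - p')) ^ (q * (1/p' - s)))) ^ (1/q) *
          ENNReal.ofReal ((∫ y in Ioc 0 x, v y ^ (1 - p')) ^ s)) < ⊤ :=
  D1_iff_D2_general p q p' s hp hpq hs hp' u v hu hupos hvpos huint hvint hVpos
end
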